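/- arXiv:1909.04710 — 8 statements merged into one kernel-verified Lean document; each statement's English description precedes it below -/
import Mathlib

section
/- Let Ĝ act strongly on a C*-algebra A and let D be a maximal abelian subalgebra of the fixed-point algebra A₀ = A^Ĝ. If n ∈ A is a normalizer of D (i.e., nDn* ⊆ D and n*Dn ⊆ D), then for every t ∈ Γ, Φ_t(n) is also a normalizer of D. -/
open MeasureTheory Filter Topology
open scoped Classical

/-!
`Φ_t(n)` is homogeneous of degree `t`, so `Φ_t(n) d Φ_t(n)⋆` is fixed by `Ĝ`, and by maximality of
`D` it only remains to show that it commutes with `D`. For `e ∈ D` the normalizer `n` satisfies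
`e n = lim_{ε → 0⁺} n (n⋆n + ε)⁻¹ n⋆ e n`, because `‖ε n (n⋆n + ε)⁻¹‖ ≤ √ε`, and the coefficients
`(n⋆n + ε)⁻¹ n⋆ e n` lie in `D` (maximality again puts the resolvent in `D`). Since `Φ_t` is a
contraction and a `D`-bimodule map, the same limit formula holds with `Φ_t(n)` in place of `n`,
and the commutation follows by computing `e Φ_t(n) d Φ_t(n)⋆` and `Φ_t(n) d Φ_t(n)⋆ e` as limits
of the same net.
-/

section Resolvent

variable {A : Type*} [CStarAlgebra A]

lemma isUnit_star_mul_self_add_algebraMap (x : A) {ε : ℝ} (hε : 0 < ε) :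
    IsUnit (star x * x + algebraMap ℝ A ε) :=
  let _ := CStarAlgebra.spectralOrder A
  have _ := CStarAlgebra.spectralOrderedRing A
  ((isStrictlyPositive_algebraMap hε).nonneg_add (star_mul_self_nonneg x)).isUnit

lemma isSelfAdjoint_ringInverse_star_mul_self_add (x : A) (ε : ℝ) :
    IsSelfAdjoint (Ring.inverse (star x * x + algebraMap ℝ A ε)) :=
  ((IsSelfAdjoint.star_mul_self x).add (.algebraMap A (.all ε))).ringInverse

lemma norm_smul_mul_ringInverse_le (x : A) {ε : ℝ} (hε : 0 < ε) :
    ‖ε • (x * Ring.inverse (star x * x + algebraMap ℝ A ε))‖ ≤ √ε := by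
  let _ := CStarAlgebra.spectralOrder A
  have _ := CStarAlgebra.spectralOrderedRing A
  set b := star x * x
  set u := b + algebraMap ℝ A ε
  set r := Ring.inverse u
  have hu : IsUnit u := isUnit_star_mul_self_add_algebraMap x hε
  have hb : IsSelfAdjoint b := .star_mul_self x
  have hr : star r = r := (isSelfAdjoint_ringInverse_star_mul_self_add x ε).star_eq
  -- conjugating `ε² b ≤ ε u²` by `r = u⁻¹` gives `‖ε x r‖² = ‖ε² r b r‖ ≤ ε`
  have hbu : ε ^ 2 • b ≤ ε • (u * u) := by
    have hsq : 0 ≤ b * b := by simpa [hb.star_eq] using star_mul_self_nonneg b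
    have hexp : ε • (u * u) - ε ^ 2 • b = ε • (b * b) + ε ^ 2 • b + algebraMap ℝ A (ε ^ 3) := by
      simp only [u, Algebra.algebraMap_eq_smul_one, mul_add, add_mul, smul_mul_assoc,
        mul_smul_comm, one_mul, mul_one]
      module
    rw [← sub_nonneg, hexp]
    exact add_nonneg (add_nonneg (smul_nonneg hε.le hsq)
      (smul_nonneg (by positivity) (star_mul_self_nonneg x)))
      (isStrictlyPositive_algebraMap (by positivity)).nonneg
  have hle : ε ^ 2 • (r * b * r) ≤ algebraMap ℝ A ε := by
    calc ε ^ 2 • (r * b * r) = star r * (ε ^ 2 • b) * r := by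
          rw [hr, mul_smul_comm, smul_mul_assoc]
    _ ≤ star r * (ε • (u * u)) * r := star_left_conjugate_le_conjugate hbu r
    _ = algebraMap ℝ A ε := by
          rw [hr, mul_smul_comm, smul_mul_assoc, ← mul_assoc, Ring.inverse_mul_cancel u hu,
            one_mul, Ring.mul_inverse_cancel u hu, Algebra.algebraMap_eq_smul_one]
  have hnonneg : 0 ≤ ε ^ 2 • (r * b * r) := smul_nonneg (by positivity)
    (by simpa [hr] using star_left_conjugate_nonneg (star_mul_self_nonneg x) r)
  have hstar : star (ε • (x * r)) * (ε • (x * r)) = ε ^ 2 • (r * b * r) := by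
    rw [star_smul, star_mul, hr, star_trivial, smul_mul_smul]
    simp only [b, sq, mul_assoc]
  refine Real.le_sqrt_of_sq_le ?_
  rw [sq, ← CStarRing.norm_star_mul_self, hstar]
  exact (CStarAlgebra.norm_le_iff_le_algebraMap _ hε.le hnonneg).2 hle

lemma norm_mul_ringInverse_mul_sub_le (x e : A) {ε : ℝ} (hε : 0 < ε)
    (he : Commute e (x * Ring.inverse (star x * x + algebraMap ℝ A ε) * star x)) :
    ‖x * (Ring.inverse (star x * x + algebraMap ℝ A ε) * (star x * e * x)) - e * x‖ ≤
      ‖e‖ * √ε := by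
  set r := Ring.inverse (star x * x + algebraMap ℝ A ε)
  have hr : r * (star x * x) = 1 - ε • r := by
    have := Ring.inverse_mul_cancel _ (isUnit_star_mul_self_add_algebraMap x hε)
    rw [mul_add, ← Algebra.commutes, ← Algebra.smul_def] at this
    rw [← this, add_sub_cancel_right]
  have hdiff : x * (r * (star x * e * x)) - e * x = -(e * (ε • (x * r))) := by
    calc x * (r * (star x * e * x)) - e * x = x * r * star x * e * x - e * x := by noncomm_ring
    _ = e * x * (r * (star x * x)) - e * x := by rw [← he.eq]; noncomm_ring
    _ = -(e * (ε • (x * r))) := by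
          rw [hr]
          simp only [mul_sub, mul_one, mul_smul_comm, mul_assoc]
          abel
  rw [hdiff, norm_neg]
  exact (norm_mul_le _ _).trans
    (mul_le_mul_of_nonneg_left (norm_smul_mul_ringInverse_le x hε) (norm_nonneg e))

end Resolvent

theorem commute_mul_mul_star_of_tendsto {ι A : Type*} [Ring A] [StarRing A] [TopologicalSpace A]
    [IsTopologicalRing A] [ContinuousStar A] [T2Space A] {l : Filter ι} [l.NeBot] {D : Set A}
    (hD_star : ∀ e ∈ D, star e ∈ D) (hD_comm : ∀ d ∈ D, ∀ e ∈ D, Commute d e)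
    {m : A} (c : ι → A → A) (hc_mem : ∀ i, ∀ e ∈ D, c i e ∈ D)
    (hc_star : ∀ i, ∀ e ∈ D, star (c i e) = c i (star e))
    (hc : ∀ e ∈ D, Tendsto (fun i => m * c i e) l (𝓝 (e * m)))
    {d e : A} (hd : d ∈ D) (he : e ∈ D) : Commute (m * d * star m) e := by
  have hleft : Tendsto (fun i => m * c i e * d * star m) l (𝓝 (e * (m * d * star m))) := by
    simpa only [mul_assoc] using ((hc e he).mul_const d).mul_const (star m)
  have hright : Tendsto (fun i => m * c i e * d * star m) l (𝓝 (m * d * star m * e)) := by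
    convert ((hc _ (hD_star e he)).star).const_mul (m * d) using 2 with i
    · rw [star_mul, hc_star i _ (hD_star e he), star_star]
      simp only [mul_assoc, (hD_comm d hd _ (hc_mem i e he)).left_comm]
    · rw [star_mul, star_star, mul_assoc]
  exact tendsto_nhds_unique hright hleft

lemma ringInverse_mem_of_maximal {A G : Type*} [Ring A] [StarRing A] [Algebra ℂ A]
    [StarModule ℂ A] [Group G] {β : G →* (A ≃ₐ[ℂ] A)} {D : StarSubalgebra ℂ A}
    (hD_comm : ∀ d ∈ D, ∀ e ∈ D, Commute d e) (hD_fix : ∀ d ∈ D, ∀ ω, β ω d = d)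
    (hD_max : ∀ a : A, (∀ ω, β ω a = a) → (∀ d ∈ D, a * d = d * a) → a ∈ D) :
    ∀ a ∈ D, Ring.inverse a ∈ D := by
  intro a ha
  by_cases hu : IsUnit a
  · obtain ⟨u, rfl⟩ := hu
    rw [Ring.inverse_unit]
    refine hD_max _ (fun ω => ?_) (fun d hd => (hD_comm _ ha d hd).units_inv_left.eq)
    have hu_fix : Units.map (β ω : A →* A) u = u := Units.ext (hD_fix _ ha ω)
    rw [← MonoidHom.coe_coe, ← Units.coe_map_inv, hu_fix]
  · rw [Ring.inverse_non_unit _ hu]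
    exact zero_mem D

section Normalizer

variable {A : Type*} [CStarAlgebra A] {D : StarSubalgebra ℂ A}

lemma ringInverse_star_mul_self_add_mem (hD_inv : ∀ a ∈ D, Ring.inverse a ∈ D) {x : A}
    (hx : star x * x ∈ D) (ε : ℝ) : Ring.inverse (star x * x + algebraMap ℝ A ε) ∈ D := by
  refine hD_inv _ (add_mem hx ?_)
  rw [IsScalarTower.algebraMap_apply ℝ ℂ A]
  exact D.algebraMap_mem _

theorem tendsto_mul_ringInverse_mul (hD_comm : ∀ d ∈ D, ∀ e ∈ D, Commute d e)
    (hD_inv : ∀ a ∈ D, Ring.inverse a ∈ D) {x : A}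
    (hx : ∀ d ∈ D, x * d * star x ∈ D ∧ star x * d * x ∈ D) {e : A} (he : e ∈ D) :
    Tendsto (fun ε : ℝ => x * (Ring.inverse (star x * x + algebraMap ℝ A ε) * (star x * e * x)))
      (𝓝[>] 0) (𝓝 (e * x)) := by
  have hr := ringInverse_star_mul_self_add_mem hD_inv (by simpa using (hx 1 (one_mem D)).2)
  rw [tendsto_iff_norm_sub_tendsto_zero]
  refine squeeze_zero' (.of_forall fun _ => norm_nonneg _) ?_ (g := fun ε => ‖e‖ * √ε) ?_
  · filter_upwards [self_mem_nhdsWithin] with ε hε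
    exact norm_mul_ringInverse_mul_sub_le x e hε (hD_comm e he _ (hx _ (hr ε)).1)
  · exact ((continuous_const.mul Real.continuous_sqrt).tendsto' 0 0 (by simp)).mono_left
      nhdsWithin_le_nhds

end Normalizer

section TwistedAverage

variable {A G : Type*} [NormedRing A] [NormedAlgebra ℂ A] [Group G] [MeasurableSpace G]

/-- The paper's `Φ_t` is `twistedAverage μ β (fun ω => ⟨ω⁻¹, t⟩)`. -/
noncomputable def twistedAverage (μ : Measure G) (β : G →* (A ≃ₐ[ℂ] A)) (χ : G → ℂ) (z : A) : A :=
  ∫ ω, χ ω • β ω z ∂μ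

variable {μ : Measure G} {β : G →* (A ≃ₐ[ℂ] A)} {χ : G → ℂ}

lemma map_twistedAverage [CompleteSpace A] [MeasurableMul G] [μ.IsMulLeftInvariant]
    (hβ_iso : ∀ ω (z : A), ‖β ω z‖ = ‖z‖) (hχ_mul : ∀ ω σ, χ (ω * σ) = χ ω * χ σ) (τ : G) (z : A) :
    β τ (twistedAverage μ β χ z) = χ τ⁻¹ • twistedAverage μ β χ z := by
  let L : A →ₗᵢ[ℂ] A := { (β τ).toLinearMap with norm_map' := hβ_iso τ }
  calc β τ (twistedAverage μ β χ z) = ∫ ω, β τ (χ ω • β ω z) ∂μ := (L.integral_comp_comm _).symm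
  _ = ∫ ω, χ (τ⁻¹ * (τ * ω)) • β (τ * ω) z ∂μ := by
        simp only [map_smul, inv_mul_cancel_left, map_mul, AlgEquiv.mul_apply]
  _ = ∫ ω, χ (τ⁻¹ * ω) • β ω z ∂μ := integral_mul_left_eq_self (fun ω => χ (τ⁻¹ * ω) • β ω z) τ
  _ = χ τ⁻¹ • twistedAverage μ β χ z := by
        simp only [hχ_mul, mul_smul, twistedAverage, integral_smul]

lemma star_twistedAverage [StarRing A] [ContinuousStar A] [StarModule ℂ A]
    (hβ_star : ∀ ω (z : A), β ω (star z) = star (β ω z)) (z : A) :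
    star (twistedAverage μ β χ z) = twistedAverage μ β (fun ω => star (χ ω)) (star z) := by
  rw [twistedAverage, twistedAverage, ← starL'_apply ℝ, ← ContinuousLinearEquiv.integral_comp_comm]
  simp only [starL'_apply, star_smul, hβ_star]

variable [TopologicalSpace G] [CompactSpace G] [OpensMeasurableSpace G]

lemma integrable_smul_apply [IsFiniteMeasure μ] (hβ : ∀ z : A, Continuous fun ω => β ω z)
    (hχ : Continuous χ) (z : A) : Integrable (fun ω => χ ω • β ω z) μ :=
  (hχ.smul (hβ z)).integrable_of_hasCompactSupport (.of_compactSpace _)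

lemma mul_twistedAverage [IsFiniteMeasure μ] (hβ : ∀ z : A, Continuous fun ω => β ω z)
    (hχ : Continuous χ) {a : A} (ha : ∀ ω, β ω a = a) (z : A) :
    a * twistedAverage μ β χ z = twistedAverage μ β χ (a * z) := by
  rw [twistedAverage, twistedAverage,
    ← integral_const_mul_of_integrable (integrable_smul_apply hβ hχ z)]
  simp only [map_mul, ha, mul_smul_comm]

lemma twistedAverage_mul [IsFiniteMeasure μ] (hβ : ∀ z : A, Continuous fun ω => β ω z)
    (hχ : Continuous χ) {a : A} (ha : ∀ ω, β ω a = a) (z : A) :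
    twistedAverage μ β χ z * a = twistedAverage μ β χ (z * a) := by
  rw [twistedAverage, twistedAverage,
    ← integral_mul_const_of_integrable (integrable_smul_apply hβ hχ z)]
  simp only [map_mul, ha, smul_mul_assoc]

lemma lipschitzWith_twistedAverage [IsProbabilityMeasure μ]
    (hβ : ∀ z : A, Continuous fun ω => β ω z) (hχ : Continuous χ)
    (hβ_iso : ∀ ω (z : A), ‖β ω z‖ = ‖z‖) (hχ_norm : ∀ ω, ‖χ ω‖ ≤ 1) :
    LipschitzWith 1 (twistedAverage μ β χ) := by
  refine LipschitzWith.of_dist_le_mul fun a b => ?_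
  rw [dist_eq_norm, dist_eq_norm, NNReal.coe_one, one_mul, twistedAverage, twistedAverage,
    ← integral_sub (integrable_smul_apply hβ hχ a) (integrable_smul_apply hβ hχ b)]
  refine (norm_integral_le_of_norm_le_const (C := ‖a - b‖) (.of_forall fun ω => ?_)).trans_eq
    (by simp)
  rw [← smul_sub, ← map_sub, norm_smul, hβ_iso]
  exact mul_le_of_le_one_left (norm_nonneg _) (hχ_norm ω)

end TwistedAverage

theorem twistedAverage_mul_mul_star_mem {A G : Type*} [CStarAlgebra A] [Group G]
    [TopologicalSpace G] [CompactSpace G] [MeasurableSpace G] [OpensMeasurableSpace G]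
    [MeasurableMul G] (μ : Measure G) [IsProbabilityMeasure μ] [μ.IsMulLeftInvariant]
    {β : G →* (A ≃ₐ[ℂ] A)} (hβ_star : ∀ ω (z : A), β ω (star z) = star (β ω z))
    (hβ_iso : ∀ ω (z : A), ‖β ω z‖ = ‖z‖) (hβ : ∀ z : A, Continuous fun ω => β ω z)
    {χ : G → ℂ} (hχ : Continuous χ) (hχ_norm : ∀ ω, ‖χ ω‖ = 1)
    (hχ_mul : ∀ ω σ, χ (ω * σ) = χ ω * χ σ) {D : StarSubalgebra ℂ A}
    (hD_fix : ∀ d ∈ D, ∀ ω, β ω d = d) (hD_comm : ∀ d ∈ D, ∀ e ∈ D, Commute d e)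
    (hD_max : ∀ a : A, (∀ ω, β ω a = a) → (∀ d ∈ D, a * d = d * a) → a ∈ D)
    {x : A} (hx : ∀ d ∈ D, x * d * star x ∈ D ∧ star x * d * x ∈ D) {d : A} (hd : d ∈ D) :
    twistedAverage μ β χ x * d * star (twistedAverage μ β χ x) ∈ D := by
  set m := twistedAverage μ β χ x
  have hD_inv := ringInverse_mem_of_maximal hD_comm hD_fix hD_max
  have hr := ringInverse_star_mul_self_add_mem hD_inv (by simpa using (hx 1 (one_mem D)).2)
  set c : ℝ → A → A := fun ε e => Ring.inverse (star x * x + algebraMap ℝ A ε) * (star x * e * x)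
  have hc_mem (ε : ℝ) (e : A) (he : e ∈ D) : c ε e ∈ D := mul_mem (hr ε) (hx e he).2
  have hc_star (ε : ℝ) (e : A) (he : e ∈ D) : star (c ε e) = c ε (star e) := by
    simp only [c]
    rw [star_mul, (isSelfAdjoint_ringInverse_star_mul_self_add x ε).star_eq,
      ← (hD_comm _ (hx _ (star_mem he)).2 _ (hr ε)).eq]
    simp only [star_mul, star_star, mul_assoc]
  have hm_fix (τ : G) : β τ (m * d * star m) = m * d * star m := by
    rw [map_mul, map_mul, hβ_star, map_twistedAverage hβ_iso hχ_mul, hD_fix d hd, star_smul,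
      smul_mul_assoc, smul_mul_assoc, mul_smul_comm, smul_smul, Complex.star_def,
      Complex.mul_conj', hχ_norm]
    simp only [Complex.ofReal_one, one_pow, one_smul, m]
  have hm_lim (e : A) (he : e ∈ D) : Tendsto (fun ε => m * c ε e) (𝓝[>] 0) (𝓝 (e * m)) := by
    have hΦ := (lipschitzWith_twistedAverage (μ := μ) hβ hχ hβ_iso
      fun ω => (hχ_norm ω).le).continuous
    have h := (hΦ.tendsto _).comp (tendsto_mul_ringInverse_mul hD_comm hD_inv hx he)
    rw [← mul_twistedAverage hβ hχ (hD_fix e he)] at h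
    exact h.congr fun ε => (twistedAverage_mul hβ hχ (hD_fix _ (hc_mem ε e he)) x).symm
  exact hD_max _ hm_fix fun e he => (commute_mul_mul_star_of_tendsto (D := D)
    (fun _ => star_mem) hD_comm c hc_mem hc_star hm_lim hd he).eq

theorem gamma_cartan_stmt5_general
    {A : Type*} [NormedRing A] [StarRing A] [CStarRing A] [NormedAlgebra ℂ A]
    [CompleteSpace A] [StarModule ℂ A]
    {Γ : Type*}
    {Gh : Type*} [CommGroup Gh] [TopologicalSpace Gh] [IsTopologicalGroup Gh]
    [CompactSpace Gh] [MeasurableSpace Gh] [BorelSpace Gh]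
    (μ : Measure Gh) [μ.IsHaarMeasure] [IsProbabilityMeasure μ]
    (β : Gh →* (A ≃ₐ[ℂ] A))
    (hβstar : ∀ (ω : Gh) (a : A), β ω (star a) = star (β ω a))
    (hβiso : ∀ (ω : Gh) (a : A), ‖β ω a‖ = ‖a‖)
    (hβcont : ∀ a : A, Continuous fun ω => β ω a)
    (pair : Gh → Γ → ℂ)
    (hpair_cont : ∀ t, Continuous fun ω => pair ω t)
    (hpair_norm : ∀ ω t, ‖pair ω t‖ = 1)
    (hpair_mul : ∀ ω σ t, pair (ω * σ) t = pair ω t * pair σ t)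
    -- `D` is an abelian C*-subalgebra of the fixed point algebra `A₀ = A^Ĝ` …
    (D : StarSubalgebra ℂ A)
    (hDfix : ∀ d ∈ D, ∀ ω : Gh, β ω d = d)
    (hDcomm : ∀ d ∈ D, ∀ e ∈ D, d * e = e * d)
    -- … which is maximal abelian in `A₀`.
    (hDmasa : ∀ a : A, (∀ ω : Gh, β ω a = a) → (∀ d ∈ D, a * d = d * a) → a ∈ D)
    -- `n` is a normalizer of `D` in `A`
    (n : A)
    (hn : ∀ d ∈ D, n * d * star n ∈ D ∧ star n * d * n ∈ D) :
    ∀ t : Γ, ∀ d ∈ D,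
      (∫ ω, pair ω⁻¹ t • β ω n ∂μ) * d * star (∫ ω, pair ω⁻¹ t • β ω n ∂μ) ∈ D ∧
      star (∫ ω, pair ω⁻¹ t • β ω n ∂μ) * d * (∫ ω, pair ω⁻¹ t • β ω n ∂μ) ∈ D := by
  let _ : CStarAlgebra A := { ‹NormedRing A›, ‹StarRing A›, ‹CompleteSpace A›, ‹CStarRing A›,
    ‹NormedAlgebra ℂ A›, ‹StarModule ℂ A› with }
  intro t d hd
  have hχ : Continuous fun ω : Gh => pair ω⁻¹ t := (hpair_cont t).comp continuous_inv
  have hχ_mul (ω σ : Gh) : pair (ω * σ)⁻¹ t = pair ω⁻¹ t * pair σ⁻¹ t := by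
    rw [mul_inv, hpair_mul]
  have hn_star (c : A) (hc : c ∈ D) :
      star n * c * star (star n) ∈ D ∧ star (star n) * c * star n ∈ D := by
    simpa only [star_star] using (hn c hc).symm
  refine ⟨twistedAverage_mul_mul_star_mem μ hβstar hβiso hβcont hχ (fun ω => hpair_norm _ t)
    hχ_mul hDfix hDcomm hDmasa hn hd, ?_⟩
  have h := twistedAverage_mul_mul_star_mem μ hβstar hβiso hβcont hχ.star
    (fun ω => (norm_star _).trans (hpair_norm _ t)) (fun ω σ => by rw [hχ_mul, star_mul'])
    hDfix hDcomm hDmasa hn_star hd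
  rwa [← star_twistedAverage hβstar, star_star] at h

/-- Let `Ĝ` act strongly on a C*-algebra `A` and let `D` be a maximal abelian
subalgebra of the fixed-point algebra `A₀ = A^Ĝ`.  If `n ∈ A` is a normalizer of `D`
(`nDn* ⊆ D` and `n*Dn ⊆ D`), then for every `t ∈ Γ`, `Φ_t(n)` is also a normalizer of `D`. -/
theorem gamma_cartan_stmt5
    {A : Type*} [NormedRing A] [StarRing A] [CStarRing A] [NormedAlgebra ℂ A]
    [CompleteSpace A] [StarModule ℂ A]
    {Γ : Type*} [AddCommGroup Γ]
    {Gh : Type*} [CommGroup Gh] [TopologicalSpace Gh] [IsTopologicalGroup Gh]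
    [CompactSpace Gh] [MeasurableSpace Gh] [BorelSpace Gh]
    (μ : Measure Gh) [μ.IsHaarMeasure] [IsProbabilityMeasure μ]
    (β : Gh →* (A ≃ₐ[ℂ] A))
    (hβstar : ∀ (ω : Gh) (a : A), β ω (star a) = star (β ω a))
    (hβiso : ∀ (ω : Gh) (a : A), ‖β ω a‖ = ‖a‖)
    (hβcont : ∀ a : A, Continuous fun ω => β ω a)
    (pair : Gh → Γ → ℂ)
    (hpair_cont : ∀ t, Continuous fun ω => pair ω t)
    (hpair_norm : ∀ ω t, ‖pair ω t‖ = 1)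
    (hpair_mul : ∀ ω σ t, pair (ω * σ) t = pair ω t * pair σ t)
    (hpair_add : ∀ ω s t, pair ω (s + t) = pair ω s * pair ω t)
    (hpair_orth : ∀ t : Γ, (∫ ω, pair ω t ∂μ) = if t = 0 then 1 else 0)
    -- `D` is an abelian C*-subalgebra of the fixed point algebra `A₀ = A^Ĝ` …
    (D : StarSubalgebra ℂ A)
    (hDclosed : IsClosed (D : Set A))
    (hDfix : ∀ d ∈ D, ∀ ω : Gh, β ω d = d)
    (hDcomm : ∀ d ∈ D, ∀ e ∈ D, d * e = e * d)
    -- … which is maximal abelian in `A₀`.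
    (hDmasa : ∀ a : A, (∀ ω : Gh, β ω a = a) → (∀ d ∈ D, a * d = d * a) → a ∈ D)
    -- `n` is a normalizer of `D` in `A`
    (n : A)
    (hn : ∀ d ∈ D, n * d * star n ∈ D ∧ star n * d * n ∈ D) :
    ∀ t : Γ, ∀ d ∈ D,
      (∫ ω, pair ω⁻¹ t • β ω n ∂μ) * d * star (∫ ω, pair ω⁻¹ t • β ω n ∂μ) ∈ D ∧
      star (∫ ω, pair ω⁻¹ t • β ω n ∂μ) * d * (∫ ω, pair ω⁻¹ t • β ω n ∂μ) ∈ D :=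
  gamma_cartan_stmt5_general μ β hβstar hβiso hβcont pair hpair_cont hpair_norm hpair_mul D hDfix
    hDcomm hDmasa n hn
end

section
/- Let (A,D) be a Γ-Cartan pair. Then for every normalizer n ∈ N(A,D), both n*n and nn* belong to D. -/
/-!
An approximate unit `(eᵢ)` for `A₀` consisting of positive contractions in `D` is an approximate
unit for all of `A`. For a homogeneous `a ∈ A_t` the element `a a*` lies in `A₀`, and the C*-identity
`‖eᵢ a - a‖² = ‖eᵢ (a a*) eᵢ - eᵢ (a a*) - (a a*) eᵢ + a a*‖` gives `eᵢ a → a`; since the `eᵢ` are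
contractions this passes to sums and then, by density of the homogeneous elements, to all of `A`.
For a normalizer `n` this gives `D ∋ n* eᵢ n → n* n` and `D ∋ n eᵢ n* → n n*`, and `D` is closed.
-/

open Filter Topology

section ApproximateUnit

variable {A : Type*} {ι : Type*} {l : Filter ι} {e : ι → A}

theorem tendsto_mul_self_mul_of_tendsto [NonUnitalSeminormedRing A]
    (he : ∀ i, ‖e i‖ ≤ 1) {p : A}
    (hleft : Tendsto (fun i => e i * p) l (𝓝 p)) (hright : Tendsto (fun i => p * e i) l (𝓝 p)) :
    Tendsto (fun i => e i * p * e i) l (𝓝 p) := by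
  have hbound : ∀ i, ‖e i * p * e i - p * e i‖ ≤ ‖e i * p - p‖ := fun i =>
    calc ‖e i * p * e i - p * e i‖ = ‖(e i * p - p) * e i‖ := by rw [sub_mul]
      _ ≤ ‖e i * p - p‖ * ‖e i‖ := norm_mul_le _ _
      _ ≤ ‖e i * p - p‖ := mul_le_of_le_one_right (norm_nonneg _) (he i)
  have hdiff : Tendsto (fun i => e i * p * e i - p * e i) l (𝓝 0) :=
    squeeze_zero_norm hbound (by simpa using (hleft.sub_const p).norm)
  simpa using hdiff.add hright

theorem tendsto_mul_of_tendsto_mul_self_mul_star [NonUnitalNormedRing A] [StarRing A]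
    [CStarRing A] (he_sa : ∀ i, IsSelfAdjoint (e i)) (he : ∀ i, ‖e i‖ ≤ 1) {a : A}
    (hleft : Tendsto (fun i => e i * (a * star a)) l (𝓝 (a * star a)))
    (hright : Tendsto (fun i => a * star a * e i) l (𝓝 (a * star a))) :
    Tendsto (fun i => e i * a) l (𝓝 a) := by
  set p := a * star a
  have hexpand : ∀ i, (e i * a - a) * star (e i * a - a) = e i * p * e i - e i * p - p * e i + p := by
    intro i
    simp only [star_sub, star_mul, (he_sa i).star_eq, p]
    noncomm_ring
  have hsq : Tendsto (fun i => ‖e i * a - a‖ * ‖e i * a - a‖) l (𝓝 0) := by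
    simp_rw [← CStarRing.norm_self_mul_star, hexpand]
    simpa using ((((tendsto_mul_self_mul_of_tendsto he hleft hright).sub hleft).sub hright).add_const
      p).norm
  have hnorm : Tendsto (fun i => ‖e i * a - a‖) l (𝓝 0) := by
    simpa [Real.sqrt_mul_self (norm_nonneg _)] using hsq.sqrt
  simpa using (tendsto_zero_iff_norm_tendsto_zero.mpr hnorm).add_const a

theorem isClosed_setOf_tendsto_mul_left [NonUnitalSeminormedRing A] (he : ∀ i, ‖e i‖ ≤ 1) :
    IsClosed {a : A | Tendsto (fun i => e i * a) l (𝓝 a)} := by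
  have hlip : ∀ i, LipschitzWith 1 (e i * ·) := fun i =>
    LipschitzWith.of_dist_le_mul fun x y => by
      simpa [dist_eq_norm, ← mul_sub] using
        (norm_mul_le (e i) (x - y)).trans (mul_le_of_le_one_left (norm_nonneg _) (he i))
  exact (LipschitzWith.uniformEquicontinuous _ 1 hlip).equicontinuous.isClosed_setOfPred_tendsto
    continuous_id

theorem tendsto_mul_right_of_tendsto_mul_left [NonUnitalSeminormedRing A] [StarRing A]
    [NormedStarGroup A] (he_sa : ∀ i, IsSelfAdjoint (e i)) {a : A}
    (h : Tendsto (fun i => e i * star a) l (𝓝 (star a))) :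
    Tendsto (fun i => a * e i) l (𝓝 a) := by
  simpa [Function.comp_def, (he_sa _).star_eq] using (continuous_star.tendsto (star a)).comp h

end ApproximateUnit

section Graded

variable {A : Type*} [NormedRing A] [StarRing A] [CStarRing A] [NormedAlgebra ℂ A]
  {Γ : Type*} [AddCommGroup Γ] {Agr : Γ → Submodule ℂ A}
  {ι : Type*} {l : Filter ι} {e : ι → A}

theorem tendsto_mul_left_of_approxUnit_degree_zero
    (hgr_mul : ∀ s t : Γ, ∀ a ∈ Agr t, ∀ b ∈ Agr s, a * b ∈ Agr (t + s))
    (hgr_star : ∀ t : Γ, ∀ a ∈ Agr t, star a ∈ Agr (-t))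
    (hgr_dense : Dense (↑(⨆ t, Agr t) : Set A))
    (he_sa : ∀ i, IsSelfAdjoint (e i)) (he : ∀ i, ‖e i‖ ≤ 1)
    (happrox : ∀ a ∈ Agr 0, Tendsto (fun i => e i * a) l (𝓝 a) ∧
      Tendsto (fun i => a * e i) l (𝓝 a))
    (a : A) : Tendsto (fun i => e i * a) l (𝓝 a) := by
  have hhom : ∀ t, ∀ a ∈ Agr t, Tendsto (fun i => e i * a) l (𝓝 a) := by
    intro t a ha
    have hp : a * star a ∈ Agr 0 := by
      simpa using hgr_mul (-t) t a ha (star a) (hgr_star t a ha)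
    exact tendsto_mul_of_tendsto_mul_self_mul_star he_sa he (happrox _ hp).1 (happrox _ hp).2
  have hspan : ((⨆ t, Agr t : Submodule ℂ A) : Set A) ⊆
      {a : A | Tendsto (fun i => e i * a) l (𝓝 a)} := fun a ha =>
    Submodule.iSup_induction Agr (motive := fun a => Tendsto (fun i => e i * a) l (𝓝 a)) ha hhom
      (by simpa using tendsto_const_nhds) fun x y hx hy => by simpa [mul_add] using hx.add hy
  exact (isClosed_setOf_tendsto_mul_left he).closure_subset_iff.mpr hspan (hgr_dense a)

end Graded

theorem gamma_cartan_stmt7_general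
    {A : Type*} [NormedRing A] [StarRing A] [CStarRing A] [NormedAlgebra ℂ A]
    [StarModule ℂ A] [PartialOrder A] [StarOrderedRing A]
    {Γ : Type*} [AddCommGroup Γ]
    -- `A` is topologically graded by `Γ` (with linearly independent graded subspaces):
    (Agr : Γ → Submodule ℂ A)
    (hgr_mul : ∀ s t : Γ, ∀ a ∈ Agr t, ∀ b ∈ Agr s, a * b ∈ Agr (t + s))
    (hgr_star : ∀ t : Γ, ∀ a ∈ Agr t, star a ∈ Agr (-t))
    (hgr_dense : Dense (↑(⨆ t, Agr t) : Set A))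
    -- `D` is a Cartan subalgebra of `A₀`: a closed abelian *-subalgebra,
    (D : StarSubalgebra ℂ A)
    (hDclosed : IsClosed (D : Set A))
    -- containing an approximate unit for `A₀`,
    (hDau : ∃ (ι : Type) (l : Filter ι) (e : ι → A), l.NeBot ∧
      (∀ i, e i ∈ D ∧ 0 ≤ e i ∧ ‖e i‖ ≤ 1) ∧
      ∀ a ∈ Agr 0, Filter.Tendsto (fun i => e i * a) l (nhds a) ∧
        Filter.Tendsto (fun i => a * e i) l (nhds a))
    (n : A)
    (hn : ∀ d ∈ D, n * d * star n ∈ D ∧ star n * d * n ∈ D) :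
    star n * n ∈ D ∧ n * star n ∈ D := by
  obtain ⟨ι, l, e, _, he, happrox⟩ := hDau
  have he_sa : ∀ i, IsSelfAdjoint (e i) := fun i => IsSelfAdjoint.of_nonneg (he i).2.1
  have hleft : ∀ a, Tendsto (fun i => e i * a) l (𝓝 a) := fun a =>
    tendsto_mul_left_of_approxUnit_degree_zero hgr_mul hgr_star hgr_dense he_sa
      (fun i => (he i).2.2) happrox a
  have hright : Tendsto (fun i => n * e i) l (𝓝 n) :=
    tendsto_mul_right_of_tendsto_mul_left he_sa (hleft (star n))
  constructor
  · exact hDclosed.mem_of_tendsto (by simpa [mul_assoc] using (hleft n).const_mul (star n))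
      (Eventually.of_forall fun i => (hn (e i) (he i).1).2)
  · exact hDclosed.mem_of_tendsto (hright.mul_const (star n))
      (Eventually.of_forall fun i => (hn (e i) (he i).1).1)

/-- Let `(A,D)` be a `Γ`-Cartan pair.  Then for every normalizer `n ∈ N(A,D)`, both `n*n` and `nn*` belong to `D`. -/
theorem gamma_cartan_stmt7
    {A : Type*} [NormedRing A] [StarRing A] [CStarRing A] [NormedAlgebra ℂ A]
    [CompleteSpace A] [StarModule ℂ A] [PartialOrder A] [StarOrderedRing A]
    {Γ : Type*} [AddCommGroup Γ]
    -- `A` is topologically graded by `Γ` (with linearly independent graded subspaces):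
    (Agr : Γ → Submodule ℂ A)
    (hgr_closed : ∀ t, IsClosed (Agr t : Set A))
    (hgr_mul : ∀ s t : Γ, ∀ a ∈ Agr t, ∀ b ∈ Agr s, a * b ∈ Agr (t + s))
    (hgr_star : ∀ t : Γ, ∀ a ∈ Agr t, star a ∈ Agr (-t))
    (hgr_indep : iSupIndep Agr)
    (hgr_dense : Dense (↑(⨆ t, Agr t) : Set A))
    -- with a faithful conditional expectation `E0 = Φ₀` onto the degree-zero subspace `A₀`:
    (E0 : A →ₗ[ℂ] A)
    (hE0mem : ∀ a, E0 a ∈ Agr 0)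
    (hE0fix : ∀ a ∈ Agr 0, E0 a = a)
    (hE0t : ∀ t : Γ, t ≠ 0 → ∀ a ∈ Agr t, E0 a = 0)
    (hE0star : ∀ a, E0 (star a) = star (E0 a))
    (hE0contr : ∀ a, ‖E0 a‖ ≤ ‖a‖)
    (hE0pos : ∀ a : A, 0 ≤ a → 0 ≤ E0 a)
    (hE0bimod : ∀ a : A, ∀ b ∈ Agr 0, E0 (b * a) = b * E0 a ∧ E0 (a * b) = E0 a * b)
    (hE0faith : ∀ a : A, E0 (star a * a) = 0 → a = 0)
    -- `D` is a Cartan subalgebra of `A₀`: a closed abelian *-subalgebra,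
    (D : StarSubalgebra ℂ A)
    (hD0 : (D : Set A) ⊆ (Agr 0 : Set A))
    (hDclosed : IsClosed (D : Set A))
    (hDcomm : ∀ d ∈ D, ∀ e ∈ D, d * e = e * d)
    -- maximal abelian in `A₀`,
    (hDmasa : ∀ a ∈ Agr 0, (∀ d ∈ D, a * d = d * a) → a ∈ D)
    -- containing an approximate unit for `A₀`,
    (hDau : ∃ (ι : Type) (l : Filter ι) (e : ι → A), l.NeBot ∧
      (∀ i, e i ∈ D ∧ 0 ≤ e i ∧ ‖e i‖ ≤ 1) ∧
      ∀ a ∈ Agr 0, Filter.Tendsto (fun i => e i * a) l (nhds a) ∧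
        Filter.Tendsto (fun i => a * e i) l (nhds a))
    -- whose normalizers in `A₀` generate `A₀`,
    (hD0gen : ∀ a ∈ Agr 0, a ∈ closure (↑(Submodule.span ℂ
      {n : A | n ∈ Agr 0 ∧ ∀ d ∈ D, n * d * star n ∈ D ∧ star n * d * n ∈ D}) : Set A))
    -- with a faithful conditional expectation `ED = E` of `A₀` onto `D`:
    (ED : A →ₗ[ℂ] A)
    (hEDmem : ∀ a, ED a ∈ D)
    (hEDfix : ∀ d ∈ D, ED d = d)
    (hEDstar : ∀ a, ED (star a) = star (ED a))
    (hEDcontr : ∀ a, ‖ED a‖ ≤ ‖a‖)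
    (hEDpos : ∀ a : A, 0 ≤ a → 0 ≤ ED a)
    (hEDbimod : ∀ a : A, ∀ d ∈ D, ED (d * a) = d * ED a ∧ ED (a * d) = ED a * d)
    (hEDfaith : ∀ a ∈ Agr 0, ED (star a * a) = 0 → a = 0)
    -- and the normalizers `N(A,D)` of `D` in `A` densely span `A`:
    (hNdense : Dense (↑(Submodule.span ℂ
      {n : A | ∀ d ∈ D, n * d * star n ∈ D ∧ star n * d * n ∈ D}) : Set A))
    (n : A)
    (hn : ∀ d ∈ D, n * d * star n ∈ D ∧ star n * d * n ∈ D) :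
    star n * n ∈ D ∧ n * star n ∈ D :=
  gamma_cartan_stmt7_general Agr hgr_mul hgr_star hgr_dense D hDclosed hDau n hn
end

section
/- Let (A,D) be a Γ-Cartan pair. Then any approximate unit for D is an approximate unit for A. -/
/-!
The elements `a` with `e i * a → a` and `a * e i → a` form a closed subspace `S` of `A`. By the
C*-identity, `‖e i * a - a‖ ^ 2` is controlled by `‖a a* e i - a a*‖`, so `a ∈ S` as soon as
`a a*, a* a ∈ S`. Since `S ⊇ D`, this puts every normalizer `n ∈ A₀` of `D` in `S`: `n n*` is the
limit of `n u_j n* ∈ D` for an approximate unit `(u_j) ⊆ D` of `A₀`. These normalizers densely span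
`A₀`, so `A₀ ⊆ S`; for homogeneous `a ∈ A_t` both `a a*` and `a* a` lie in `A₀`, so `A_t ⊆ S`,
and the homogeneous elements densely span `A`.
-/

open Filter Topology

section ApproximateUnit

variable (𝕜 : Type*) {A : Type*} [NormedField 𝕜] [NonUnitalNormedRing A] [NormedSpace 𝕜 A]
  [IsScalarTower 𝕜 A A] [SMulCommClass 𝕜 A A] {ι : Type*} (l : Filter ι) (e : ι → A)

def approximateUnitSubmodule : Submodule 𝕜 A where
  carrier := {a | Tendsto (e · * a) l (𝓝 a) ∧ Tendsto (a * e ·) l (𝓝 a)}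
  add_mem' ha hb := ⟨by simpa only [mul_add] using ha.1.add hb.1,
    by simpa only [add_mul] using ha.2.add hb.2⟩
  zero_mem' := by simp [tendsto_const_nhds]
  smul_mem' c _ ha := ⟨by simpa only [mul_smul_comm] using ha.1.const_smul c,
    by simpa only [smul_mul_assoc] using ha.2.const_smul c⟩

variable {𝕜 l e}

theorem isClosed_approximateUnitSubmodule (he : ∀ i, ‖e i‖ ≤ 1) :
    IsClosed (approximateUnitSubmodule 𝕜 l e : Set A) := by
  have he' : ∀ i, ‖e i‖₊ ≤ 1 := he
  have isClosed_of_lipschitz (f : ι → A → A) (hf : ∀ i, LipschitzWith 1 (f i)) :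
      IsClosed {a | Tendsto (f · a) l (𝓝 a)} :=
    (LipschitzWith.uniformEquicontinuous f 1 hf).equicontinuous.isClosed_setOfPred_tendsto
      continuous_id
  exact (isClosed_of_lipschitz _ fun i ↦ (lipschitzWith_smul (e i)).weaken (he' i)).inter
    (isClosed_of_lipschitz _ fun i ↦ (lipschitzWith_smul (MulOpposite.op (e i))).weaken (he' i))

end ApproximateUnit

section CStarRing

variable {A : Type*} [NonUnitalNormedRing A] [StarRing A] [CStarRing A]
  {ι : Type*} {l : Filter ι} {e : ι → A}

theorem norm_mul_sub_sq_le {x : A} (hx : IsSelfAdjoint x) (hx_norm : ‖x‖ ≤ 1) (a : A) :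
    ‖x * a - a‖ ^ 2 ≤ 2 * ‖a * star a * x - a * star a‖ := by
  set b := a * star a
  have hid : (x * a - a) * star (x * a - a) = x * (b * x - b) - (b * x - b) := by
    rw [star_sub, star_mul, hx.star_eq]
    simp only [b]
    noncomm_ring
  calc ‖x * a - a‖ ^ 2 = ‖x * (b * x - b) - (b * x - b)‖ := by
        rw [sq, ← CStarRing.norm_self_mul_star, hid]
    _ ≤ ‖x‖ * ‖b * x - b‖ + ‖b * x - b‖ :=
        (norm_sub_le _ _).trans (by gcongr; exact norm_mul_le _ _)
    _ ≤ 2 * ‖b * x - b‖ := by nlinarith [norm_nonneg (b * x - b)]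

theorem tendsto_mul_left_of_tendsto_mul_star_mul (hsa : ∀ i, IsSelfAdjoint (e i))
    (he : ∀ i, ‖e i‖ ≤ 1) {a : A} (h : Tendsto (a * star a * e ·) l (𝓝 (a * star a))) :
    Tendsto (e · * a) l (𝓝 a) := by
  rw [tendsto_iff_norm_sub_tendsto_zero] at h ⊢
  have hlim : Tendsto (fun i ↦ √(2 * ‖a * star a * e i - a * star a‖)) l (𝓝 0) := by
    simpa using (h.const_mul 2).sqrt
  refine squeeze_zero (fun _ ↦ norm_nonneg _) (fun i ↦ ?_) hlim
  exact (Real.le_sqrt (norm_nonneg _) (by positivity)).2 (norm_mul_sub_sq_le (hsa i) (he i) a)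

theorem tendsto_mul_right_of_tendsto_star_mul_mul (hsa : ∀ i, IsSelfAdjoint (e i))
    (he : ∀ i, ‖e i‖ ≤ 1) {a : A} (h : Tendsto (star a * a * e ·) l (𝓝 (star a * a))) :
    Tendsto (a * e ·) l (𝓝 a) := by
  have := (tendsto_mul_left_of_tendsto_mul_star_mul hsa he (a := star a) (by simpa using h)).star
  simpa [(hsa _).star_eq] using this

variable {𝕜 : Type*} [NormedField 𝕜] [NormedSpace 𝕜 A] [IsScalarTower 𝕜 A A] [SMulCommClass 𝕜 A A]

theorem mem_approximateUnitSubmodule_of_mul_star_mem (hsa : ∀ i, IsSelfAdjoint (e i))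
    (he : ∀ i, ‖e i‖ ≤ 1) {a : A} (h₁ : a * star a ∈ approximateUnitSubmodule 𝕜 l e)
    (h₂ : star a * a ∈ approximateUnitSubmodule 𝕜 l e) : a ∈ approximateUnitSubmodule 𝕜 l e :=
  ⟨tendsto_mul_left_of_tendsto_mul_star_mul hsa he h₁.2,
    tendsto_mul_right_of_tendsto_star_mul_mul hsa he h₂.2⟩

end CStarRing

theorem mul_mem_of_tendsto_mul_mem {A : Type*} [Semigroup A] [TopologicalSpace A] [ContinuousMul A]
    {D : Set A} (hD : IsClosed D) {κ : Type*} {l : Filter κ} [l.NeBot] {u : κ → A} {x y : A}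
    (hu : Tendsto (u · * y) l (𝓝 y)) (hxy : ∀ j, x * u j * y ∈ D) : x * y ∈ D :=
  hD.mem_of_tendsto (hu.const_mul x) (.of_forall fun j ↦ mul_assoc x (u j) y ▸ hxy j)
theorem gamma_cartan_stmt8_general
    {A : Type*} [NormedRing A] [StarRing A] [CStarRing A] [NormedAlgebra ℂ A]
    [StarModule ℂ A] [PartialOrder A] [StarOrderedRing A]
    {Γ : Type*} [AddCommGroup Γ]
    -- `A` is topologically graded by `Γ` (with linearly independent graded subspaces):
    (Agr : Γ → Submodule ℂ A)
    (hgr_mul : ∀ s t : Γ, ∀ a ∈ Agr t, ∀ b ∈ Agr s, a * b ∈ Agr (t + s))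
    (hgr_star : ∀ t : Γ, ∀ a ∈ Agr t, star a ∈ Agr (-t))
    (hgr_dense : Dense (↑(⨆ t, Agr t) : Set A))
    -- `D` is a Cartan subalgebra of `A₀`: a closed abelian *-subalgebra,
    (D : StarSubalgebra ℂ A)
    (hDclosed : IsClosed (D : Set A))
    -- containing an approximate unit for `A₀`,
    (hDau : ∃ (ι : Type) (l : Filter ι) (e : ι → A), l.NeBot ∧
      (∀ i, e i ∈ D ∧ 0 ≤ e i ∧ ‖e i‖ ≤ 1) ∧
      ∀ a ∈ Agr 0, Filter.Tendsto (fun i => e i * a) l (nhds a) ∧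
        Filter.Tendsto (fun i => a * e i) l (nhds a))
    -- whose normalizers in `A₀` generate `A₀`,
    (hD0gen : ∀ a ∈ Agr 0, a ∈ closure (↑(Submodule.span ℂ
      {n : A | n ∈ Agr 0 ∧ ∀ d ∈ D, n * d * star n ∈ D ∧ star n * d * n ∈ D}) : Set A))
    -- `(e_i)` is an approximate unit for `D`:
    {ι : Type*} (l : Filter ι) (e : ι → A)
    (he_pos : ∀ i, 0 ≤ e i)
    (he_norm : ∀ i, ‖e i‖ ≤ 1)
    (he_au : ∀ d ∈ D, Filter.Tendsto (fun i => e i * d) l (nhds d) ∧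
      Filter.Tendsto (fun i => d * e i) l (nhds d)) :
    -- then `(e_i)` is an approximate unit for `A`:
    ∀ a : A, Filter.Tendsto (fun i => e i * a) l (nhds a) ∧
      Filter.Tendsto (fun i => a * e i) l (nhds a) := by
  have hsa : ∀ i, IsSelfAdjoint (e i) := fun i ↦ .of_nonneg (he_pos i)
  set S := approximateUnitSubmodule ℂ l e
  have hS : IsClosed (S : Set A) := isClosed_approximateUnitSubmodule he_norm
  have hA₀ : ∀ a ∈ Agr 0, a ∈ S := by
    obtain ⟨κ, l', u, hl', hu, hu_au⟩ := hDau
    intro a ha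
    refine closure_minimal (Submodule.span_le.2 ?_) hS (hD0gen a ha)
    rintro n ⟨hn, hnD⟩
    have hn' : star n ∈ Agr 0 := by simpa using hgr_star 0 n hn
    exact mem_approximateUnitSubmodule_of_mul_star_mem hsa he_norm
      (he_au _ (mul_mem_of_tendsto_mul_mem hDclosed (hu_au _ hn').1 fun j ↦ (hnD _ (hu j).1).1))
      (he_au _ (mul_mem_of_tendsto_mul_mem hDclosed (hu_au _ hn).1 fun j ↦ (hnD _ (hu j).1).2))
  have hAgr : ⨆ t, Agr t ≤ S := iSup_le fun t a ha ↦
    mem_approximateUnitSubmodule_of_mul_star_mem hsa he_norm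
      (hA₀ _ (by simpa using hgr_mul (-t) t a ha _ (hgr_star t a ha)))
      (hA₀ _ (by simpa using hgr_mul t (-t) _ (hgr_star t a ha) a ha))
  exact fun a ↦ closure_minimal hAgr hS (hgr_dense a)

/-- Let `(A,D)` be a `Γ`-Cartan pair.  Then any approximate unit for `D` is an approximate unit for `A`. -/
theorem gamma_cartan_stmt8
    {A : Type*} [NormedRing A] [StarRing A] [CStarRing A] [NormedAlgebra ℂ A]
    [CompleteSpace A] [StarModule ℂ A] [PartialOrder A] [StarOrderedRing A]
    {Γ : Type*} [AddCommGroup Γ]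
    -- `A` is topologically graded by `Γ` (with linearly independent graded subspaces):
    (Agr : Γ → Submodule ℂ A)
    (hgr_closed : ∀ t, IsClosed (Agr t : Set A))
    (hgr_mul : ∀ s t : Γ, ∀ a ∈ Agr t, ∀ b ∈ Agr s, a * b ∈ Agr (t + s))
    (hgr_star : ∀ t : Γ, ∀ a ∈ Agr t, star a ∈ Agr (-t))
    (hgr_indep : iSupIndep Agr)
    (hgr_dense : Dense (↑(⨆ t, Agr t) : Set A))
    -- with a faithful conditional expectation `E0 = Φ₀` onto the degree-zero subspace `A₀`:
    (E0 : A →ₗ[ℂ] A)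
    (hE0mem : ∀ a, E0 a ∈ Agr 0)
    (hE0fix : ∀ a ∈ Agr 0, E0 a = a)
    (hE0t : ∀ t : Γ, t ≠ 0 → ∀ a ∈ Agr t, E0 a = 0)
    (hE0star : ∀ a, E0 (star a) = star (E0 a))
    (hE0contr : ∀ a, ‖E0 a‖ ≤ ‖a‖)
    (hE0pos : ∀ a : A, 0 ≤ a → 0 ≤ E0 a)
    (hE0bimod : ∀ a : A, ∀ b ∈ Agr 0, E0 (b * a) = b * E0 a ∧ E0 (a * b) = E0 a * b)
    (hE0faith : ∀ a : A, E0 (star a * a) = 0 → a = 0)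
    -- `D` is a Cartan subalgebra of `A₀`: a closed abelian *-subalgebra,
    (D : StarSubalgebra ℂ A)
    (hD0 : (D : Set A) ⊆ (Agr 0 : Set A))
    (hDclosed : IsClosed (D : Set A))
    (hDcomm : ∀ d ∈ D, ∀ e ∈ D, d * e = e * d)
    -- maximal abelian in `A₀`,
    (hDmasa : ∀ a ∈ Agr 0, (∀ d ∈ D, a * d = d * a) → a ∈ D)
    -- containing an approximate unit for `A₀`,
    (hDau : ∃ (ι : Type) (l : Filter ι) (e : ι → A), l.NeBot ∧
      (∀ i, e i ∈ D ∧ 0 ≤ e i ∧ ‖e i‖ ≤ 1) ∧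
      ∀ a ∈ Agr 0, Filter.Tendsto (fun i => e i * a) l (nhds a) ∧
        Filter.Tendsto (fun i => a * e i) l (nhds a))
    -- whose normalizers in `A₀` generate `A₀`,
    (hD0gen : ∀ a ∈ Agr 0, a ∈ closure (↑(Submodule.span ℂ
      {n : A | n ∈ Agr 0 ∧ ∀ d ∈ D, n * d * star n ∈ D ∧ star n * d * n ∈ D}) : Set A))
    -- with a faithful conditional expectation `ED = E` of `A₀` onto `D`:
    (ED : A →ₗ[ℂ] A)
    (hEDmem : ∀ a, ED a ∈ D)
    (hEDfix : ∀ d ∈ D, ED d = d)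
    (hEDstar : ∀ a, ED (star a) = star (ED a))
    (hEDcontr : ∀ a, ‖ED a‖ ≤ ‖a‖)
    (hEDpos : ∀ a : A, 0 ≤ a → 0 ≤ ED a)
    (hEDbimod : ∀ a : A, ∀ d ∈ D, ED (d * a) = d * ED a ∧ ED (a * d) = ED a * d)
    (hEDfaith : ∀ a ∈ Agr 0, ED (star a * a) = 0 → a = 0)
    -- and the normalizers `N(A,D)` of `D` in `A` densely span `A`:
    (hNdense : Dense (↑(Submodule.span ℂ
      {n : A | ∀ d ∈ D, n * d * star n ∈ D ∧ star n * d * n ∈ D}) : Set A))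
    -- `(e_i)` is an approximate unit for `D`:
    {ι : Type*} (l : Filter ι) [l.NeBot] (e : ι → A)
    (he_mem : ∀ i, e i ∈ D)
    (he_pos : ∀ i, 0 ≤ e i)
    (he_norm : ∀ i, ‖e i‖ ≤ 1)
    (he_au : ∀ d ∈ D, Filter.Tendsto (fun i => e i * d) l (nhds d) ∧
      Filter.Tendsto (fun i => d * e i) l (nhds d)) :
    -- then `(e_i)` is an approximate unit for `A`:
    ∀ a : A, Filter.Tendsto (fun i => e i * a) l (nhds a) ∧
      Filter.Tendsto (fun i => a * e i) l (nhds a) :=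
  gamma_cartan_stmt8_general Agr hgr_mul hgr_star hgr_dense D hDclosed hDau hD0gen l e he_pos
    he_norm he_au
end

section
/- Let (A,D) be a Γ-Cartan pair with Δ = E ∘ Φ₀ the faithful conditional expectation A → D. If n is a homogeneous normalizer of D and x ∈ X = D̂ satisfies Δ(n)(x) ≠ 0, then x lies in the interior of the set of fixed points of the partial homeomorphism α_n, and there exists h ∈ D with h(x) = 1 and nh = hn ∈ D. -/
private lemma keyL {A : Type*} [NormedRing A] [StarRing A] [CStarRing A]
    (D : Set A)
    (hDcomm : ∀ p ∈ D, ∀ q ∈ D, p * q = q * p)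
    (hDmul : ∀ p ∈ D, ∀ q ∈ D, p * q ∈ D)
    (hDstar : ∀ p ∈ D, star p ∈ D)
    (m f : A) (hf : f ∈ D)
    (hm : ∀ d ∈ D, star m * d * m ∈ D)
    (hcD : star m * m ∈ D)
    (hPf : ∀ d ∈ D, f * (star m * d * m) = d * (f * (star m * m)))
    (d : A) (hd : d ∈ D) : (m * f) * d = d * (m * f) := by
  have hfc : f * (star m * m) ∈ D := hDmul f hf _ hcD
  have key1 : star (m * f) * ((m * f) * d) = star (m * f) * (d * (m * f)) := by
    have br : (star m * m) * (f * d) = ((star m * d) * m) * f := by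
      calc (star m * m) * (f * d) = ((star m * m) * f) * d := (mul_assoc _ _ _).symm
        _ = (f * (star m * m)) * d := by rw [hDcomm _ hcD f hf]
        _ = d * (f * (star m * m)) := hDcomm _ hfc d hd
        _ = f * (star m * d * m) := (hPf d hd).symm
        _ = (star m * d * m) * f := hDcomm f hf _ (hm d hd)
    calc star (m * f) * ((m * f) * d)
        = (star f * star m) * ((m * f) * d) := by rw [star_mul]
      _ = (star f * star m) * (m * (f * d)) := by rw [mul_assoc m f d]
      _ = star f * (star m * (m * (f * d))) := mul_assoc _ _ _
      _ = star f * ((star m * m) * (f * d)) := by rw [mul_assoc (star m) m (f * d)]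
      _ = star f * (((star m * d) * m) * f) := by rw [br]
      _ = star f * ((star m * d) * (m * f)) := by rw [mul_assoc (star m * d) m f]
      _ = star f * (star m * (d * (m * f))) := by rw [mul_assoc (star m) d (m * f)]
      _ = (star f * star m) * (d * (m * f)) := (mul_assoc _ _ _).symm
      _ = star (m * f) * (d * (m * f)) := by rw [← star_mul]
  have key2 : (star (m * f) * star d) * ((m * f) * d)
      = (star (m * f) * star d) * (d * (m * f)) := by
    have br : ((star m * star d) * m) * (f * d) = ((star m * (star d * d)) * m) * f := by
      calc ((star m * star d) * m) * (f * d)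
          = (((star m * star d) * m) * f) * d := (mul_assoc _ _ _).symm
        _ = (f * ((star m * star d) * m)) * d := by
              rw [hDcomm f hf _ (hm _ (hDstar d hd))]
        _ = (star d * (f * (star m * m))) * d := by rw [hPf (star d) (hDstar d hd)]
        _ = star d * ((f * (star m * m)) * d) := mul_assoc _ _ _
        _ = star d * (d * (f * (star m * m))) := by rw [hDcomm _ hfc d hd]
        _ = (star d * d) * (f * (star m * m)) := (mul_assoc _ _ _).symm
        _ = f * (star m * (star d * d) * m) :=
              (hPf (star d * d) (hDmul _ (hDstar d hd) d hd)).symm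
        _ = (star m * (star d * d) * m) * f :=
              hDcomm f hf _ (hm _ (hDmul _ (hDstar d hd) d hd))
    calc (star (m * f) * star d) * ((m * f) * d)
        = ((star f * star m) * star d) * ((m * f) * d) := by rw [star_mul]
      _ = ((star f * star m) * star d) * (m * (f * d)) := by rw [mul_assoc m f d]
      _ = (star f * (star m * star d)) * (m * (f * d)) := by
            rw [mul_assoc (star f) (star m) (star d)]
      _ = star f * ((star m * star d) * (m * (f * d))) := mul_assoc _ _ _
      _ = star f * (((star m * star d) * m) * (f * d)) := by
            rw [mul_assoc (star m * star d) m (f * d)]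
      _ = star f * (((star m * (star d * d)) * m) * f) := by rw [br]
      _ = star f * ((star m * (star d * d)) * (m * f)) := by
            rw [mul_assoc (star m * (star d * d)) m f]
      _ = star f * (((star m * star d) * d) * (m * f)) := by
            rw [mul_assoc (star m) (star d) d]
      _ = star f * ((star m * star d) * (d * (m * f))) := by
            rw [mul_assoc (star m * star d) d (m * f)]
      _ = (star f * (star m * star d)) * (d * (m * f)) := (mul_assoc _ _ _).symm
      _ = ((star f * star m) * star d) * (d * (m * f)) := by
            rw [mul_assoc (star f) (star m) (star d)]
      _ = (star (m * f) * star d) * (d * (m * f)) := by rw [star_mul]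
  have h0 : star ((m * f) * d - d * (m * f)) * ((m * f) * d - d * (m * f)) = 0 := by
    have k1 : (star d * star (m * f)) * ((m * f) * d)
        = (star d * star (m * f)) * (d * (m * f)) := by
      rw [mul_assoc (star d) (star (m * f)) ((m * f) * d),
        mul_assoc (star d) (star (m * f)) (d * (m * f)), key1]
    rw [star_sub, star_mul (m * f) d, star_mul d (m * f), sub_mul, mul_sub, mul_sub, k1, key2]
    simp [sub_self]
  have h1 : (m * f) * d - d * (m * f) = 0 := by
    have h2 : ‖(m * f) * d - d * (m * f)‖ * ‖(m * f) * d - d * (m * f)‖ = 0 := by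
      rw [← CStarRing.norm_star_mul_self, h0, norm_zero]
    exact norm_eq_zero.mp (mul_self_eq_zero.mp h2)
  exact sub_eq_zero.mp h1



/-- Let `(A,D)` be a `Γ`-Cartan pair with `Δ = E ∘ Φ₀` the faithful conditional expectation `A → D`.  If `n` is a homogeneous normalizer of `D` and `x ∈ X = D̂` satisfies `Δ(n)(x) ≠ 0`, then `x` lies in the interior of the set of fixed points of the partial homeomorphism `α_n`, and there exists `h ∈ D` with `h(x) = 1` and `nh = hn ∈ D`. -/
theorem gamma_cartan_stmt9
    {A : Type*} [NormedRing A] [StarRing A] [CStarRing A] [NormedAlgebra ℂ A]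
    [CompleteSpace A] [StarModule ℂ A] [PartialOrder A] [StarOrderedRing A]
    {Γ : Type*} [AddCommGroup Γ]
    -- `A` is topologically graded by `Γ` (with linearly independent graded subspaces):
    (Agr : Γ → Submodule ℂ A)
    (hgr_closed : ∀ t, IsClosed (Agr t : Set A))
    (hgr_mul : ∀ s t : Γ, ∀ a ∈ Agr t, ∀ b ∈ Agr s, a * b ∈ Agr (t + s))
    (hgr_star : ∀ t : Γ, ∀ a ∈ Agr t, star a ∈ Agr (-t))
    (hgr_indep : iSupIndep Agr)
    (hgr_dense : Dense (↑(⨆ t, Agr t) : Set A))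
    -- with a faithful conditional expectation `E0 = Φ₀` onto the degree-zero subspace `A₀`:
    (E0 : A →ₗ[ℂ] A)
    (hE0mem : ∀ a, E0 a ∈ Agr 0)
    (hE0fix : ∀ a ∈ Agr 0, E0 a = a)
    (hE0t : ∀ t : Γ, t ≠ 0 → ∀ a ∈ Agr t, E0 a = 0)
    (hE0star : ∀ a, E0 (star a) = star (E0 a))
    (hE0contr : ∀ a, ‖E0 a‖ ≤ ‖a‖)
    (hE0pos : ∀ a : A, 0 ≤ a → 0 ≤ E0 a)
    (hE0bimod : ∀ a : A, ∀ b ∈ Agr 0, E0 (b * a) = b * E0 a ∧ E0 (a * b) = E0 a * b)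
    (hE0faith : ∀ a : A, E0 (star a * a) = 0 → a = 0)
    -- `D` is a Cartan subalgebra of `A₀`: a closed abelian *-subalgebra,
    (D : StarSubalgebra ℂ A)
    (hD0 : (D : Set A) ⊆ (Agr 0 : Set A))
    (hDclosed : IsClosed (D : Set A))
    (hDcomm : ∀ d ∈ D, ∀ e ∈ D, d * e = e * d)
    -- maximal abelian in `A₀`,
    (hDmasa : ∀ a ∈ Agr 0, (∀ d ∈ D, a * d = d * a) → a ∈ D)
    -- containing an approximate unit for `A₀`,
    (hDau : ∃ (ι : Type) (l : Filter ι) (e : ι → A), l.NeBot ∧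
      (∀ i, e i ∈ D ∧ 0 ≤ e i ∧ ‖e i‖ ≤ 1) ∧
      ∀ a ∈ Agr 0, Filter.Tendsto (fun i => e i * a) l (nhds a) ∧
        Filter.Tendsto (fun i => a * e i) l (nhds a))
    -- whose normalizers in `A₀` generate `A₀`,
    (hD0gen : ∀ a ∈ Agr 0, a ∈ closure (↑(Submodule.span ℂ
      {n : A | n ∈ Agr 0 ∧ ∀ d ∈ D, n * d * star n ∈ D ∧ star n * d * n ∈ D}) : Set A))
    -- with a faithful conditional expectation `ED = E` of `A₀` onto `D`:
    (ED : A →ₗ[ℂ] A)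
    (hEDmem : ∀ a, ED a ∈ D)
    (hEDfix : ∀ d ∈ D, ED d = d)
    (hEDstar : ∀ a, ED (star a) = star (ED a))
    (hEDcontr : ∀ a, ‖ED a‖ ≤ ‖a‖)
    (hEDpos : ∀ a : A, 0 ≤ a → 0 ≤ ED a)
    (hEDbimod : ∀ a : A, ∀ d ∈ D, ED (d * a) = d * ED a ∧ ED (a * d) = ED a * d)
    (hEDfaith : ∀ a ∈ Agr 0, ED (star a * a) = 0 → a = 0)
    -- and the normalizers `N(A,D)` of `D` in `A` densely span `A`:
    (hNdense : Dense (↑(Submodule.span ℂ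
      {n : A | ∀ d ∈ D, n * d * star n ∈ D ∧ star n * d * n ∈ D}) : Set A))
    -- `X = D̂` is the Gelfand spectrum of `D`, realized via the evaluation map `ev`:
    {X : Type*} [TopologicalSpace X] [T2Space X] [LocallyCompactSpace X]
    (ev : X → A → ℂ)
    (hev_cont : ∀ d ∈ D, Continuous fun x : X => ev x d)
    (hev_add : ∀ (x : X), ∀ d ∈ D, ∀ e ∈ D, ev x (d + e) = ev x d + ev x e)
    (hev_smul : ∀ (x : X) (c : ℂ), ∀ d ∈ D, ev x (c • d) = c * ev x d)
    (hev_mul : ∀ (x : X), ∀ d ∈ D, ∀ e ∈ D, ev x (d * e) = ev x d * ev x e)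
    (hev_star : ∀ (x : X), ∀ d ∈ D, ev x (star d) = starRingEnd ℂ (ev x d))
    (hev_sep : ∀ d ∈ D, (∀ x : X, ev x d = 0) → d = 0)
    (hev_ne : ∀ x : X, ∃ d ∈ D, ev x d ≠ 0)
    (hev_inj : ∀ x y : X, (∀ d ∈ D, ev x d = ev y d) → x = y)
    (hev_full : ∀ φ : A → ℂ, (∃ d ∈ D, φ d ≠ 0) →
      (∀ d ∈ D, ∀ e ∈ D, φ (d * e) = φ d * φ e) →
      (∀ d ∈ D, ∀ e ∈ D, φ (d + e) = φ d + φ e) →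
      (∀ (c : ℂ), ∀ d ∈ D, φ (c • d) = c * φ d) →
      (∀ d ∈ D, ‖φ d‖ ≤ ‖d‖) → ∃ x : X, ∀ d ∈ D, φ d = ev x d)
    (hev_top : Topology.IsInducing fun x : X => (fun d : D => ev x ↑d))
    -- `n` is a homogeneous normalizer of `D`:
    (n : A) (t : Γ) (hnt : n ∈ Agr t)
    (hn : ∀ d ∈ D, n * d * star n ∈ D ∧ star n * d * n ∈ D)
    -- `α` is the partial homeomorphism `α_n` induced by `n` on `dom(n) = {x | (n*n)(x) > 0}`:
    (α : X → X)
    (hα : ∀ x : X, ev x (star n * n) ≠ 0 → ∀ d ∈ D,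
      ev x (star n * d * n) = ev (α x) d * ev x (star n * n))
    -- `x` satisfies `Δ(n)(x) ≠ 0`, where `Δ = ED ∘ E0`:
    (x : X) (hx : ev x (ED (E0 n)) ≠ 0) :
    x ∈ interior {y : X | ev y (star n * n) ≠ 0 ∧ α y = y} ∧
    ∃ h ∈ D, ev x h = 1 ∧ n * h = h * n ∧ n * h ∈ D := by
  
  rcases eq_or_ne t 0 with ht | ht
  · subst ht
    -- basic memberships
    have h1D : (1 : A) ∈ D := one_mem D
    have hcD : star n * n ∈ D := by simpa using (hn 1 h1D).2
    have hc'D : n * star n ∈ D := by simpa using (hn 1 h1D).1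
    have heD : ∀ d ∈ D, star n * d * n ∈ D := fun d hd => (hn d hd).2
    have he'D : ∀ d ∈ D, n * d * star n ∈ D := fun d hd => (hn d hd).1
    rw [hE0fix n hnt] at hx
    set b := ED n with hbdef
    have hbD : b ∈ D := hEDmem n
    have hb : ev x b ≠ 0 := hx
    have hn0 : n ∈ Agr 0 := hnt
    have hsn0 : star n ∈ Agr (0 : Γ) := by simpa using hgr_star 0 n hn0
    have hb0 : b ∈ Agr 0 := hD0 hbD
    -- the key algebraic identity II
    have hII : ∀ d ∈ D, b * (star n * d * n) = d * (b * (star n * n)) := by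
      intro d hd
      have hI : n * (star n * d * n) = d * (n * (star n * n)) := by
        calc n * (star n * d * n) = n * (star n * (d * n)) := by rw [mul_assoc (star n) d n]
          _ = (n * star n) * (d * n) := by rw [← mul_assoc n (star n) (d * n)]
          _ = ((n * star n) * d) * n := by rw [mul_assoc (n * star n) d n]
          _ = (d * (n * star n)) * n := by rw [hDcomm _ hc'D d hd]
          _ = d * ((n * star n) * n) := by rw [mul_assoc d (n * star n) n]
          _ = d * (n * (star n * n)) := by rw [mul_assoc n (star n) n]
      have h : ED (n * (star n * d * n)) = ED (d * (n * (star n * n))) := by rw [hI]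
      rw [(hEDbimod n _ (heD d hd)).2, (hEDbimod (n * (star n * n)) d hd).1,
        (hEDbimod n _ hcD).2, ← hbdef] at h
      exact h
    -- mirrored identity II'
    have hII' : ∀ d ∈ D, star b * (n * d * star n) = d * (star b * (n * star n)) := by
      intro d hd
      have hI' : star n * (n * d * star n) = d * (star n * (n * star n)) := by
        calc star n * (n * d * star n) = star n * (n * (d * star n)) := by
              rw [mul_assoc n d (star n)]
          _ = (star n * n) * (d * star n) := by rw [← mul_assoc (star n) n (d * star n)]
          _ = ((star n * n) * d) * star n := by rw [mul_assoc (star n * n) d (star n)]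
          _ = (d * (star n * n)) * star n := by rw [hDcomm _ hcD d hd]
          _ = d * ((star n * n) * star n) := by rw [mul_assoc d (star n * n) (star n)]
          _ = d * (star n * (n * star n)) := by rw [mul_assoc (star n) n (star n)]
      have h : ED (star n * (n * d * star n)) = ED (d * (star n * (n * star n))) := by rw [hI']
      rw [(hEDbimod (star n) _ (he'D d hd)).2, (hEDbimod (star n * (n * star n)) d hd).1,
        (hEDbimod (star n) _ hc'D).2, hEDstar n, ← hbdef] at h
      exact h
    -- `n * b` lies in `D` and equals `b * b`
    have hnbcomm : ∀ d ∈ D, (n * b) * d = d * (n * b) := fun d hd =>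
      keyL (D : Set A) hDcomm (fun p hp q hq => mul_mem hp hq) (fun p hp => star_mem hp)
        n b hbD heD hcD hII d hd
    have hnb0 : n * b ∈ Agr (0 : Γ) := by simpa using hgr_mul 0 0 n hn0 b hb0
    have hnbD : n * b ∈ D := hDmasa _ hnb0 hnbcomm
    have hnb : n * b = b * b := by
      have h1 := hEDfix _ hnbD
      rw [(hEDbimod n b hbD).2, ← hbdef] at h1
      exact h1.symm
    -- pointwise nonvanishing of n* n at x
    have hkey : star b * ((star n * n) * b) = (star b * star b) * (b * b) := by
      calc star b * ((star n * n) * b) = star b * (star n * (n * b)) := by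
            rw [mul_assoc (star n) n b]
        _ = (star b * star n) * (n * b) := by rw [← mul_assoc (star b) (star n) (n * b)]
        _ = star (n * b) * (n * b) := by rw [star_mul]
        _ = star (b * b) * (b * b) := by rw [hnb]
        _ = (star b * star b) * (b * b) := by rw [star_mul]
    have hbconj : (starRingEnd ℂ) (ev x b) ≠ 0 := fun hcc =>
      hb (by rw [← Complex.conj_conj (ev x b), hcc, map_zero])
    have hR1 : ev x (star n * n) ≠ 0 := by
      intro h0
      have h5 : ev x (star b * ((star n * n) * b)) = ev x ((star b * star b) * (b * b)) := by
        rw [hkey]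
      rw [hev_mul x _ (star_mem hbD) _ (mul_mem hcD hbD),
        hev_mul x _ hcD b hbD,
        hev_mul x _ (mul_mem (star_mem hbD) (star_mem hbD)) _ (mul_mem hbD hbD),
        hev_mul x _ (star_mem hbD) _ (star_mem hbD),
        hev_mul x b hbD b hbD,
        hev_star x b hbD, h0, zero_mul, mul_zero] at h5
      exact (mul_ne_zero (mul_ne_zero hbconj hbconj) (mul_ne_zero hb hb)) h5.symm
    -- fixed points on the open set
    have hfix : ∀ y : X, ev y (star n * n) ≠ 0 → ev y b ≠ 0 → α y = y := by
      intro y h1 h2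
      refine hev_inj (α y) y (fun d hd => ?_)
      have h3 : ev y (b * (star n * d * n)) = ev y (d * (b * (star n * n))) := by
        rw [hII d hd]
      rw [hev_mul y b hbD _ (heD d hd), hα y h1 d hd,
        hev_mul y d hd _ (mul_mem hbD hcD), hev_mul y b hbD _ hcD] at h3
      have h4 : ev (α y) d * (ev y b * ev y (star n * n))
          = ev y d * (ev y b * ev y (star n * n)) := by ring_nf; ring_nf at h3; linear_combination h3
      exact mul_right_cancel₀ (mul_ne_zero h2 h1) h4
    have hUopen : IsOpen {y : X | ev y (star n * n) ≠ 0 ∧ ev y b ≠ 0} := by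
      have o1 : IsOpen {y : X | ev y (star n * n) ≠ 0} :=
        isOpen_compl_singleton.preimage (hev_cont _ hcD)
      have o2 : IsOpen {y : X | ev y b ≠ 0} :=
        isOpen_compl_singleton.preimage (hev_cont _ hbD)
      exact o1.inter o2
    have hsub : {y : X | ev y (star n * n) ≠ 0 ∧ ev y b ≠ 0}
        ⊆ {y : X | ev y (star n * n) ≠ 0 ∧ α y = y} :=
      fun y hy => ⟨hy.1, hfix y hy.1 hy.2⟩
    -- the element f = b b*
    set f := b * star b with hfdef
    have hfD : f ∈ D := mul_mem hbD (star_mem hbD)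
    have hPf : ∀ d ∈ D, f * (star n * d * n) = d * (f * (star n * n)) := by
      intro d hd
      calc f * (star n * d * n) = (b * star b) * (star n * d * n) := by rw [hfdef]
        _ = (star b * b) * (star n * d * n) := by rw [hDcomm b hbD (star b) (star_mem hbD)]
        _ = star b * (b * (star n * d * n)) := by rw [mul_assoc (star b) b (star n * d * n)]
        _ = star b * (d * (b * (star n * n))) := by rw [hII d hd]
        _ = (star b * d) * (b * (star n * n)) := by
              rw [← mul_assoc (star b) d (b * (star n * n))]
        _ = (d * star b) * (b * (star n * n)) := by rw [hDcomm (star b) (star_mem hbD) d hd]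
        _ = d * (star b * (b * (star n * n))) := by rw [mul_assoc d (star b) (b * (star n * n))]
        _ = d * ((star b * b) * (star n * n)) := by rw [← mul_assoc (star b) b (star n * n)]
        _ = d * ((b * star b) * (star n * n)) := by rw [hDcomm (star b) (star_mem hbD) b hbD]
        _ = d * (f * (star n * n)) := by rw [← hfdef]
    have hP'f : ∀ d ∈ D, f * (n * d * star n) = d * (f * (n * star n)) := by
      intro d hd
      calc f * (n * d * star n) = (b * star b) * (n * d * star n) := by rw [hfdef]
        _ = b * (star b * (n * d * star n)) := by rw [mul_assoc b (star b) (n * d * star n)]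
        _ = b * (d * (star b * (n * star n))) := by rw [hII' d hd]
        _ = (b * d) * (star b * (n * star n)) := by
              rw [← mul_assoc b d (star b * (n * star n))]
        _ = (d * b) * (star b * (n * star n)) := by rw [hDcomm b hbD d hd]
        _ = d * (b * (star b * (n * star n))) := by rw [mul_assoc d b (star b * (n * star n))]
        _ = d * ((b * star b) * (n * star n)) := by rw [← mul_assoc b (star b) (n * star n)]
        _ = d * (f * (n * star n)) := by rw [← hfdef]
    have hnfcomm : ∀ d ∈ D, (n * f) * d = d * (n * f) := fun d hd =>
      keyL (D : Set A) hDcomm (fun p hp q hq => mul_mem hp hq) (fun p hp => star_mem hp)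
        n f hfD heD hcD hPf d hd
    have hnf0 : n * f ∈ Agr (0 : Γ) := by simpa using hgr_mul 0 0 n hn0 f (hD0 hfD)
    have hnfD : n * f ∈ D := hDmasa _ hnf0 hnfcomm
    have hnf : n * f = b * f := by
      have h1 := hEDfix _ hnfD
      rw [(hEDbimod n f hfD).2, ← hbdef] at h1
      exact h1.symm
    have hsnfcomm : ∀ d ∈ D, (star n * f) * d = d * (star n * f) := fun d hd =>
      keyL (D : Set A) hDcomm (fun p hp q hq => mul_mem hp hq) (fun p hp => star_mem hp)
        (star n) f hfD
        (fun e he_ => by rw [star_star]; exact he'D e he_)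
        (by rw [star_star]; exact hc'D)
        (fun e he_ => by rw [star_star]; exact hP'f e he_) d hd
    have hsnf0 : star n * f ∈ Agr (0 : Γ) := by
      simpa using hgr_mul 0 0 (star n) hsn0 f (hD0 hfD)
    have hsnfD : star n * f ∈ D := hDmasa _ hsnf0 hsnfcomm
    have hsnf : star n * f = star b * f := by
      have h1 := hEDfix _ hsnfD
      rw [(hEDbimod (star n) f hfD).2, hEDstar n, ← hbdef] at h1
      exact h1.symm
    have hstarf : star f = f := by rw [hfdef, star_mul, star_star]
    have hfn : f * n = f * b := by
      have h3 : f * n = star (star n * f) := by rw [star_mul, star_star, hstarf]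
      rw [h3, hsnf, star_mul, hstarf, star_star]
    have hcommnf : n * f = f * n := by rw [hnf, hfn, hDcomm b hbD f hfD]
    -- conclude
    constructor
    · exact interior_maximal hsub hUopen ⟨hR1, hb⟩
    · have hevf : ev x f = ev x b * (starRingEnd ℂ) (ev x b) := by
        rw [hfdef, hev_mul x b hbD _ (star_mem hbD), hev_star x b hbD]
      have hfne : ev x f ≠ 0 := by rw [hevf]; exact mul_ne_zero hb hbconj
      refine ⟨(ev x f)⁻¹ • f, ?_, ?_, ?_, ?_⟩
      · exact SMulMemClass.smul_mem _ hfD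
      · rw [hev_smul x _ f hfD, inv_mul_cancel₀ hfne]
      · rw [mul_smul_comm, smul_mul_assoc, hcommnf]
      · rw [mul_smul_comm]
        exact SMulMemClass.smul_mem _ hnfD
  · exfalso
    have h1 : E0 n = 0 := hE0t t ht n hnt
    have h2 := hev_smul x 0 0 (zero_mem D)
    rw [zero_smul, zero_mul] at h2
    exact hx (by rw [h1, map_zero, h2])
end

section
/- Let (A,D) be a Γ-Cartan pair with faithful conditional expectation Δ : A → D. Then for every homogeneous normalizer n of D and every a ∈ A, n*Δ(a)n = Δ(n*an). -/
/-!
Conjugation by a homogeneous `n` preserves every degree, so `Φ₀` commutes with it, and since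
normalizers of `D` in `A₀` densely span `A₀` it remains to show `E(n⋆ m n) = n⋆ E(m) n` for such
normalizers `m`. We test elements of `D` against the states `χ ∘ E`, `χ` a character of `D`.
A normalizer `m` acts on characters by `χ ↦ χ(m⋆ · m) / χ(m⋆m)`, and the Kadison–Schwarz inequality
`E(x)⋆ z E(x) ≤ E(x⋆ z x)` shows that this action fixes `χ` as soon as `χ(E m) ≠ 0`, and also as
soon as `χ(n E(n⋆ m n) n⋆) ≠ 0`. At such fixed characters `m` commutes with `D`, so maximality of
`D` in `A₀` gives `(m - E m) n c⋆ n⋆ = 0` for the defect `c = E(n⋆ m n) - n⋆ E(m) n`; evaluating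
`n⋆ (m - E m) n c⋆ n⋆ n = 0` at every character then forces `c = 0`.
-/

open scoped ComplexOrder

lemma Complex.eq_zero_of_conj_mul_self_nonpos {z : ℂ} (h : starRingEnd ℂ z * z ≤ 0) : z = 0 :=
  (CStarRing.star_mul_self_eq_zero_iff z).mp (le_antisymm h (star_mul_self_nonneg z))

namespace GammaCartan

section Normalizer

variable {A : Type*} [Ring A] [StarRing A] [Algebra ℂ A] [StarModule ℂ A]

def IsNormalizer (D : StarSubalgebra ℂ A) (v : A) : Prop :=
  ∀ d ∈ D, v * d * star v ∈ D ∧ star v * d * v ∈ D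

namespace IsNormalizer

variable {D : StarSubalgebra ℂ A} {v w : A}

lemma star_mul_mul_mem (hv : IsNormalizer D v) {d : A} (hd : d ∈ D) : star v * d * v ∈ D :=
  (hv d hd).2

lemma mul_mul_star_mem (hv : IsNormalizer D v) {d : A} (hd : d ∈ D) : v * d * star v ∈ D :=
  (hv d hd).1

lemma star_mul_self_mem (hv : IsNormalizer D v) : star v * v ∈ D := by
  simpa using hv.star_mul_mul_mem (one_mem D)

lemma mul_star_self_mem (hv : IsNormalizer D v) : v * star v ∈ D := by
  simpa using hv.mul_mul_star_mem (one_mem D)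

lemma of_mem {d : A} (hd : d ∈ D) : IsNormalizer D d := fun _ he =>
  ⟨mul_mem (mul_mem hd he) (star_mem hd), mul_mem (mul_mem (star_mem hd) he) hd⟩

protected lemma star (hv : IsNormalizer D v) : IsNormalizer D (star v) := fun d hd => by
  simpa using (hv d hd).symm

protected lemma mul (hv : IsNormalizer D v) (hw : IsNormalizer D w) : IsNormalizer D (v * w) :=
  fun d hd => by
    simp only [star_mul, ← mul_assoc]
    refine ⟨?_, ?_⟩
    · simpa only [mul_assoc] using hv.mul_mul_star_mem (hw.mul_mul_star_mem hd)
    · simpa only [mul_assoc] using hw.star_mul_mul_mem (hv.star_mul_mul_mem hd)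

lemma star_mul_mul_mul_star_mul_mul (hD : ∀ d ∈ D, ∀ e ∈ D, d * e = e * d)
    (hv : IsNormalizer D v) {z w : A} (hz : z ∈ D) :
    (star v * z * v) * (star v * w * v) = (star v * v) * (star v * (z * w) * v) := by
  calc (star v * z * v) * (star v * w * v) = star v * (z * (v * star v)) * w * v := by noncomm_ring
    _ = star v * ((v * star v) * z) * w * v := by rw [hD z hz _ hv.mul_star_self_mem]
    _ = (star v * v) * (star v * (z * w) * v) := by noncomm_ring

end IsNormalizer

end Normalizer

structure IsCondExp {A : Type*} [Ring A] [StarRing A] [Algebra ℂ A] [StarModule ℂ A]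
    [PartialOrder A] (D : StarSubalgebra ℂ A) (E : A →ₗ[ℂ] A) : Prop where
  mem : ∀ a, E a ∈ D
  apply_of_mem : ∀ d ∈ D, E d = d
  apply_star : ∀ a, E (star a) = star (E a)
  nonneg : ∀ a, 0 ≤ a → 0 ≤ E a
  mul_left : ∀ a, ∀ d ∈ D, E (d * a) = d * E a
  mul_right : ∀ a, ∀ d ∈ D, E (a * d) = E a * d

namespace IsCondExp

section Algebraic

variable {A : Type*} [Ring A] [StarRing A] [Algebra ℂ A] [StarModule ℂ A] [PartialOrder A]
  {D : StarSubalgebra ℂ A} {E : A →ₗ[ℂ] A}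

lemma apply_star_mul_mul (hE : IsCondExp D E) {v z : A} (hv : IsNormalizer D v) (hz : z ∈ D) :
    E (star v * z * v) = star v * z * v :=
  hE.apply_of_mem _ (hv.star_mul_mul_mem hz)

lemma mul_eq_apply_mul (hE : IsCondExp D E) (hD : ∀ d ∈ D, ∀ e ∈ D, d * e = e * d)
    {B : Subalgebra ℂ A} (hDB : D.toSubalgebra ≤ B)
    (hmasa : ∀ a ∈ B, (∀ d ∈ D, a * d = d * a) → a ∈ D) {m e : A}
    (hm : m ∈ B) (he : e ∈ D) (h : ∀ d ∈ D, (d * m - m * d) * e = 0) : m * e = E m * e := by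
  have hme : m * e ∈ D := by
    refine hmasa _ (mul_mem hm (hDB he)) fun d hd => ?_
    have hcomm := h d hd
    rw [sub_mul, sub_eq_zero] at hcomm
    rw [mul_assoc, hD e he d hd, ← mul_assoc, ← hcomm, mul_assoc]
  rw [← hE.mul_right m e he, hE.apply_of_mem _ hme]

/-- Kadison–Schwarz: apply `E` to `(x - E x)⋆ z (x - E x) ≥ 0`. -/
lemma star_mul_mul_le [StarOrderedRing A] (hE : IsCondExp D E) (x : A) {z : A} (hz : z ∈ D)
    (hz0 : 0 ≤ z) : star (E x) * z * E x ≤ E (star x * z * x) := by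
  have hx := hE.mem x
  have h := hE.nonneg _ (star_left_conjugate_nonneg hz0 (x - E x))
  have hexp : star (x - E x) * z * (x - E x) = star x * z * x - star x * z * E x
      - (star (E x) * z * x - star (E x) * z * E x) := by
    simp only [star_sub]; noncomm_ring
  rw [hexp, map_sub, map_sub, map_sub, hE.mul_right _ _ hx, hE.mul_right _ _ hz,
    hE.apply_star, hE.mul_left _ _ (mul_mem (star_mem hx) hz),
    hE.apply_of_mem _ (mul_mem (mul_mem (star_mem hx) hz) hx), sub_self, sub_zero] at h
  exact sub_nonneg.mp h

end Algebraic

section State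

open WeakDual

variable {A : Type*} [CStarAlgebra A] [PartialOrder A] {D : StarSubalgebra ℂ A}
  [IsClosed (D : Set A)] {E : A →ₗ[ℂ] A}

noncomputable def state (hE : IsCondExp D E) (χ : characterSpace ℂ D) : A →ₗ[ℂ] ℂ where
  toFun a := χ ⟨E a, hE.mem a⟩
  map_add' a b := by
    rw [← map_add]; congr 1; exact Subtype.ext (map_add E a b)
  map_smul' c a := by
    rw [RingHom.id_apply, smul_eq_mul, ← smul_eq_mul, ← map_smul]; congr 1
    exact Subtype.ext (map_smul E c a)

variable (hE : IsCondExp D E) (χ : characterSpace ℂ D)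

lemma state_of_mem {d : A} (hd : d ∈ D) : hE.state χ d = χ ⟨d, hd⟩ := by
  simp only [state, LinearMap.coe_mk, AddHom.coe_mk, hE.apply_of_mem d hd]

lemma state_apply (a : A) : hE.state χ (E a) = hE.state χ a := by
  rw [state_of_mem hE χ (hE.mem a)]; rfl

lemma state_mul_left (a : A) {d : A} (hd : d ∈ D) :
    hE.state χ (d * a) = hE.state χ d * hE.state χ a := by
  rw [state_of_mem hE χ hd]
  change χ ⟨E (d * a), _⟩ = χ ⟨d, hd⟩ * χ ⟨E a, _⟩
  rw [← map_mul]; congr 1; exact Subtype.ext (hE.mul_left a d hd)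

lemma state_mul_right (a : A) {d : A} (hd : d ∈ D) :
    hE.state χ (a * d) = hE.state χ a * hE.state χ d := by
  rw [state_of_mem hE χ hd]
  change χ ⟨E (a * d), _⟩ = χ ⟨E a, _⟩ * χ ⟨d, hd⟩
  rw [← map_mul]; congr 1; exact Subtype.ext (hE.mul_right a d hd)

lemma state_one : hE.state χ 1 = 1 := by
  rw [state_of_mem hE χ (one_mem D)]; exact map_one χ

lemma state_star (a : A) : hE.state χ (star a) = starRingEnd ℂ (hE.state χ a) := by
  have h : (⟨E (star a), hE.mem _⟩ : D) = star ⟨E a, hE.mem a⟩ := Subtype.ext (hE.apply_star a)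
  simp only [state, LinearMap.coe_mk, AddHom.coe_mk]
  rw [h, map_star]; rfl

lemma state_star_mul_mul {e : A} (he : e ∈ D) (a : A) :
    hE.state χ (star e * a * e)
      = starRingEnd ℂ (hE.state χ e) * hE.state χ a * hE.state χ e := by
  rw [hE.state_mul_right χ _ he, hE.state_mul_left χ _ (star_mem he), hE.state_star]

lemma state_star_mul_mul_mul (hD : ∀ d ∈ D, ∀ e ∈ D, d * e = e * d) {m z w : A}
    (hm : IsNormalizer D m) (hz : z ∈ D) :
    hE.state χ (star m * z * m) * hE.state χ (star m * w * m)
      = hE.state χ (star m * m) * hE.state χ (star m * (z * w) * m) := by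
  rw [← hE.state_mul_left χ _ (hm.star_mul_mul_mem hz),
    ← hE.state_mul_left χ _ hm.star_mul_self_mem, hm.star_mul_mul_mul_star_mul_mul hD hz]

lemma eq_zero_of_forall_state_eq_zero (hD : ∀ d ∈ D, ∀ e ∈ D, d * e = e * d) {z : A}
    (hz : z ∈ D) (h : ∀ χ, hE.state χ z = 0) : z = 0 := by
  let _ : CommCStarAlgebra D :=
    { (inferInstance : CStarAlgebra D) with mul_comm := fun a b => Subtype.ext (hD a a.2 b b.2) }
  suffices h0 : (⟨z, hz⟩ : D) = 0 from congrArg Subtype.val h0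
  refine (gelfandTransform_isometry D).injective ?_
  ext χ
  simpa [hE.state_of_mem χ hz] using h χ

variable [StarOrderedRing A]

lemma state_nonneg {a : A} (ha : 0 ≤ a) : 0 ≤ hE.state χ a := by
  have h := AlgHom.apply_mem_spectrum χ ⟨E a, hE.mem a⟩
  rw [StarSubalgebra.spectrum_eq] at h
  exact spectrum_nonneg_of_nonneg (hE.nonneg a ha) h

lemma state_mono {a b : A} (h : a ≤ b) : hE.state χ a ≤ hE.state χ b := by
  simpa using hE.state_nonneg χ (sub_nonneg.mpr h)

lemma state_star_mul_mul_le (x : A) {z : A} (hz : z ∈ D) (hz0 : 0 ≤ z) :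
    starRingEnd ℂ (hE.state χ x) * hE.state χ z * hE.state χ x
      ≤ hE.state χ (star x * z * x) := by
  have h := hE.state_mono χ (hE.star_mul_mul_le x hz hz0)
  rwa [hE.state_star_mul_mul χ (hE.mem x), hE.state_apply, hE.state_apply] at h

lemma state_mul_eq_zero {n : A} (hn : hE.state χ (star n * n) = 0) (x : A) :
    hE.state χ (x * n) = 0 := by
  have hle : star n * (star x * x) * n ≤ (‖x‖ ^ 2) • (star n * n) := by
    have := star_left_conjugate_le_conjugate
      (CStarAlgebra.star_mul_le_algebraMap_norm_sq (a := x)) n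
    rwa [Algebra.algebraMap_eq_smul_one, mul_smul_one, smul_mul_assoc] at this
  have h := (hE.state_star_mul_mul_le χ (x * n) (one_mem D) zero_le_one).trans
    ((hE.state_mono χ (by simpa [star_mul, mul_assoc] using hle)).trans_eq
      (by rw [LinearMap.map_smul_of_tower, hn, smul_zero]))
  rw [hE.state_one, mul_one] at h
  exact Complex.eq_zero_of_conj_mul_self_nonpos h

end State

end IsCondExp

section Fixed

variable {A : Type*} [CStarAlgebra A] [PartialOrder A]
  {D : StarSubalgebra ℂ A} [IsClosed (D : Set A)] {E : A →ₗ[ℂ] A}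

/-- The character `χ` of `D` underlying the state `φ = χ ∘ E` is fixed by the action
`χ ↦ χ(m⋆ · m) / χ(m⋆m)` of the normalizer `m`, or lies outside its domain `χ(m⋆m) ≠ 0`. -/
def IsFixedBy (D : StarSubalgebra ℂ A) (φ : A →ₗ[ℂ] ℂ) (m : A) : Prop :=
  ∀ z ∈ D, φ (star m * z * m) = φ (star m * m) * φ z

namespace IsCondExp

section

variable (hE : IsCondExp D E) (χ : WeakDual.characterSpace ℂ D)

lemma isFixedBy_of_isFixedBy_mul_mul (hD : ∀ d ∈ D, ∀ e ∈ D, d * e = e * d) {m p : A}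
    (hm : IsNormalizer D m) (hp : p ∈ D) (hfix : IsFixedBy D (hE.state χ) (p * m * p))
    (hne : hE.state χ (star (p * m * p) * (p * m * p)) ≠ 0) :
    IsFixedBy D (hE.state χ) m := by
  set φ := hE.state χ
  set ρ : A → ℂ := fun z => φ (star m * z * m)
  have hρ : ∀ z, φ (star (p * m * p) * z * (p * m * p))
      = starRingEnd ℂ (φ p) * ρ (star p * z * p) * φ p := by
    intro z
    have hconj : star (p * m * p) * z * (p * m * p)
        = star p * (star m * (star p * z * p) * m) * p := by
      simp only [star_mul]; noncomm_ring
    rw [hconj, hE.state_star_mul_mul χ hp]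
  have hmul : ∀ {z w}, z ∈ D → ρ z * ρ w = φ (star m * m) * ρ (z * w) := fun hz =>
    hE.state_star_mul_mul_mul χ hD hm hz
  have hpp : star (p * m * p) * (p * m * p) = star (p * m * p) * 1 * (p * m * p) := by
    rw [mul_one]
  rw [hpp, hρ, mul_one] at hne
  have hp0 : starRingEnd ℂ (φ p) * φ p ≠ 0 := by
    intro h; apply hne; linear_combination ρ (star p * p) * h
  have hρpp : ρ (star p * p) ≠ 0 := fun h => hne (by rw [h]; ring)
  have hξ : φ (star m * m) ≠ 0 := by
    intro h
    have := hmul (w := star p * p) (mul_mem (star_mem hp) hp)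
    rw [h, zero_mul] at this
    exact hρpp (mul_self_eq_zero.mp this)
  intro z hz
  have hfz := hfix z hz
  rw [hρ, hpp, hρ, mul_one] at hfz
  have h4 : ρ (star p * z * p) = ρ (star p * p) * φ z :=
    mul_left_cancel₀ hp0 (by linear_combination hfz)
  have h1 := hmul (w := z) (star_mem hp)
  have h2 := hmul (w := p) (mul_mem (star_mem hp) hz)
  have h3 := hmul (w := p) (star_mem hp)
  refine mul_left_cancel₀ (mul_ne_zero hξ hρpp) ?_
  show φ (star m * m) * ρ (star p * p) * ρ z = _
  linear_combination (-ρ z) * h3 + ρ p * h1 + φ (star m * m) * h2 + φ (star m * m) ^ 2 * h4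

lemma commutator_mul_eq_zero (hD : ∀ d ∈ D, ∀ e ∈ D, d * e = e * d) {m e d : A}
    (hm : IsNormalizer D m) (he : e ∈ D)
    (hfix : ∀ χ, hE.state χ e ≠ 0 → IsFixedBy D (hE.state χ) m) (hd : d ∈ D) :
    (d * m - m * d) * e = 0 := by
  have hN : star (d * m - m * d) * (d * m - m * d) = star m * (star d * d) * m
      - star m * star d * m * d - star d * (star m * d * m) + star d * (star m * m) * d := by
    simp only [star_sub, star_mul]; noncomm_ring
  have hND : star (d * m - m * d) * (d * m - m * d) ∈ D := by
    rw [hN]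
    refine add_mem (sub_mem (sub_mem ?_ ?_) ?_) ?_
    · exact hm.star_mul_mul_mem (mul_mem (star_mem hd) hd)
    · exact mul_mem (hm.star_mul_mul_mem (star_mem hd)) hd
    · exact mul_mem (star_mem hd) (hm.star_mul_mul_mem hd)
    · exact mul_mem (mul_mem (star_mem hd) hm.star_mul_self_mem) hd
  rw [← CStarRing.star_mul_self_eq_zero_iff]
  have hxx : star ((d * m - m * d) * e) * ((d * m - m * d) * e)
      = star e * (star (d * m - m * d) * (d * m - m * d)) * e := by
    simp only [star_mul]; noncomm_ring
  rw [hxx]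
  refine hE.eq_zero_of_forall_state_eq_zero hD (mul_mem (mul_mem (star_mem he) hND) he)
    fun χ => ?_
  rw [hE.state_star_mul_mul χ he]
  by_cases h0 : hE.state χ e = 0
  · rw [h0, mul_zero]
  have hfχ := hfix χ h0
  have t1 := hfχ _ (mul_mem (star_mem hd) hd)
  have t2 := hfχ _ (star_mem hd)
  have t3 := hfχ _ hd
  rw [hE.state_mul_left χ _ (star_mem hd)] at t1
  rw [hN, map_add, map_sub, map_sub, t1, hE.state_mul_right χ _ hd, t2,
    hE.state_mul_left χ _ (star_mem hd), t3, hE.state_mul_right χ _ hd,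
    hE.state_mul_left χ _ (star_mem hd)]
  ring

variable [StarOrderedRing A]

/-- `χ(m⋆ · m)` is multiplicative up to the scalar `χ(m⋆m)`; were it not a multiple of `χ`, some
`u ∈ D` with `χ(u) ≠ 0` would have `χ(m⋆ u u⋆ m) = 0`, against the lower bound at `u u⋆`. -/
lemma isFixedBy_of_le (hD : ∀ d ∈ D, ∀ e ∈ D, d * e = e * d) {m e : A}
    (hm : IsNormalizer D m) (he : hE.state χ e ≠ 0)
    (hle : ∀ z ∈ D, 0 ≤ z →
      starRingEnd ℂ (hE.state χ e) * hE.state χ z * hE.state χ e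
        ≤ hE.state χ (star m * z * m)) :
    IsFixedBy D (hE.state χ) m ∧ hE.state χ (star m * m) ≠ 0 := by
  set φ := hE.state χ
  have hξ : φ (star m * m) ≠ 0 := by
    intro h0
    have h1 := hle 1 (one_mem D) zero_le_one
    rw [hE.state_one, mul_one, mul_one, h0] at h1
    exact he (Complex.eq_zero_of_conj_mul_self_nonpos h1)
  refine ⟨fun y hy => ?_, hξ⟩
  set u := φ (star m * m) • y - φ (star m * y * m) • 1 with hu_def
  have hu : u ∈ D := sub_mem (SMulMemClass.smul_mem _ hy) (SMulMemClass.smul_mem _ (one_mem D))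
  have hρu : φ (star m * u * m) = 0 := by
    simp only [hu_def, mul_sub, sub_mul, mul_smul_comm, smul_mul_assoc, mul_one, map_sub,
      map_smul, smul_eq_mul]
    ring
  have hρuu : φ (star m * (u * star u) * m) = 0 := by
    have h := hE.state_star_mul_mul_mul χ hD hm hu (w := star u)
    rw [hρu, zero_mul] at h
    exact (mul_eq_zero.mp h.symm).resolve_left hξ
  have h := hle _ (mul_mem hu (star_mem hu)) (mul_star_self_nonneg u)
  rw [hρuu, hE.state_mul_right χ _ (star_mem hu), hE.state_star] at h
  have hφu : φ e * φ u = 0 := Complex.eq_zero_of_conj_mul_self_nonpos (by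
    simpa only [map_mul, mul_comm, mul_left_comm, mul_assoc] using h)
  have hφu' : φ u = 0 := (mul_eq_zero.mp hφu).resolve_left he
  have h1 : φ 1 = 1 := hE.state_one χ
  simp only [hu_def, map_sub, map_smul, h1, smul_eq_mul, mul_one, sub_eq_zero] at hφu'
  exact hφu'.symm

lemma isFixedBy_of_state_ne_zero (hD : ∀ d ∈ D, ∀ e ∈ D, d * e = e * d) {m : A}
    (hm : IsNormalizer D m) (h : hE.state χ m ≠ 0) : IsFixedBy D (hE.state χ) m :=
  (hE.isFixedBy_of_le χ hD hm h fun _ hz hz0 => hE.state_star_mul_mul_le χ m hz hz0).1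

/-- The Kadison–Schwarz inequality for `E` at `n⋆ m n`, conjugated back by `n`, bounds
`χ((p m p)⋆ · p m p)` from below, where `p = n n⋆`. -/
lemma isFixedBy_of_state_mul_apply_mul_ne_zero (hD : ∀ d ∈ D, ∀ e ∈ D, d * e = e * d)
    {n m : A} (hn : IsNormalizer D n) (hm : IsNormalizer D m)
    (h : hE.state χ (n * E (star n * m * n) * star n) ≠ 0) : IsFixedBy D (hE.state χ) m := by
  set k := star n * m * n
  have hk : IsNormalizer D k := (hn.star.mul hm).mul hn
  have hp : n * star n ∈ D := hn.mul_star_self_mem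
  have hle : ∀ z ∈ D, 0 ≤ z → starRingEnd ℂ (hE.state χ (n * E k * star n)) * hE.state χ z *
      hE.state χ (n * E k * star n) ≤
      hE.state χ (star (n * star n * m * (n * star n)) * z
        * (n * star n * m * (n * star n))) := by
    intro z hz hz0
    have h1 := hE.star_mul_mul_le k (hn.star_mul_mul_mem hz) (star_left_conjugate_nonneg hz0 n)
    rw [hE.apply_star_mul_mul hk (hn.star_mul_mul_mem hz)] at h1
    have h2 := hE.state_mono χ (star_left_conjugate_le_conjugate h1 (star n))
    rw [← hE.state_star_mul_mul χ (hn.mul_mul_star_mem (hE.mem k))]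
    convert h2 using 2 <;> simp only [k, star_mul, star_star] <;> noncomm_ring
  have hpmp : IsNormalizer D (n * star n * m * (n * star n)) :=
    ((IsNormalizer.of_mem hp).mul hm).mul (IsNormalizer.of_mem hp)
  obtain ⟨hfix, hne⟩ := hE.isFixedBy_of_le χ hD hpmp h hle
  exact hE.isFixedBy_of_isFixedBy_mul_mul χ hD hm hp hfix hne

end

lemma apply_star_mul_mul_eq [StarOrderedRing A] (hE : IsCondExp D E)
    (hD : ∀ d ∈ D, ∀ e ∈ D, d * e = e * d) {B : Subalgebra ℂ A}
    (hDB : D.toSubalgebra ≤ B) (hmasa : ∀ a ∈ B, (∀ d ∈ D, a * d = d * a) → a ∈ D) {n m : A}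
    (hn : IsNormalizer D n) (hm : IsNormalizer D m) (hmB : m ∈ B) :
    E (star n * m * n) = star n * E m * n := by
  set c := E (star n * m * n) - star n * E m * n
  have hc : c ∈ D := sub_mem (hE.mem _) (hn.star_mul_mul_mem (hE.mem m))
  have hcE : E (star n * (m - E m) * n) = c := by
    rw [mul_sub, sub_mul, map_sub, hE.apply_star_mul_mul hn (hE.mem m)]
  have he : n * star c * star n ∈ D := hn.mul_mul_star_mem (star_mem hc)
  have hfix : ∀ χ, hE.state χ (n * star c * star n) ≠ 0 → IsFixedBy D (hE.state χ) m := by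
    intro χ h
    by_cases hm0 : hE.state χ m = 0
    · refine hE.isFixedBy_of_state_mul_apply_mul_ne_zero χ hD hn hm ?_
      have hsplit : n * E (star n * m * n) * star n
          = star (n * star c * star n) + n * star n * E m * (n * star n) := by
        simp only [c, star_mul, star_star, star_sub]; noncomm_ring
      rwa [hsplit, map_add, hE.state_mul_right χ _ hn.mul_star_self_mem,
        hE.state_mul_left χ _ hn.mul_star_self_mem, hE.state_apply, hm0, mul_zero, zero_mul,
        add_zero, hE.state_star, map_ne_zero]
    · exact hE.isFixedBy_of_state_ne_zero χ hD hm hm0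
  have hr : (m - E m) * (n * star c * star n) = 0 := by
    rw [sub_mul, hE.mul_eq_apply_mul hD hDB hmasa hmB he
      fun d hd => hE.commutator_mul_eq_zero hD hm he hfix hd, sub_self]
  suffices h : c = 0 from sub_eq_zero.mp h
  refine hE.eq_zero_of_forall_state_eq_zero hD hc fun χ => ?_
  by_cases hnn : hE.state χ (star n * n) = 0
  · rw [← hcE, hE.state_apply]
    exact hE.state_mul_eq_zero χ hnn _
  have hfactor : star n * (m - E m) * n * star c * (star n * n)
      = star n * ((m - E m) * (n * star c * star n)) * n := by
    noncomm_ring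
  have h := congrArg (hE.state χ) hfactor
  rw [hr, mul_zero, zero_mul, map_zero, hE.state_mul_right χ _ hn.star_mul_self_mem,
    hE.state_mul_right χ _ (star_mem hc), ← hE.state_apply, hcE, hE.state_star] at h
  exact Complex.eq_zero_of_conj_mul_self_nonpos (le_of_eq (by simpa [hnn, mul_comm] using h))

end IsCondExp

end Fixed

section Continuity

variable {A : Type*} [NormedRing A] [StarRing A] [NormedAlgebra ℂ A]

lemma apply_star_mul_mul_of_mem_closure_span {E : A →ₗ[ℂ] A} (hE : Continuous E) {n : A}
    {S : Set A} (hS : ∀ b ∈ S, E (star n * b * n) = star n * E b * n) {b : A}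
    (hb : b ∈ closure (Submodule.span ℂ S : Set A)) : E (star n * b * n) = star n * E b * n := by
  let conj : A →ₗ[ℂ] A := LinearMap.mulLeft ℂ (star n) ∘ₗ LinearMap.mulRight ℂ n
  have hconj : Continuous conj := (continuous_const_mul (star n)).comp (continuous_mul_const n)
  have hspan : Set.EqOn (E ∘ₗ conj) (conj ∘ₗ E) (Submodule.span ℂ S) :=
    LinearMap.eqOn_span' fun b hb => by simpa [conj, mul_assoc] using hS b hb
  simpa [conj, mul_assoc] using
    hspan.closure (hE.comp hconj) (hconj.comp hE) hb

lemma apply_star_mul_mul_of_mem_grading {Γ : Type*} [AddCommGroup Γ] {Agr : Γ → Submodule ℂ A}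
    (hmul : ∀ s t : Γ, ∀ a ∈ Agr t, ∀ b ∈ Agr s, a * b ∈ Agr (t + s))
    (hstar : ∀ t : Γ, ∀ a ∈ Agr t, star a ∈ Agr (-t)) (hdense : Dense (↑(⨆ t, Agr t) : Set A))
    {E : A →ₗ[ℂ] A} (hE : Continuous E) (hfix : ∀ a ∈ Agr 0, E a = a)
    (hzero : ∀ t : Γ, t ≠ 0 → ∀ a ∈ Agr t, E a = 0) {n : A} {t : Γ} (hnt : n ∈ Agr t) (a : A) :
    E (star n * a * n) = star n * E a * n := by
  refine apply_star_mul_mul_of_mem_closure_span hE (S := ⋃ s, (Agr s : Set A)) ?_ ?_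
  · intro b hb
    obtain ⟨s, hbs⟩ := Set.mem_iUnion.mp hb
    have hconj : star n * b * n ∈ Agr s := by
      simpa using hmul t (-t + s) _ (hmul s (-t) _ (hstar t n hnt) b hbs) n hnt
    by_cases hs : s = 0
    · subst hs; rw [hfix _ hconj, hfix _ hbs]
    · rw [hzero s hs _ hconj, hzero s hs _ hbs, mul_zero, zero_mul]
  · rw [← Submodule.iSup_eq_span, hdense.closure_eq]; trivial

end Continuity

end GammaCartan

theorem gamma_cartan_stmt10_general
    {A : Type*} [NormedRing A] [StarRing A] [CStarRing A] [NormedAlgebra ℂ A]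
    [CompleteSpace A] [StarModule ℂ A] [PartialOrder A] [StarOrderedRing A]
    {Γ : Type*} [AddCommGroup Γ]
    -- `A` is topologically graded by `Γ` (with linearly independent graded subspaces):
    (Agr : Γ → Submodule ℂ A)
    (hgr_mul : ∀ s t : Γ, ∀ a ∈ Agr t, ∀ b ∈ Agr s, a * b ∈ Agr (t + s))
    (hgr_star : ∀ t : Γ, ∀ a ∈ Agr t, star a ∈ Agr (-t))
    (hgr_dense : Dense (↑(⨆ t, Agr t) : Set A))
    -- with a faithful conditional expectation `E0 = Φ₀` onto the degree-zero subspace `A₀`: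
    (E0 : A →ₗ[ℂ] A)
    (hE0mem : ∀ a, E0 a ∈ Agr 0)
    (hE0fix : ∀ a ∈ Agr 0, E0 a = a)
    (hE0t : ∀ t : Γ, t ≠ 0 → ∀ a ∈ Agr t, E0 a = 0)
    (hE0contr : ∀ a, ‖E0 a‖ ≤ ‖a‖)
    -- `D` is a Cartan subalgebra of `A₀`: a closed abelian *-subalgebra,
    (D : StarSubalgebra ℂ A)
    (hD0 : (D : Set A) ⊆ (Agr 0 : Set A))
    (hDclosed : IsClosed (D : Set A))
    (hDcomm : ∀ d ∈ D, ∀ e ∈ D, d * e = e * d)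
    -- maximal abelian in `A₀`,
    (hDmasa : ∀ a ∈ Agr 0, (∀ d ∈ D, a * d = d * a) → a ∈ D)
    -- whose normalizers in `A₀` generate `A₀`,
    (hD0gen : ∀ a ∈ Agr 0, a ∈ closure (↑(Submodule.span ℂ
      {n : A | n ∈ Agr 0 ∧ ∀ d ∈ D, n * d * star n ∈ D ∧ star n * d * n ∈ D}) : Set A))
    -- with a faithful conditional expectation `ED = E` of `A₀` onto `D`:
    (ED : A →ₗ[ℂ] A)
    (hEDmem : ∀ a, ED a ∈ D)
    (hEDfix : ∀ d ∈ D, ED d = d)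
    (hEDstar : ∀ a, ED (star a) = star (ED a))
    (hEDcontr : ∀ a, ‖ED a‖ ≤ ‖a‖)
    (hEDpos : ∀ a : A, 0 ≤ a → 0 ≤ ED a)
    (hEDbimod : ∀ a : A, ∀ d ∈ D, ED (d * a) = d * ED a ∧ ED (a * d) = ED a * d)
    -- `n` is a homogeneous normalizer of `D`:
    (n : A) (t : Γ) (hnt : n ∈ Agr t)
    (hn : ∀ d ∈ D, n * d * star n ∈ D ∧ star n * d * n ∈ D) :
    ∀ a : A, star n * ED (E0 a) * n = ED (E0 (star n * a * n)) := by
  intro a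
  let _ : CStarAlgebra A :=
    { ‹NormedRing A›, ‹StarRing A›, ‹CStarRing A›, ‹NormedAlgebra ℂ A›, ‹CompleteSpace A›,
      ‹StarModule ℂ A› with }
  have _ : IsClosed (D : Set A) := hDclosed
  have hE : GammaCartan.IsCondExp D ED := ⟨hEDmem, hEDfix, hEDstar, hEDpos,
    fun a d hd => (hEDbimod a d hd).1, fun a d hd => (hEDbimod a d hd).2⟩
  have hcont : ∀ {E : A →ₗ[ℂ] A}, (∀ a, ‖E a‖ ≤ ‖a‖) → Continuous E := fun h =>
    AddMonoidHomClass.continuous_of_bound _ 1 (by simpa using h)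
  let A₀ : Subalgebra ℂ A := (Agr 0).toSubalgebra (hD0 (one_mem D)) fun x y hx hy => by
    simpa using hgr_mul 0 0 x hx y hy
  rw [GammaCartan.apply_star_mul_mul_of_mem_grading hgr_mul hgr_star hgr_dense (hcont hE0contr)
    hE0fix hE0t hnt a]
  exact (GammaCartan.apply_star_mul_mul_of_mem_closure_span (hcont hEDcontr)
    (fun m hm => hE.apply_star_mul_mul_eq hDcomm (B := A₀) hD0 hDmasa hn hm.2 hm.1)
    (hD0gen _ (hE0mem a))).symm

/-- Let `(A,D)` be a `Γ`-Cartan pair with faithful conditional expectation `Δ = E ∘ Φ₀ : A → D`.  Then for every homogeneous normalizer `n` of `D` and every `a ∈ A`, `n* Δ(a) n = Δ(n* a n)`. -/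
theorem gamma_cartan_stmt10
    {A : Type*} [NormedRing A] [StarRing A] [CStarRing A] [NormedAlgebra ℂ A]
    [CompleteSpace A] [StarModule ℂ A] [PartialOrder A] [StarOrderedRing A]
    {Γ : Type*} [AddCommGroup Γ]
    -- `A` is topologically graded by `Γ` (with linearly independent graded subspaces):
    (Agr : Γ → Submodule ℂ A)
    (hgr_closed : ∀ t, IsClosed (Agr t : Set A))
    (hgr_mul : ∀ s t : Γ, ∀ a ∈ Agr t, ∀ b ∈ Agr s, a * b ∈ Agr (t + s))
    (hgr_star : ∀ t : Γ, ∀ a ∈ Agr t, star a ∈ Agr (-t))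
    (hgr_indep : iSupIndep Agr)
    (hgr_dense : Dense (↑(⨆ t, Agr t) : Set A))
    -- with a faithful conditional expectation `E0 = Φ₀` onto the degree-zero subspace `A₀`:
    (E0 : A →ₗ[ℂ] A)
    (hE0mem : ∀ a, E0 a ∈ Agr 0)
    (hE0fix : ∀ a ∈ Agr 0, E0 a = a)
    (hE0t : ∀ t : Γ, t ≠ 0 → ∀ a ∈ Agr t, E0 a = 0)
    (hE0star : ∀ a, E0 (star a) = star (E0 a))
    (hE0contr : ∀ a, ‖E0 a‖ ≤ ‖a‖)
    (hE0pos : ∀ a : A, 0 ≤ a → 0 ≤ E0 a)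
    (hE0bimod : ∀ a : A, ∀ b ∈ Agr 0, E0 (b * a) = b * E0 a ∧ E0 (a * b) = E0 a * b)
    (hE0faith : ∀ a : A, E0 (star a * a) = 0 → a = 0)
    -- `D` is a Cartan subalgebra of `A₀`: a closed abelian *-subalgebra,
    (D : StarSubalgebra ℂ A)
    (hD0 : (D : Set A) ⊆ (Agr 0 : Set A))
    (hDclosed : IsClosed (D : Set A))
    (hDcomm : ∀ d ∈ D, ∀ e ∈ D, d * e = e * d)
    -- maximal abelian in `A₀`,
    (hDmasa : ∀ a ∈ Agr 0, (∀ d ∈ D, a * d = d * a) → a ∈ D)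
    -- containing an approximate unit for `A₀`,
    (hDau : ∃ (ι : Type) (l : Filter ι) (e : ι → A), l.NeBot ∧
      (∀ i, e i ∈ D ∧ 0 ≤ e i ∧ ‖e i‖ ≤ 1) ∧
      ∀ a ∈ Agr 0, Filter.Tendsto (fun i => e i * a) l (nhds a) ∧
        Filter.Tendsto (fun i => a * e i) l (nhds a))
    -- whose normalizers in `A₀` generate `A₀`,
    (hD0gen : ∀ a ∈ Agr 0, a ∈ closure (↑(Submodule.span ℂ
      {n : A | n ∈ Agr 0 ∧ ∀ d ∈ D, n * d * star n ∈ D ∧ star n * d * n ∈ D}) : Set A))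
    -- with a faithful conditional expectation `ED = E` of `A₀` onto `D`:
    (ED : A →ₗ[ℂ] A)
    (hEDmem : ∀ a, ED a ∈ D)
    (hEDfix : ∀ d ∈ D, ED d = d)
    (hEDstar : ∀ a, ED (star a) = star (ED a))
    (hEDcontr : ∀ a, ‖ED a‖ ≤ ‖a‖)
    (hEDpos : ∀ a : A, 0 ≤ a → 0 ≤ ED a)
    (hEDbimod : ∀ a : A, ∀ d ∈ D, ED (d * a) = d * ED a ∧ ED (a * d) = ED a * d)
    (hEDfaith : ∀ a ∈ Agr 0, ED (star a * a) = 0 → a = 0)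
    -- and the normalizers `N(A,D)` of `D` in `A` densely span `A`:
    (hNdense : Dense (↑(Submodule.span ℂ
      {n : A | ∀ d ∈ D, n * d * star n ∈ D ∧ star n * d * n ∈ D}) : Set A))
    -- `n` is a homogeneous normalizer of `D`:
    (n : A) (t : Γ) (hnt : n ∈ Agr t)
    (hn : ∀ d ∈ D, n * d * star n ∈ D ∧ star n * d * n ∈ D) :
    ∀ a : A, star n * ED (E0 a) * n = ED (E0 (star n * a * n)) :=
  gamma_cartan_stmt10_general Agr hgr_mul hgr_star hgr_dense E0 hE0mem hE0fix hE0t hE0contr D hD0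
    hDclosed hDcomm hDmasa hD0gen ED hEDmem hEDfix hEDstar hEDcontr hEDpos hEDbimod n t hnt hn
end

section
/- Let (A,D) be a Γ-Cartan pair with expectation Δ, and for homogeneous normalizers n, n' and x ∈ X define (n,x) ∼_Σ (n',x') iff x = x' and there exist d, d' ∈ C_c(X) with d(x) > 0, d'(x) > 0 and nd = n'd'. Define (n,x) ≈_Σ (n',x') iff x = x' and Δ(n*n')(x) > 0. Then ∼_Σ and ≈_Σ coincide on 𝒢 = {(n,x) : n homogeneous normalizer, (n*n)(x) ≠ 0}. Similarly, the relation with d(x) ≠ 0, d'(x) ≠ 0 coincides with the relation Δ(n*n')(x) ≠ 0. -/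
/-!
Applying `Δ` to `n* (n d) = n* (n' d')` gives `Δ(n*n') d' = (n*n) d` in `D`; evaluated at `x`, where
`(n*n)(x) > 0`, this yields both forward implications. Conversely, if `Δ(n*n')(x) ≠ 0` then `n` and
`n'` have the same degree, so `v = n*n'` is a normalizer of `D` lying in `A₀`, and `Δ v = E v =: b`.
Renault's argument shows `v p v* = p v*v` wherever `b ≠ 0`; hence `v c`, with `c = v*v b*b ∈ D`,
commutes with `D`, lies in `D` by maximality, and equals `E (v c) = b c`. The elements
`d = b c n'*n'` and `d' = v*v c` then satisfy `n d = n' d'`, and the Kadison–Schwarz inequality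
`b*b ≤ E(v*v) = v*v` makes `d'(x) > 0` and `d(x)` a positive multiple of `b(x)`.
Since `D` is unital, `X` is compact, so the compact-support conditions hold automatically.
-/

open scoped ComplexOrder

theorem Complex.exists_pos_real_eq_iff {z : ℂ} : (∃ r : ℝ, 0 < r ∧ z = r) ↔ 0 < z :=
  ⟨fun ⟨r, hr, hz⟩ => hz ▸ Complex.zero_lt_real.mpr hr, fun h =>
    ⟨z.re, (Complex.pos_iff.mp h).1, Complex.eq_re_of_ofReal_le (r := 0) (by simpa using h.le)⟩⟩

theorem exists_iff_of_mul_eq_mul {ι : Type*} {S : Set ι} {R : ι → ι → Prop} {φ : ι → ℂ}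
    {b g : ℂ} (hg : 0 < g) (hfwd : ∀ d ∈ S, ∀ d' ∈ S, R d d' → b * φ d' = g * φ d)
    (hbwd : b ≠ 0 → ∃ d ∈ S, ∃ d' ∈ S, R d d' ∧ 0 < φ d' ∧ ∃ r : ℂ, 0 < r ∧ φ d = b * r) :
    ((∃ d ∈ S, ∃ d' ∈ S, 0 < φ d ∧ 0 < φ d' ∧ R d d') ↔ 0 < b) ∧
      ((∃ d ∈ S, ∃ d' ∈ S, φ d ≠ 0 ∧ φ d' ≠ 0 ∧ R d d') ↔ b ≠ 0) := by
  refine ⟨⟨?_, fun hb => ?_⟩, ⟨?_, fun hb => ?_⟩⟩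
  · rintro ⟨d, hd, d', hd', hdx, hd'x, h⟩
    rw [eq_div_of_mul_eq hd'x.ne' (hfwd d hd d' hd' h)]
    exact div_pos (mul_pos hg hdx) hd'x
  · obtain ⟨d, hd, d', hd', h, hd'x, r, hr, hdx⟩ := hbwd hb.ne'
    exact ⟨d, hd, d', hd', hdx ▸ mul_pos hb hr, hd'x, h⟩
  · rintro ⟨d, hd, d', hd', hdx, -, h⟩ rfl
    exact mul_ne_zero hg.ne' hdx (zero_mul (φ d') ▸ hfwd d hd d' hd' h).symm
  · obtain ⟨d, hd, d', hd', h, hd'x, r, hr, hdx⟩ := hbwd hb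
    exact ⟨d, hd, d', hd', hdx ▸ mul_ne_zero hb hr.ne', hd'x.ne', h⟩

namespace StarSubalgebra

variable {A X : Type*}

section Algebraic

variable [Ring A] [StarRing A] [Algebra ℂ A] [StarModule ℂ A] (D : StarSubalgebra ℂ A)

structure IsCharacter (φ : A → ℂ) : Prop where
  map_add : ∀ d ∈ D, ∀ e ∈ D, φ (d + e) = φ d + φ e
  map_smul : ∀ (c : ℂ), ∀ d ∈ D, φ (c • d) = c * φ d
  map_mul : ∀ d ∈ D, ∀ e ∈ D, φ (d * e) = φ d * φ e
  exists_ne_zero : ∃ d ∈ D, φ d ≠ 0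

def IsNormalizer (w : A) : Prop :=
  ∀ d ∈ D, w * d * star w ∈ D ∧ star w * d * w ∈ D

structure IsCondExp [PartialOrder A] (E : A →ₗ[ℂ] A) : Prop where
  mem : ∀ a, E a ∈ D
  fix : ∀ d ∈ D, E d = d
  map_star : ∀ a, E (star a) = star (E a)
  map_mul_left : ∀ a, ∀ d ∈ D, E (d * a) = d * E a
  map_mul_right : ∀ a, ∀ d ∈ D, E (a * d) = E a * d
  nonneg : ∀ a, 0 ≤ a → 0 ≤ E a

variable {D} {φ : A → ℂ} {w : A}

theorem IsCharacter.map_zero (hφ : D.IsCharacter φ) : φ 0 = 0 := by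
  simpa using hφ.map_smul 0 1 (one_mem D)

theorem IsCharacter.map_one (hφ : D.IsCharacter φ) : φ 1 = 1 := by
  obtain ⟨d, hd, hne⟩ := hφ.exists_ne_zero
  have h := hφ.map_mul d hd 1 (one_mem D)
  rw [mul_one] at h
  exact (mul_eq_left₀ hne).mp h.symm

def IsCharacter.toAlgHom (hφ : D.IsCharacter φ) : D →ₐ[ℂ] ℂ where
  toFun d := φ d
  map_one' := hφ.map_one
  map_mul' d e := hφ.map_mul d d.2 e e.2
  map_zero' := hφ.map_zero
  map_add' d e := hφ.map_add d d.2 e e.2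
  commutes' c := by
    simpa [Algebra.algebraMap_eq_smul_one, hφ.map_one] using hφ.map_smul c 1 (one_mem D)

theorem IsCharacter.map_sub (hφ : D.IsCharacter φ) {d e : A} (hd : d ∈ D) (he : e ∈ D) :
    φ (d - e) = φ d - φ e :=
  _root_.map_sub hφ.toAlgHom ⟨d, hd⟩ ⟨e, he⟩

open Classical in
theorem isCharacter_of_algHom (ψ : D →ₐ[ℂ] ℂ) :
    D.IsCharacter fun a => if h : a ∈ D then ψ ⟨a, h⟩ else 0 where
  map_add d hd e he := by
    simp only [dif_pos hd, dif_pos he, dif_pos (add_mem hd he)]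
    exact map_add ψ ⟨d, hd⟩ ⟨e, he⟩
  map_smul c d hd := by
    simp only [dif_pos hd, dif_pos (D.smul_mem hd c)]
    exact map_smul ψ c ⟨d, hd⟩
  map_mul d hd e he := by
    simp only [dif_pos hd, dif_pos he, dif_pos (mul_mem hd he)]
    exact map_mul ψ ⟨d, hd⟩ ⟨e, he⟩
  exists_ne_zero := ⟨1, one_mem D, by
    rw [dif_pos (one_mem D)]
    exact (map_one ψ).trans_ne one_ne_zero⟩

theorem eq_of_forall_apply_eq {ev : X → A → ℂ} (hev : ∀ x, D.IsCharacter (ev x))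
    (hsep : ∀ d ∈ D, (∀ x, ev x d = 0) → d = 0) {d e : A} (hd : d ∈ D) (he : e ∈ D)
    (h : ∀ x, ev x d = ev x e) : d = e :=
  sub_eq_zero.mp <| hsep _ (sub_mem hd he) fun x => by rw [(hev x).map_sub hd he, h, sub_self]

protected theorem IsNormalizer.star (hw : D.IsNormalizer w) : D.IsNormalizer (star w) :=
  fun d hd => by simpa only [star_star] using (hw d hd).symm

theorem IsNormalizer.mul {u : A} (hu : D.IsNormalizer u) (hw : D.IsNormalizer w) :
    D.IsNormalizer (u * w) := fun d hd => by
  constructor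
  · simpa only [star_mul, mul_assoc] using (hu _ (hw d hd).1).1
  · simpa only [star_mul, mul_assoc] using (hw _ (hu d hd).2).2

theorem IsNormalizer.mul_star_self_mem (hw : D.IsNormalizer w) : w * star w ∈ D := by
  simpa using (hw 1 (one_mem D)).1

theorem IsNormalizer.star_mul_self_mem (hw : D.IsNormalizer w) : star w * w ∈ D := by
  simpa using (hw 1 (one_mem D)).2

theorem IsNormalizer.map_star_mul_mul_eq {Δ : A → A}
    (hΔ_mul : ∀ a, ∀ d ∈ D, Δ (a * d) = Δ a * d) (hΔ_fix : ∀ d ∈ D, Δ d = d) {n n' d d' : A}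
    (hn : D.IsNormalizer n) (hd : d ∈ D) (hd' : d' ∈ D) (h : n * d = n' * d') :
    Δ (star n * n') * d' = star n * n * d := by
  rw [← hΔ_mul _ _ hd', mul_assoc, ← h, ← mul_assoc, hΔ_fix _ (mul_mem hn.star_mul_self_mem hd)]

theorem IsNormalizer.mul_mul_eq_mul_of_mul_eq (hDcomm : ∀ d ∈ D, ∀ e ∈ D, d * e = e * d)
    {n n' b c : A} (hn : D.IsNormalizer n) (hn' : D.IsNormalizer n') (hc : c ∈ D)
    (h : star n * n' * c = b * c) :
    n * (b * c * (star n' * n')) = n' * (star (star n * n') * (star n * n') * c) :=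
  calc n * (b * c * (star n' * n')) = n * star n * (n' * star n') * n' * c := by
        rw [← h]
        simp only [mul_assoc]
        rw [hDcomm _ hc _ hn'.star_mul_self_mem]
        simp only [mul_assoc]
    _ = n' * star n' * (n * star n) * n' * c := by
        rw [hDcomm _ hn.mul_star_self_mem _ hn'.mul_star_self_mem]
    _ = n' * (star (star n * n') * (star n * n') * c) := by
        simp only [star_mul, star_star, mul_assoc]

section CondExp

variable [PartialOrder A] {E : A →ₗ[ℂ] A}

theorem IsCondExp.star_mul_self_le [StarOrderedRing A] (hE : D.IsCondExp E) (a : A) :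
    star (E a) * E a ≤ E (star a * a) := by
  have h := hE.nonneg _ (star_mul_self_nonneg (a - E a))
  have hexp : star (a - E a) * (a - E a)
      = star a * a - star a * E a - (star (E a) * a - star (E a) * E a) := by
    rw [star_sub]
    noncomm_ring
  rwa [hexp, map_sub, map_sub, map_sub, hE.map_mul_right _ _ (hE.mem a),
    hE.map_mul_left _ _ (star_mem (hE.mem a)), hE.map_star,
    hE.fix _ (mul_mem (star_mem (hE.mem a)) (hE.mem a)), sub_self, sub_zero, sub_nonneg] at h

theorem IsCharacter.apply_conj_of_apply_condExp_ne_zero (hφ : D.IsCharacter φ)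
    (hE : D.IsCondExp E) (hw : D.IsNormalizer w) (hne : φ (E w) ≠ 0) {p : A} (hp : p ∈ D) :
    φ (w * p * star w) = φ p * φ (star w * w) := by
  have hg := hw.star_mul_self_mem
  have hb := hE.mem w
  -- expand `E (q w q w* w)` by the bimodule property in two ways
  have key : ∀ q ∈ D, φ q * (φ q * φ (star w * w)) = φ q * φ (w * q * star w) := by
    intro q hq
    have hqw := (hw q hq).1
    have h : q * (E w * (q * (star w * w))) = q * (w * q * star w) * E w := by
      calc q * (E w * (q * (star w * w))) = E (q * (w * (q * (star w * w)))) := by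
            rw [hE.map_mul_left _ _ hq, hE.map_mul_right _ _ (mul_mem hq hg)]
        _ = E (q * (w * q * star w) * w) := by simp only [mul_assoc]
        _ = q * (w * q * star w) * E w := hE.map_mul_left _ _ (mul_mem hq hqw)
    have := congrArg φ h
    rw [hφ.map_mul _ hq _ (mul_mem hb (mul_mem hq hg)), hφ.map_mul _ hb _ (mul_mem hq hg),
      hφ.map_mul _ hq _ hg, hφ.map_mul _ (mul_mem hq hqw) _ hb, hφ.map_mul _ hq _ hqw] at this
    exact mul_left_cancel₀ hne (by linear_combination this)
  -- `key` is quadratic in `q`; polarize it at `q = 1` and `q = p + 1`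
  have h1 := key 1 (one_mem D)
  have hp1 := key (p + 1) (add_mem hp (one_mem D))
  have hconj : w * (p + 1) * star w = w * p * star w + w * 1 * star w := by noncomm_ring
  rw [hconj, hφ.map_add _ (hw p hp).1 _ (hw 1 (one_mem D)).1,
    hφ.map_add _ hp _ (one_mem D)] at hp1
  rw [hφ.map_one] at h1 hp1
  linear_combination key p hp - hp1 + (1 + φ p) * h1

theorem IsNormalizer.conj_mul_eq {ev : X → A → ℂ} (hev : ∀ x, D.IsCharacter (ev x))
    (hsep : ∀ d ∈ D, (∀ x, ev x d = 0) → d = 0) (hE : D.IsCondExp E) (hw : D.IsNormalizer w)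
    {p : A} (hp : p ∈ D) :
    w * p * star w * (star (E w) * E w) = p * (star w * w) * (star (E w) * E w) := by
  have hb := hE.mem w
  have hβ := mul_mem (star_mem hb) hb
  have hpg := mul_mem hp hw.star_mul_self_mem
  refine eq_of_forall_apply_eq hev hsep (mul_mem (hw p hp).1 hβ) (mul_mem hpg hβ) fun x => ?_
  rw [(hev x).map_mul _ (hw p hp).1 _ hβ, (hev x).map_mul _ hpg _ hβ,
    (hev x).map_mul _ (star_mem hb) _ hb]
  by_cases hne : ev x (E w) = 0
  · simp [hne]
  · rw [(hev x).apply_conj_of_apply_condExp_ne_zero hE hw hne hp,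
      (hev x).map_mul _ hp _ hw.star_mul_self_mem]

theorem IsNormalizer.mul_eq_condExp_mul {ev : X → A → ℂ} (hev : ∀ x, D.IsCharacter (ev x))
    (hsep : ∀ d ∈ D, (∀ x, ev x d = 0) → d = 0) (hE : D.IsCondExp E)
    (hDcomm : ∀ d ∈ D, ∀ e ∈ D, d * e = e * d) {B : Set A}
    (hmasa : ∀ a ∈ B, (∀ d ∈ D, a * d = d * a) → a ∈ D) (hBD : ∀ a ∈ B, ∀ d ∈ D, a * d ∈ B)
    (hw : D.IsNormalizer w) (hwB : w ∈ B) :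
    w * (star w * w * (star (E w) * E w)) = E w * (star w * w * (star (E w) * E w)) := by
  set β := star (E w) * E w with hβ_def
  set c := star w * w * β
  have hb := hE.mem w
  have hc : c ∈ D := mul_mem hw.star_mul_self_mem (mul_mem (star_mem hb) hb)
  have hβ_star : star (E (star w)) * E (star w) = β := by
    rw [hE.map_star, star_star, hDcomm _ hb _ (star_mem hb)]
  have h1 : w * star w * β = c := by simpa using hw.conj_mul_eq hev hsep hE (one_mem D)
  have hcomm : ∀ p ∈ D, w * c * p = p * (w * c) := by
    intro p hp
    have h2 := hw.star.conj_mul_eq hev hsep hE hp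
    rw [hβ_star, star_star] at h2
    calc w * c * p = w * (p * (w * star w * β)) := by rw [mul_assoc, hDcomm _ hc _ hp, h1]
      _ = w * (star w * p * w * β) := by rw [← mul_assoc p, h2]
      _ = w * star w * p * (w * β) := by simp only [mul_assoc]
      _ = p * (w * c) := by
          rw [← hDcomm _ hp _ hw.mul_star_self_mem]
          simp only [c, mul_assoc]
  have hwc : w * c ∈ D := hmasa _ (hBD _ hwB _ hc) hcomm
  rw [← hE.map_mul_right _ _ hc, hE.fix _ hwc]

end CondExp

end Algebraic

section CStar

variable [CStarAlgebra A] {D : StarSubalgebra ℂ A} [IsClosed (D : Set A)] {φ : A → ℂ}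

theorem IsCharacter.mem_spectrum (hφ : D.IsCharacter φ) {d : A} (hd : d ∈ D) :
    φ d ∈ spectrum ℂ d :=
  D.spectrum_eq (a := ⟨d, hd⟩) ▸ AlgHom.apply_mem_spectrum hφ.toAlgHom ⟨d, hd⟩

theorem IsCharacter.norm_le (hφ : D.IsCharacter φ) {d : A} (hd : d ∈ D) : ‖φ d‖ ≤ ‖d‖ := by
  have h := hφ.mem_spectrum hd
  have : Nontrivial A := by
    by_contra h'
    rw [not_nontrivial_iff_subsingleton] at h'
    simp [spectrum.of_subsingleton] at h
  exact spectrum.norm_le_norm_of_mem h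

theorem IsCharacter.map_star (hφ : D.IsCharacter φ) {d : A} (hd : d ∈ D) :
    φ (star d) = star (φ d) :=
  StarHomClass.map_star hφ.toAlgHom ⟨d, hd⟩

theorem IsCharacter.nonneg [PartialOrder A] [StarOrderedRing A] (hφ : D.IsCharacter φ) {d : A}
    (hd : d ∈ D) (hd0 : 0 ≤ d) : 0 ≤ φ d :=
  spectrum_nonneg_of_nonneg hd0 (hφ.mem_spectrum hd)

theorem IsCharacter.apply_star_mul_self_pos (hφ : D.IsCharacter φ) {d : A} (hd : d ∈ D)
    (hne : φ d ≠ 0) : 0 < φ (star d * d) := by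
  rw [hφ.map_mul _ (star_mem hd) _ hd, hφ.map_star hd, Complex.star_def, Complex.conj_mul']
  exact_mod_cast pow_pos (norm_pos_iff.mpr hne) 2

theorem compactSpace_of_isInducing {ev : X → A → ℂ} [TopologicalSpace X]
    (hev : ∀ x, D.IsCharacter (ev x))
    (hfull : ∀ φ : A → ℂ, D.IsCharacter φ → ∃ x, ∀ d ∈ D, φ d = ev x d)
    (hind : Topology.IsInducing fun x (d : D) => ev x d) : CompactSpace X := by
  have hrange : Set.range (fun x (d : D) => ev x d) =
      Set.range fun ψ : WeakDual.characterSpace ℂ D => (ψ : D → ℂ) := by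
    ext f
    constructor
    · rintro ⟨x, rfl⟩
      exact ⟨WeakDual.CharacterSpace.equivAlgHom.symm (hev x).toAlgHom, rfl⟩
    · rintro ⟨ψ, rfl⟩
      obtain ⟨x, hx⟩ := hfull _ (isCharacter_of_algHom (WeakDual.CharacterSpace.equivAlgHom ψ))
      exact ⟨x, funext fun d => by simpa using (hx d d.2).symm⟩
  constructor
  rw [hind.isCompact_iff, Set.image_univ, hrange]
  exact isCompact_range <|
    continuous_pi fun d => (WeakDual.eval_continuous d).comp continuous_subtype_val

theorem IsNormalizer.exists_mul_eq_mul_of_apply_condExp_ne_zero [PartialOrder A]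
    [StarOrderedRing A] {ev : X → A → ℂ} (hev : ∀ x, D.IsCharacter (ev x))
    (hsep : ∀ d ∈ D, (∀ x, ev x d = 0) → d = 0) {E : A →ₗ[ℂ] A} (hE : D.IsCondExp E)
    (hDcomm : ∀ d ∈ D, ∀ e ∈ D, d * e = e * d) {B : Set A}
    (hmasa : ∀ a ∈ B, (∀ d ∈ D, a * d = d * a) → a ∈ D) (hBD : ∀ a ∈ B, ∀ d ∈ D, a * d ∈ B)
    {n n' : A} (hn : D.IsNormalizer n) (hn' : D.IsNormalizer n') (hB : star n * n' ∈ B) {x : X}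
    (hn'x : ev x (star n' * n') ≠ 0) (hbx : ev x (E (star n * n')) ≠ 0) :
    ∃ d ∈ D, ∃ d' ∈ D, n * d = n' * d' ∧ 0 < ev x d' ∧
      ∃ r : ℂ, 0 < r ∧ ev x d = ev x (E (star n * n')) * r := by
  set v := star n * n'
  set β := star (E v) * E v
  set c := star v * v * β
  have hv : D.IsNormalizer v := hn.star.mul hn'
  have hb := hE.mem v
  have hG := hv.star_mul_self_mem
  have hβ : β ∈ D := mul_mem (star_mem hb) hb
  have hc : c ∈ D := mul_mem hG hβ
  have hg' := hn'.star_mul_self_mem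
  have hβx : 0 < ev x β := (hev x).apply_star_mul_self_pos hb hbx
  have hGx : 0 < ev x (star v * v) := by
    have h := (hev x).nonneg (sub_mem hG hβ) (sub_nonneg.mpr (hE.fix _ hG ▸ hE.star_mul_self_le v))
    rw [(hev x).map_sub hG hβ, sub_nonneg] at h
    exact hβx.trans_le h
  have hg'x := ((hev x).nonneg hg' (star_mul_self_nonneg n')).lt_of_ne' hn'x
  refine ⟨E v * c * (star n' * n'), mul_mem (mul_mem hb hc) hg', star v * v * c, mul_mem hG hc,
    hn.mul_mul_eq_mul_of_mul_eq hDcomm hn' hc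
      (hv.mul_eq_condExp_mul hev hsep hE hDcomm hmasa hBD hB),
    ?_, ev x c * ev x (star n' * n'), ?_, ?_⟩
  · rw [(hev x).map_mul _ hG _ hc, (hev x).map_mul _ hG _ hβ]
    exact mul_pos hGx (mul_pos hGx hβx)
  · rw [(hev x).map_mul _ hG _ hβ]
    exact mul_pos (mul_pos hGx hβx) hg'x
  · rw [(hev x).map_mul _ (mul_mem hb hc) _ hg', (hev x).map_mul _ hb _ hc, mul_assoc]

end CStar

end StarSubalgebra

theorem gamma_cartan_stmt12_general
    {A : Type*} [NormedRing A] [StarRing A] [CStarRing A] [NormedAlgebra ℂ A]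
    [CompleteSpace A] [StarModule ℂ A] [PartialOrder A] [StarOrderedRing A]
    {Γ : Type*} [AddCommGroup Γ]
    -- `A` is topologically graded by `Γ` (with linearly independent graded subspaces):
    (Agr : Γ → Submodule ℂ A)
    (hgr_mul : ∀ s t : Γ, ∀ a ∈ Agr t, ∀ b ∈ Agr s, a * b ∈ Agr (t + s))
    (hgr_star : ∀ t : Γ, ∀ a ∈ Agr t, star a ∈ Agr (-t))
    -- with a faithful conditional expectation `E0 = Φ₀` onto the degree-zero subspace `A₀`:
    (E0 : A →ₗ[ℂ] A)
    (hE0fix : ∀ a ∈ Agr 0, E0 a = a)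
    (hE0t : ∀ t : Γ, t ≠ 0 → ∀ a ∈ Agr t, E0 a = 0)
    (hE0bimod : ∀ a : A, ∀ b ∈ Agr 0, E0 (b * a) = b * E0 a ∧ E0 (a * b) = E0 a * b)
    -- `D` is a Cartan subalgebra of `A₀`: a closed abelian *-subalgebra,
    (D : StarSubalgebra ℂ A)
    (hD0 : (D : Set A) ⊆ (Agr 0 : Set A))
    (hDclosed : IsClosed (D : Set A))
    (hDcomm : ∀ d ∈ D, ∀ e ∈ D, d * e = e * d)
    -- maximal abelian in `A₀`,
    (hDmasa : ∀ a ∈ Agr 0, (∀ d ∈ D, a * d = d * a) → a ∈ D)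
    -- with a faithful conditional expectation `ED = E` of `A₀` onto `D`:
    (ED : A →ₗ[ℂ] A)
    (hEDmem : ∀ a, ED a ∈ D)
    (hEDfix : ∀ d ∈ D, ED d = d)
    (hEDstar : ∀ a, ED (star a) = star (ED a))
    (hEDpos : ∀ a : A, 0 ≤ a → 0 ≤ ED a)
    (hEDbimod : ∀ a : A, ∀ d ∈ D, ED (d * a) = d * ED a ∧ ED (a * d) = ED a * d)
    -- `X = D̂` is the Gelfand spectrum of `D`, realized via the evaluation map `ev`:
    {X : Type*} [TopologicalSpace X]
    (ev : X → A → ℂ)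
    (hev_add : ∀ (x : X), ∀ d ∈ D, ∀ e ∈ D, ev x (d + e) = ev x d + ev x e)
    (hev_smul : ∀ (x : X) (c : ℂ), ∀ d ∈ D, ev x (c • d) = c * ev x d)
    (hev_mul : ∀ (x : X), ∀ d ∈ D, ∀ e ∈ D, ev x (d * e) = ev x d * ev x e)
    (hev_sep : ∀ d ∈ D, (∀ x : X, ev x d = 0) → d = 0)
    (hev_ne : ∀ x : X, ∃ d ∈ D, ev x d ≠ 0)
    (hev_full : ∀ φ : A → ℂ, (∃ d ∈ D, φ d ≠ 0) →
      (∀ d ∈ D, ∀ e ∈ D, φ (d * e) = φ d * φ e) →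
      (∀ d ∈ D, ∀ e ∈ D, φ (d + e) = φ d + φ e) →
      (∀ (c : ℂ), ∀ d ∈ D, φ (c • d) = c * φ d) →
      (∀ d ∈ D, ‖φ d‖ ≤ ‖d‖) → ∃ x : X, ∀ d ∈ D, φ d = ev x d)
    (hev_top : Topology.IsInducing fun x : X => (fun d : D => ev x ↑d))
    -- `n` and `n′` are homogeneous normalizers of `D`:
    (n : A) (t : Γ) (hnt : n ∈ Agr t)
    (hn : ∀ d ∈ D, n * d * star n ∈ D ∧ star n * d * n ∈ D)
    (n' : A) (t' : Γ) (hnt' : n' ∈ Agr t')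
    (hn' : ∀ d ∈ D, n' * d * star n' ∈ D ∧ star n' * d * n' ∈ D)
    -- `(n,x)` and `(n′,x)` lie in `𝒢`:
    (x : X)
    (hxn : ev x (star n * n) ≠ 0) (hxn' : ev x (star n' * n') ≠ 0) :
    -- `∼_Σ` coincides with `≈_Σ` …
    ((∃ d ∈ D, ∃ d' ∈ D,
        IsCompact (closure {y : X | ev y d ≠ 0}) ∧
        IsCompact (closure {y : X | ev y d' ≠ 0}) ∧
        (∃ r : ℝ, 0 < r ∧ ev x d = r) ∧ (∃ r : ℝ, 0 < r ∧ ev x d' = r) ∧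
        n * d = n' * d') ↔
      (∃ r : ℝ, 0 < r ∧ ev x (ED (E0 (star n * n'))) = r)) ∧
    -- … and `∼_G` coincides with `≈_G`:
    ((∃ d ∈ D, ∃ d' ∈ D,
        IsCompact (closure {y : X | ev y d ≠ 0}) ∧
        IsCompact (closure {y : X | ev y d' ≠ 0}) ∧
        ev x d ≠ 0 ∧ ev x d' ≠ 0 ∧
        n * d = n' * d') ↔
      ev x (ED (E0 (star n * n'))) ≠ 0) := by
  let _ : CStarAlgebra A := {}
  have : IsClosed (D : Set A) := hDclosed
  replace hn : D.IsNormalizer n := hn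
  replace hn' : D.IsNormalizer n' := hn'
  have hev : ∀ y, D.IsCharacter (ev y) := fun y => ⟨hev_add y, hev_smul y, hev_mul y, hev_ne y⟩
  have : CompactSpace X := StarSubalgebra.compactSpace_of_isInducing hev (fun φ hφ =>
    hev_full φ hφ.exists_ne_zero hφ.map_mul hφ.map_add hφ.map_smul fun _ => hφ.norm_le) hev_top
  have hED : D.IsCondExp ED := ⟨hEDmem, hEDfix, hEDstar, fun a d hd => (hEDbimod a d hd).1,
    fun a d hd => (hEDbimod a d hd).2, hEDpos⟩
  have hK : ∀ s : Set X, IsCompact (closure s) := fun _ => isClosed_closure.isCompact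
  simp only [hK, true_and, Complex.exists_pos_real_eq_iff]
  refine exists_iff_of_mul_eq_mul
    ((hev x).nonneg hn.star_mul_self_mem (star_mul_self_nonneg n) |>.lt_of_ne' hxn)
    (fun d hd d' hd' h => ?_) fun hb => ?_
  · rw [← (hev x).map_mul _ (hED.mem _) _ hd', ← (hev x).map_mul _ hn.star_mul_self_mem _ hd]
    refine congrArg (ev x) (hn.map_star_mul_mul_eq (Δ := fun a => ED (E0 a))
      (fun a p hp => ?_) (fun p hp => ?_) hd hd' h)
    · rw [(hE0bimod a p (hD0 hp)).2, hED.map_mul_right _ _ hp]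
    · rw [hE0fix p (hD0 hp), hED.fix p hp]
  · have hv : star n * n' ∈ Agr (-t + t') := hgr_mul t' (-t) _ (hgr_star t n hnt) n' hnt'
    obtain rfl : t' = t := by
      by_contra ht
      rw [hE0t _ (fun h => ht (neg_add_eq_zero.mp h).symm) _ hv, map_zero,
        (hev x).map_zero] at hb
      exact hb rfl
    rw [neg_add_cancel] at hv
    rw [hE0fix _ hv] at hb ⊢
    refine hn.exists_mul_eq_mul_of_apply_condExp_ne_zero hev hev_sep hED hDcomm hDmasa
      (fun a ha d hd => ?_) hn' hv hxn' hb
    simpa using hgr_mul 0 0 a ha d (hD0 hd)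

/-- Let `(A,D)` be a `Γ`-Cartan pair with expectation `Δ`.  For homogeneous normalizers `n, n′` and `x ∈ X` with `(n*n)(x) ≠ 0 ≠ (n′*n′)(x)`, the germ relation `∼_Σ` (there are `d, d′ ∈ C_c(X)` with `d(x) > 0 < d′(x)` and `nd = n′d′`) coincides with the relation `≈_Σ` (`Δ(n*n′)(x) > 0`); similarly the version with `d(x) ≠ 0 ≠ d′(x)` coincides with `Δ(n*n′)(x) ≠ 0`. -/
theorem gamma_cartan_stmt12
    {A : Type*} [NormedRing A] [StarRing A] [CStarRing A] [NormedAlgebra ℂ A]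
    [CompleteSpace A] [StarModule ℂ A] [PartialOrder A] [StarOrderedRing A]
    {Γ : Type*} [AddCommGroup Γ]
    -- `A` is topologically graded by `Γ` (with linearly independent graded subspaces):
    (Agr : Γ → Submodule ℂ A)
    (hgr_closed : ∀ t, IsClosed (Agr t : Set A))
    (hgr_mul : ∀ s t : Γ, ∀ a ∈ Agr t, ∀ b ∈ Agr s, a * b ∈ Agr (t + s))
    (hgr_star : ∀ t : Γ, ∀ a ∈ Agr t, star a ∈ Agr (-t))
    (hgr_indep : iSupIndep Agr)
    (hgr_dense : Dense (↑(⨆ t, Agr t) : Set A))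
    -- with a faithful conditional expectation `E0 = Φ₀` onto the degree-zero subspace `A₀`:
    (E0 : A →ₗ[ℂ] A)
    (hE0mem : ∀ a, E0 a ∈ Agr 0)
    (hE0fix : ∀ a ∈ Agr 0, E0 a = a)
    (hE0t : ∀ t : Γ, t ≠ 0 → ∀ a ∈ Agr t, E0 a = 0)
    (hE0star : ∀ a, E0 (star a) = star (E0 a))
    (hE0contr : ∀ a, ‖E0 a‖ ≤ ‖a‖)
    (hE0pos : ∀ a : A, 0 ≤ a → 0 ≤ E0 a)
    (hE0bimod : ∀ a : A, ∀ b ∈ Agr 0, E0 (b * a) = b * E0 a ∧ E0 (a * b) = E0 a * b)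
    (hE0faith : ∀ a : A, E0 (star a * a) = 0 → a = 0)
    -- `D` is a Cartan subalgebra of `A₀`: a closed abelian *-subalgebra,
    (D : StarSubalgebra ℂ A)
    (hD0 : (D : Set A) ⊆ (Agr 0 : Set A))
    (hDclosed : IsClosed (D : Set A))
    (hDcomm : ∀ d ∈ D, ∀ e ∈ D, d * e = e * d)
    -- maximal abelian in `A₀`,
    (hDmasa : ∀ a ∈ Agr 0, (∀ d ∈ D, a * d = d * a) → a ∈ D)
    -- containing an approximate unit for `A₀`,
    (hDau : ∃ (ι : Type) (l : Filter ι) (e : ι → A), l.NeBot ∧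
      (∀ i, e i ∈ D ∧ 0 ≤ e i ∧ ‖e i‖ ≤ 1) ∧
      ∀ a ∈ Agr 0, Filter.Tendsto (fun i => e i * a) l (nhds a) ∧
        Filter.Tendsto (fun i => a * e i) l (nhds a))
    -- whose normalizers in `A₀` generate `A₀`,
    (hD0gen : ∀ a ∈ Agr 0, a ∈ closure (↑(Submodule.span ℂ
      {n : A | n ∈ Agr 0 ∧ ∀ d ∈ D, n * d * star n ∈ D ∧ star n * d * n ∈ D}) : Set A))
    -- with a faithful conditional expectation `ED = E` of `A₀` onto `D`:
    (ED : A →ₗ[ℂ] A)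
    (hEDmem : ∀ a, ED a ∈ D)
    (hEDfix : ∀ d ∈ D, ED d = d)
    (hEDstar : ∀ a, ED (star a) = star (ED a))
    (hEDcontr : ∀ a, ‖ED a‖ ≤ ‖a‖)
    (hEDpos : ∀ a : A, 0 ≤ a → 0 ≤ ED a)
    (hEDbimod : ∀ a : A, ∀ d ∈ D, ED (d * a) = d * ED a ∧ ED (a * d) = ED a * d)
    (hEDfaith : ∀ a ∈ Agr 0, ED (star a * a) = 0 → a = 0)
    -- and the normalizers `N(A,D)` of `D` in `A` densely span `A`:
    (hNdense : Dense (↑(Submodule.span ℂ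
      {n : A | ∀ d ∈ D, n * d * star n ∈ D ∧ star n * d * n ∈ D}) : Set A))
    -- `X = D̂` is the Gelfand spectrum of `D`, realized via the evaluation map `ev`:
    {X : Type*} [TopologicalSpace X] [T2Space X] [LocallyCompactSpace X]
    (ev : X → A → ℂ)
    (hev_cont : ∀ d ∈ D, Continuous fun x : X => ev x d)
    (hev_add : ∀ (x : X), ∀ d ∈ D, ∀ e ∈ D, ev x (d + e) = ev x d + ev x e)
    (hev_smul : ∀ (x : X) (c : ℂ), ∀ d ∈ D, ev x (c • d) = c * ev x d)
    (hev_mul : ∀ (x : X), ∀ d ∈ D, ∀ e ∈ D, ev x (d * e) = ev x d * ev x e)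
    (hev_star : ∀ (x : X), ∀ d ∈ D, ev x (star d) = starRingEnd ℂ (ev x d))
    (hev_sep : ∀ d ∈ D, (∀ x : X, ev x d = 0) → d = 0)
    (hev_ne : ∀ x : X, ∃ d ∈ D, ev x d ≠ 0)
    (hev_inj : ∀ x y : X, (∀ d ∈ D, ev x d = ev y d) → x = y)
    (hev_full : ∀ φ : A → ℂ, (∃ d ∈ D, φ d ≠ 0) →
      (∀ d ∈ D, ∀ e ∈ D, φ (d * e) = φ d * φ e) →
      (∀ d ∈ D, ∀ e ∈ D, φ (d + e) = φ d + φ e) →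
      (∀ (c : ℂ), ∀ d ∈ D, φ (c • d) = c * φ d) →
      (∀ d ∈ D, ‖φ d‖ ≤ ‖d‖) → ∃ x : X, ∀ d ∈ D, φ d = ev x d)
    (hev_top : Topology.IsInducing fun x : X => (fun d : D => ev x ↑d))
    -- `n` and `n′` are homogeneous normalizers of `D`:
    (n : A) (t : Γ) (hnt : n ∈ Agr t)
    (hn : ∀ d ∈ D, n * d * star n ∈ D ∧ star n * d * n ∈ D)
    (n' : A) (t' : Γ) (hnt' : n' ∈ Agr t')
    (hn' : ∀ d ∈ D, n' * d * star n' ∈ D ∧ star n' * d * n' ∈ D)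
    -- `(n,x)` and `(n′,x)` lie in `𝒢`:
    (x : X)
    (hxn : ev x (star n * n) ≠ 0) (hxn' : ev x (star n' * n') ≠ 0) :
    -- `∼_Σ` coincides with `≈_Σ` …
    ((∃ d ∈ D, ∃ d' ∈ D,
        IsCompact (closure {y : X | ev y d ≠ 0}) ∧
        IsCompact (closure {y : X | ev y d' ≠ 0}) ∧
        (∃ r : ℝ, 0 < r ∧ ev x d = r) ∧ (∃ r : ℝ, 0 < r ∧ ev x d' = r) ∧
        n * d = n' * d') ↔
      (∃ r : ℝ, 0 < r ∧ ev x (ED (E0 (star n * n'))) = r)) ∧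
    -- … and `∼_G` coincides with `≈_G`:
    ((∃ d ∈ D, ∃ d' ∈ D,
        IsCompact (closure {y : X | ev y d ≠ 0}) ∧
        IsCompact (closure {y : X | ev y d' ≠ 0}) ∧
        ev x d ≠ 0 ∧ ev x d' ≠ 0 ∧
        n * d = n' * d') ↔
      ev x (ED (E0 (star n * n'))) ≠ 0) :=
  gamma_cartan_stmt12_general Agr hgr_mul hgr_star E0 hE0fix hE0t hE0bimod D hD0 hDclosed hDcomm
    hDmasa ED hEDmem hEDfix hEDstar hEDpos hEDbimod ev hev_add hev_smul hev_mul hev_sep hev_ne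
    hev_full hev_top n t hnt hn n' t' hnt' hn' x hxn hxn'
end

section
/- Let Σ → G be a twist over an étale groupoid G equipped with continuous cocycles c_Σ : Σ → Γ and c_G : G → Γ into a discrete abelian group Γ making the grading diagram commute. Then there is a strongly continuous action of the dual group Ĝ = Γ̂ on C*_r(Σ;G) characterized on C_c(Σ;G) by (ω·f)(γ̇) = ⟨ω, c_G(γ̇)⟩ f(γ̇), and each ω acts isometrically for the reduced norm. -/
open scoped ComplexConjugate
open Filter Topology

noncomputable section

/-- A (Hausdorff) topological groupoid, presented with everywhere-defined structure maps:
`comp g h` is only meaningful when `src g = rng h`. -/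
structure TopGroupoidData (G : Type*) [TopologicalSpace G] where
  src : G → G
  rng : G → G
  comp : G → G → G
  inv : G → G
  src_src : ∀ g, src (src g) = src g
  rng_src : ∀ g, rng (src g) = src g
  src_rng : ∀ g, src (rng g) = rng g
  comp_assoc : ∀ g h k, src g = rng h → src h = rng k →
    comp (comp g h) k = comp g (comp h k)
  src_comp : ∀ g h, src g = rng h → src (comp g h) = src h
  rng_comp : ∀ g h, src g = rng h → rng (comp g h) = rng g
  comp_src : ∀ g, comp g (src g) = g
  rng_comp_self : ∀ g, comp (rng g) g = g
  inv_inv : ∀ g, inv (inv g) = g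
  src_inv : ∀ g, src (inv g) = rng g
  comp_inv : ∀ g, comp g (inv g) = rng g
  inv_comp : ∀ g, comp (inv g) g = src g
  continuous_src : Continuous src
  continuous_rng : Continuous rng
  continuous_inv : Continuous inv
  continuous_comp : Continuous fun p : {p : G × G // src p.1 = rng p.2} => comp p.1.1 p.1.2

namespace TopGroupoidData

variable {G : Type*} [TopologicalSpace G]

/-- The unit space `G⁽⁰⁾`. -/
def units (Gd : TopGroupoidData G) : Set G := Set.range Gd.src

/-- `G` is étale: every point has an open bisection neighbourhood on which `src` and `rng`
are open injections. -/
def IsEtale (Gd : TopGroupoidData G) : Prop :=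
  ∀ g : G, ∃ U : Set G, IsOpen U ∧ g ∈ U ∧ Set.InjOn Gd.src U ∧ Set.InjOn Gd.rng U ∧
    ∀ V ⊆ U, IsOpen V → IsOpen (Gd.src '' V) ∧ IsOpen (Gd.rng '' V)

end TopGroupoidData

/-- A twist `𝕋 × G⁽⁰⁾ → Σ → G`: a locally trivial central extension of the topological
groupoid `G` by the circle, together with a chosen (set-theoretic) section `lift` of `q`
and the resulting `𝕋`-valued cocycle `cocyc`. -/
structure TwistData (G S : Type*) [TopologicalSpace G] [TopologicalSpace S] where
  Gd : TopGroupoidData G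
  Sd : TopGroupoidData S
  q : S → G
  q_surj : Function.Surjective q
  q_cont : Continuous q
  q_src : ∀ σ, q (Sd.src σ) = Gd.src (q σ)
  q_rng : ∀ σ, q (Sd.rng σ) = Gd.rng (q σ)
  q_comp : ∀ σ τ, Sd.src σ = Sd.rng τ → q (Sd.comp σ τ) = Gd.comp (q σ) (q τ)
  q_inv : ∀ σ, q (Sd.inv σ) = Gd.inv (q σ)
  q_unit_bij : Set.BijOn q Sd.units Gd.units
  act : Circle → S → S
  act_one : ∀ σ, act 1 σ = σ
  act_mul : ∀ z w σ, act z (act w σ) = act (z * w) σ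
  act_cont : Continuous fun p : Circle × S => act p.1 p.2
  act_free : ∀ z σ, act z σ = σ → z = 1
  act_fiber : ∀ σ τ, q σ = q τ → ∃ z, τ = act z σ
  q_act : ∀ z σ, q (act z σ) = q σ
  act_central : ∀ z σ τ, Sd.src σ = Sd.rng τ →
    Sd.comp (act z σ) τ = act z (Sd.comp σ τ) ∧ Sd.comp σ (act z τ) = act z (Sd.comp σ τ)
  loc_triv : ∀ g : G, ∃ (U : Set G) (φ : G → S), IsOpen U ∧ g ∈ U ∧
    ContinuousOn φ U ∧ ∀ h ∈ U, q (φ h) = h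
  lift : G → S
  q_lift : ∀ g, q (lift g) = g
  cocyc : G → G → Circle
  lift_comp : ∀ g h, Gd.src g = Gd.rng h →
    Sd.comp (lift g) (lift h) = act (cocyc g h) (lift (Gd.comp g h))

namespace TwistData

variable {G S : Type*} [TopologicalSpace G] [TopologicalSpace S]

/-- A function `f : Σ → ℂ` is covariant when `f(z·γ) = z̄ f(γ)`. -/
def IsCovariant (T : TwistData G S) (f : S → ℂ) : Prop :=
  ∀ (z : Circle) (σ : S), f (T.act z σ) = conj (z : ℂ) * f σ

/-- Membership in `C_c(Σ;G)`: continuous, compactly supported, covariant functions. -/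
def MemCc (T : TwistData G S) (f : S → ℂ) : Prop :=
  Continuous f ∧ HasCompactSupport f ∧ T.IsCovariant f

/-- The convolution product on `C_c(Σ;G)`:
`(f * g)(γ) = ∑_{r(η̇) = r(γ̇)} f(η) g(η⁻¹ γ)`, with one lift `η` chosen for each `η̇ ∈ G`. -/
def conv (T : TwistData G S) (f g : S → ℂ) : S → ℂ :=
  fun σ => ∑' η : {h : G // T.Gd.rng h = T.Gd.rng (T.q σ)},
    f (T.lift η.1) * g (T.Sd.comp (T.Sd.inv (T.lift η.1)) σ)

/-- The involution on `C_c(Σ;G)`: `f*(γ) = conj (f (γ⁻¹))`. -/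
def starF (T : TwistData G S) (f : S → ℂ) : S → ℂ :=
  fun σ => conj (f (T.Sd.inv σ))

/-- The regular representation `π_x` at a unit `x`, acting on (the trivialization via `lift` of)
square-summable sections over `Gx`. -/
def pix (T : TwistData G S) (x : G) (f : S → ℂ)
    (χ : {g : G // T.Gd.src g = x} → ℂ) : {g : G // T.Gd.src g = x} → ℂ :=
  fun γ => ∑' η : {g : G // T.Gd.src g = x},
    f (T.lift (T.Gd.comp γ.1 (T.Gd.inv η.1))) *
      ((T.cocyc (T.Gd.comp γ.1 (T.Gd.inv η.1)) η.1 : ℂ)) * χ η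

/-- The `ℓ²`-norm of a section over `Gx`. -/
def l2norm (T : TwistData G S) (x : G)
    (χ : {g : G // T.Gd.src g = x} → ℂ) : ℝ :=
  Real.sqrt (∑' γ : {g : G // T.Gd.src g = x}, ‖χ γ‖ ^ 2)

/-- The reduced norm `‖f‖ᵣ = sup_{x ∈ G⁽⁰⁾} ‖π_x(f)‖`. -/
def rnorm (T : TwistData G S) (f : S → ℂ) : ℝ :=
  ⨆ x : G, ⨆ _ : x ∈ T.Gd.units, ⨆ χ : {g : G // T.Gd.src g = x} → ℂ,
    ⨆ _ : (Function.support χ).Finite ∧ T.l2norm x χ ≤ 1, T.l2norm x (T.pix x f χ)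

end TwistData

/-!
Multiplying `f ∈ C_c(Σ;G)` by `ψ ∘ q` for a groupoid character `ψ : G → 𝕋` (here `ψ = ω ∘ c_G`)
is a *-automorphism of the convolution algebra. In the regular representation `π_x` it is
conjugation by the diagonal unitary `γ ↦ ψ(γ)` on `ℓ²(Gx)`, so it preserves the reduced norm.
For strong continuity, étaleness bounds the number of points of a compact set in each `s`- or
`r`-fibre by some `n`, so the Schur test gives `‖g‖ᵣ ≤ n ‖g‖_∞` for all `g` supported over a
fixed compact set; and pointwise convergence of characters `ω` gives uniform convergence of
`ω ∘ c_G` on the compact set `q(supp f)`, where `c_G` takes only finitely many values.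
-/

theorem IsCompact.exists_card_le_of_forall_injOn {X Y : Type*} [TopologicalSpace X] {K : Set X}
    (hK : IsCompact K) (F : X → Y) (hF : ∀ x, ∃ U, IsOpen U ∧ x ∈ U ∧ Set.InjOn F U) :
    ∃ n : ℕ, ∀ (y : Y) (s : Finset X), ↑s ⊆ K ∩ F ⁻¹' {y} → s.card ≤ n := by
  choose U hUopen hxU hUinj using hF
  obtain ⟨t, ht⟩ := hK.elim_finite_subcover U hUopen fun x _ => Set.mem_iUnion.2 ⟨x, hxU x⟩
  refine ⟨t.card, fun y s hs => ?_⟩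
  have hcover : ∀ x ∈ s, ∃ i ∈ t, x ∈ U i := fun x hx => by simpa using ht (hs hx).1
  choose! idx hidx hxidx using hcover
  refine Finset.card_le_card_of_injOn idx hidx fun x hx x' hx' he => ?_
  exact hUinj (idx x) (hxidx x hx) (he ▸ hxidx x' hx') (((hs hx).2).trans ((hs hx').2).symm)

theorem Set.Finite.tendstoUniformlyOn_of_tendsto {α β ι : Type*} [UniformSpace β]
    {F : ι → α → β} {f : α → β} {l : Filter ι} {s : Set α} (hs : s.Finite)
    (hF : ∀ x ∈ s, Tendsto (fun i => F i x) l (𝓝 (f x))) : TendstoUniformlyOn F f l s :=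
  fun _ hu => hs.eventually_all.2 fun x hx => Uniform.tendsto_nhds_right.1 (hF x hx) hu

theorem sum_norm_le_of_injective_of_card_le {ι κ : Type*} {a : ι → ℂ} {c : ℝ} (hc0 : 0 ≤ c)
    (hc : ∀ i, ‖a i‖ ≤ c) {e : ι → κ} (he : Function.Injective e) {A : Set κ} {n : ℕ}
    (hn : ∀ t : Finset κ, ↑t ⊆ A → t.card ≤ n) (hA : ∀ i, a i ≠ 0 → e i ∈ A) (s : Finset ι) :
    ∑ i ∈ s, ‖a i‖ ≤ n * c := by
  classical
  have hcard : (s.filter (a · ≠ 0)).card ≤ n := by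
    rw [← Finset.card_image_of_injective _ he]
    refine hn _ fun y hy => ?_
    obtain ⟨i, hi, rfl⟩ := Finset.mem_image.1 (Finset.mem_coe.1 hy)
    exact hA i (Finset.mem_filter.1 hi).2
  calc ∑ i ∈ s, ‖a i‖ = ∑ i ∈ s.filter (a · ≠ 0), ‖a i‖ :=
        (Finset.sum_filter_of_ne fun i _ h => norm_ne_zero_iff.1 h).symm
    _ ≤ (s.filter (a · ≠ 0)).card * c := by
        simpa using Finset.sum_le_card_nsmul _ _ c fun i _ => hc i
    _ ≤ n * c := by gcongr

/-- The Schur test, for finitely supported vectors. -/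
theorem sum_norm_sq_sum_mul_le_of_rows_cols {ι : Type*} (k : ι → ι → ℂ) {C : ℝ}
    (hrow : ∀ γ s, ∑ η ∈ s, ‖k γ η‖ ≤ C) (hcol : ∀ η s, ∑ γ ∈ s, ‖k γ η‖ ≤ C)
    (u t : Finset ι) (v : ι → ℂ) :
    ∑ γ ∈ t, ‖∑ η ∈ u, k γ η * v η‖ ^ 2 ≤ C ^ 2 * ∑ η ∈ u, ‖v η‖ ^ 2 := by
  have hrowsq : ∀ γ, ‖∑ η ∈ u, k γ η * v η‖ ^ 2 ≤ C * ∑ η ∈ u, ‖k γ η‖ * ‖v η‖ ^ 2 := by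
    intro γ
    have hcs : (∑ η ∈ u, ‖k γ η‖ * ‖v η‖) ^ 2 ≤
        (∑ η ∈ u, ‖k γ η‖) * ∑ η ∈ u, ‖k γ η‖ * ‖v η‖ ^ 2 :=
      Finset.sum_sq_le_sum_mul_sum_of_sq_le_mul u (fun _ _ => norm_nonneg _)
        (fun _ _ => by positivity) fun _ _ => le_of_eq (by ring)
    calc ‖∑ η ∈ u, k γ η * v η‖ ^ 2 ≤ (∑ η ∈ u, ‖k γ η‖ * ‖v η‖) ^ 2 := by
          gcongr
          exact (norm_sum_le _ _).trans_eq (by simp only [norm_mul])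
      _ ≤ _ := hcs.trans (by gcongr; exact hrow γ u)
  calc ∑ γ ∈ t, ‖∑ η ∈ u, k γ η * v η‖ ^ 2
      ≤ ∑ γ ∈ t, C * ∑ η ∈ u, ‖k γ η‖ * ‖v η‖ ^ 2 := Finset.sum_le_sum fun γ _ => hrowsq γ
    _ = ∑ η ∈ u, (∑ γ ∈ t, ‖k γ η‖) * (C * ‖v η‖ ^ 2) := by
        simp only [Finset.mul_sum, Finset.sum_mul]
        rw [Finset.sum_comm]
        exact Finset.sum_congr rfl fun _ _ => Finset.sum_congr rfl fun _ _ => by ring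
    _ ≤ ∑ η ∈ u, C * (C * ‖v η‖ ^ 2) := by
        refine Finset.sum_le_sum fun η _ => ?_
        have hC : 0 ≤ C := by simpa using hcol η ∅
        gcongr
        exact hcol η t
    _ = C ^ 2 * ∑ η ∈ u, ‖v η‖ ^ 2 := by rw [Finset.mul_sum]; ring_nf

namespace TopGroupoidData

variable {G : Type*} [TopologicalSpace G] (Gd : TopGroupoidData G)

lemma rng_inv (g : G) : Gd.rng (Gd.inv g) = Gd.src g := by
  rw [← Gd.src_inv (Gd.inv g), Gd.inv_inv]

lemma inv_injective : Function.Injective Gd.inv :=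
  Function.LeftInverse.injective Gd.inv_inv

variable {Gd} {g h : G}

lemma src_eq_rng_inv (hgh : Gd.src g = Gd.src h) : Gd.src g = Gd.rng (Gd.inv h) := by
  rw [rng_inv, hgh]

lemma src_comp_inv (hgh : Gd.src g = Gd.src h) : Gd.src (Gd.comp g (Gd.inv h)) = Gd.rng h := by
  rw [Gd.src_comp _ _ (src_eq_rng_inv hgh), Gd.src_inv]

lemma rng_comp_inv (hgh : Gd.src g = Gd.src h) : Gd.rng (Gd.comp g (Gd.inv h)) = Gd.rng g :=
  Gd.rng_comp _ _ (src_eq_rng_inv hgh)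

lemma comp_inv_comp_cancel (hgh : Gd.src g = Gd.src h) :
    Gd.comp (Gd.comp g (Gd.inv h)) h = g := by
  rw [Gd.comp_assoc _ _ _ (src_eq_rng_inv hgh) (Gd.src_inv h), Gd.inv_comp, ← hgh, Gd.comp_src]

lemma inv_comp_comp_inv_cancel (hgh : Gd.src g = Gd.src h) :
    Gd.comp (Gd.inv g) (Gd.comp g (Gd.inv h)) = Gd.inv h := by
  rw [← Gd.comp_assoc _ _ _ (Gd.src_inv g) (src_eq_rng_inv hgh), Gd.inv_comp, hgh,
    ← rng_inv, Gd.rng_comp_self]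

lemma comp_inv_injective_left {x : G} (η : {g : G // Gd.src g = x}) :
    Function.Injective fun γ : {g : G // Gd.src g = x} => Gd.comp γ.1 (Gd.inv η.1) :=
  fun γ₁ γ₂ he => Subtype.ext <| by
    rw [← comp_inv_comp_cancel (γ₁.2.trans η.2.symm), ← comp_inv_comp_cancel (γ₂.2.trans η.2.symm)]
    exact congrArg (Gd.comp · η.1) he

lemma comp_inv_injective_right {x : G} (γ : {g : G // Gd.src g = x}) :
    Function.Injective fun η : {g : G // Gd.src g = x} => Gd.comp γ.1 (Gd.inv η.1) :=
  fun η₁ η₂ he => Subtype.ext <| Gd.inv_injective <| by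
    rw [← inv_comp_comp_inv_cancel (γ.2.trans η₁.2.symm),
      ← inv_comp_comp_inv_cancel (γ.2.trans η₂.2.symm)]
    exact congrArg (Gd.comp (Gd.inv γ.1)) he

lemma IsEtale.exists_card_fiber_le (hGd : Gd.IsEtale) {K : Set G} (hK : IsCompact K) :
    ∃ n : ℕ, (∀ u (s : Finset G), ↑s ⊆ K ∩ Gd.src ⁻¹' {u} → s.card ≤ n) ∧
      (∀ u (s : Finset G), ↑s ⊆ K ∩ Gd.rng ⁻¹' {u} → s.card ≤ n) := by
  obtain ⟨n₁, hn₁⟩ := hK.exists_card_le_of_forall_injOn Gd.src fun g => by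
    obtain ⟨U, hU, hgU, hsrc, -⟩ := hGd g
    exact ⟨U, hU, hgU, hsrc⟩
  obtain ⟨n₂, hn₂⟩ := hK.exists_card_le_of_forall_injOn Gd.rng fun g => by
    obtain ⟨U, hU, hgU, -, hrng, -⟩ := hGd g
    exact ⟨U, hU, hgU, hrng⟩
  exact ⟨max n₁ n₂, fun u s hs => (hn₁ u s hs).trans (le_max_left _ _),
    fun u s hs => (hn₂ u s hs).trans (le_max_right _ _)⟩

variable (Gd) in
structure IsCircleCharacter (ψ : G → Circle) : Prop where
  map_comp : ∀ g h, Gd.src g = Gd.rng h → ψ (Gd.comp g h) = ψ g * ψ h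
  map_inv : ∀ g, ψ (Gd.inv g) = (ψ g)⁻¹

lemma IsCircleCharacter.map_comp_inv {ψ : G → Circle} (hψ : Gd.IsCircleCharacter ψ)
    (hgh : Gd.src g = Gd.src h) : ψ (Gd.comp g (Gd.inv h)) = ψ g * (ψ h)⁻¹ := by
  rw [hψ.map_comp _ _ (src_eq_rng_inv hgh), hψ.map_inv]

end TopGroupoidData

namespace TwistData

variable {G S : Type*} [TopologicalSpace G] [TopologicalSpace S] (T : TwistData G S)

def gauge (ψ : G → Circle) (f : S → ℂ) : S → ℂ := fun σ => ψ (T.q σ) * f σ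

lemma gauge_one (f : S → ℂ) : T.gauge 1 f = f :=
  funext fun σ => by simp [gauge]

lemma gauge_mul (ψ₁ ψ₂ : G → Circle) (f : S → ℂ) :
    T.gauge (ψ₁ * ψ₂) f = T.gauge ψ₁ (T.gauge ψ₂ f) :=
  funext fun σ => by simp [gauge, mul_assoc]

variable {T}

lemma MemCc.gauge {ψ : G → Circle} (hψ : Continuous ψ) {f : S → ℂ} (hf : T.MemCc f) :
    T.MemCc (T.gauge ψ f) := by
  obtain ⟨hfc, hfs, hfcov⟩ := hf
  refine ⟨(continuous_subtype_val.comp (hψ.comp T.q_cont)).mul hfc, hfs.mul_left, fun z σ => ?_⟩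
  simp only [TwistData.gauge, T.q_act]
  rw [hfcov]
  ring

lemma src_inv_lift (σ : S) (η : {h : G // T.Gd.rng h = T.Gd.rng (T.q σ)}) :
    T.Sd.src (T.Sd.inv (T.lift η.1)) = T.Sd.rng σ :=
  T.q_unit_bij.injOn ⟨_, rfl⟩ ⟨T.Sd.rng σ, T.Sd.src_rng σ⟩ <| by
    rw [T.q_src, T.q_inv, T.Gd.src_inv, T.q_lift, η.2, ← T.q_rng]

variable {ψ : G → Circle}

lemma gauge_conv (hψ : T.Gd.IsCircleCharacter ψ) (f g : S → ℂ) :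
    T.gauge ψ (T.conv f g) = T.conv (T.gauge ψ f) (T.gauge ψ g) := by
  funext σ
  simp only [gauge, conv, ← tsum_mul_left]
  refine tsum_congr fun η => ?_
  have hq : ψ (T.q (T.Sd.comp (T.Sd.inv (T.lift η.1)) σ)) = (ψ η.1)⁻¹ * ψ (T.q σ) := by
    rw [T.q_comp _ _ (src_inv_lift σ η), T.q_inv, T.q_lift,
      hψ.map_comp _ _ (by rw [T.Gd.src_inv, η.2]), hψ.map_inv]
  rw [hq, T.q_lift, Circle.coe_mul, Circle.coe_inv_eq_conj]
  have hunit : (ψ η.1 : ℂ) * conj (ψ η.1 : ℂ) = 1 := by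
    rw [Complex.mul_conj, Complex.normSq_eq_norm_sq, Circle.norm_coe]; norm_num
  linear_combination -(ψ (T.q σ) : ℂ) * f (T.lift η.1) *
    g (T.Sd.comp (T.Sd.inv (T.lift η.1)) σ) * hunit

lemma gauge_starF (hψ : T.Gd.IsCircleCharacter ψ) (f : S → ℂ) :
    T.gauge ψ (T.starF f) = T.starF (T.gauge ψ f) :=
  funext fun σ => by
    simp only [gauge, starF, T.q_inv, hψ.map_inv, map_mul, Circle.coe_inv_eq_conj,
      Complex.conj_conj]

lemma l2norm_circle_mul {x : G} (u : {g : G // T.Gd.src g = x} → Circle)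
    (χ : {g : G // T.Gd.src g = x} → ℂ) :
    T.l2norm x (fun γ => u γ * χ γ) = T.l2norm x χ := by
  simp only [l2norm, norm_mul, Circle.norm_coe, one_mul]

lemma pix_gauge (hψ : T.Gd.IsCircleCharacter ψ) {x : G} (f : S → ℂ)
    (χ : {g : G // T.Gd.src g = x} → ℂ) (γ : {g : G // T.Gd.src g = x}) :
    T.pix x (T.gauge ψ f) χ γ = ψ γ * T.pix x f (fun η => ((ψ η)⁻¹ : Circle) * χ η) γ := by
  simp only [pix, gauge, ← tsum_mul_left, T.q_lift]
  refine tsum_congr fun η => ?_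
  rw [hψ.map_comp_inv (γ.2.trans η.2.symm), Circle.coe_mul]
  ring

lemma rnorm_gauge (hψ : T.Gd.IsCircleCharacter ψ) (f : S → ℂ) :
    T.rnorm (T.gauge ψ f) = T.rnorm f := by
  refine iSup_congr fun x => iSup_congr fun _ => ?_
  let V : ({g : G // T.Gd.src g = x} → ℂ) ≃ ({g : G // T.Gd.src g = x} → ℂ) :=
    { toFun := fun χ η => ((ψ η)⁻¹ : Circle) * χ η
      invFun := fun χ η => ψ η * χ η
      left_inv := fun χ => funext fun η => by simp
      right_inv := fun χ => funext fun η => by simp }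
  have hsupp : ∀ χ, Function.support (V χ) = Function.support χ := fun χ => by
    ext η; simp [V]
  conv_rhs => rw [← V.iSup_comp]
  refine iSup_congr fun χ => ?_
  have hl2 : T.l2norm x (V χ) = T.l2norm x χ := l2norm_circle_mul _ χ
  have hpix : T.l2norm x (T.pix x (T.gauge ψ f) χ) = T.l2norm x (T.pix x f (V χ)) := by
    rw [funext (pix_gauge hψ f χ), l2norm_circle_mul]
    rfl
  rw [hsupp, hl2, hpix]

lemma rnorm_le {g : S → ℂ} {C : ℝ} (hC : 0 ≤ C)
    (h : ∀ x (χ : {g : G // T.Gd.src g = x} → ℂ), (Function.support χ).Finite →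
      T.l2norm x χ ≤ 1 → T.l2norm x (T.pix x g χ) ≤ C) :
    T.rnorm g ≤ C :=
  Real.iSup_le (fun x => Real.iSup_le (fun _ => Real.iSup_le (fun χ =>
    Real.iSup_le (fun hχ => h x χ hχ.1 hχ.2) hC) hC) hC) hC

lemma rnorm_nonneg (g : S → ℂ) : 0 ≤ T.rnorm g :=
  Real.iSup_nonneg fun _ => Real.iSup_nonneg fun _ => Real.iSup_nonneg fun _ =>
    Real.iSup_nonneg fun _ => Real.sqrt_nonneg _

lemma l2norm_pix_le {K : Set G} {n : ℕ}
    (hsrc : ∀ u (s : Finset G), ↑s ⊆ K ∩ T.Gd.src ⁻¹' {u} → s.card ≤ n)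
    (hrng : ∀ u (s : Finset G), ↑s ⊆ K ∩ T.Gd.rng ⁻¹' {u} → s.card ≤ n)
    {g : S → ℂ} {c : ℝ} (hc0 : 0 ≤ c) (hc : ∀ σ, ‖g σ‖ ≤ c) (hgK : ∀ σ, g σ ≠ 0 → T.q σ ∈ K)
    {x : G} {χ : {g : G // T.Gd.src g = x} → ℂ} (hχ : (Function.support χ).Finite)
    (hχ1 : T.l2norm x χ ≤ 1) :
    T.l2norm x (T.pix x g χ) ≤ n * c := by
  set k : {g : G // T.Gd.src g = x} → {g : G // T.Gd.src g = x} → ℂ := fun γ η =>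
    g (T.lift (T.Gd.comp γ.1 (T.Gd.inv η.1))) * (T.cocyc (T.Gd.comp γ.1 (T.Gd.inv η.1)) η.1 : ℂ)
  have hk : ∀ γ η, ‖k γ η‖ ≤ c := fun γ η => by
    simp only [k, norm_mul, Circle.norm_coe, mul_one]
    exact hc _
  have hkK : ∀ γ η, k γ η ≠ 0 → T.Gd.comp γ.1 (T.Gd.inv η.1) ∈ K := fun γ η h => by
    simpa [T.q_lift] using hgK _ (left_ne_zero_of_mul h)
  have hrow : ∀ γ s, ∑ η ∈ s, ‖k γ η‖ ≤ n * c := fun γ =>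
    sum_norm_le_of_injective_of_card_le hc0 (hk γ) (TopGroupoidData.comp_inv_injective_right γ)
      (hrng (T.Gd.rng γ.1))
      fun η h => ⟨hkK γ η h, TopGroupoidData.rng_comp_inv (γ.2.trans η.2.symm)⟩
  have hcol : ∀ η s, ∑ γ ∈ s, ‖k γ η‖ ≤ n * c := fun η =>
    sum_norm_le_of_injective_of_card_le hc0 (fun γ => hk γ η)
      (TopGroupoidData.comp_inv_injective_left η) (hsrc (T.Gd.rng η.1))
      fun γ h => ⟨hkK γ η h, TopGroupoidData.src_comp_inv (γ.2.trans η.2.symm)⟩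
  have hχ0 : ∀ η ∉ hχ.toFinset, χ η = 0 := fun η hη => by simpa using hη
  have hpix : ∀ γ, T.pix x g χ γ = ∑ η ∈ hχ.toFinset, k γ η * χ η := fun γ =>
    tsum_eq_sum fun η hη => by rw [hχ0 η hη, mul_zero]
  have hχsum : ∑ η ∈ hχ.toFinset, ‖χ η‖ ^ 2 ≤ 1 := by
    have hfin : ∑' η, ‖χ η‖ ^ 2 = ∑ η ∈ hχ.toFinset, ‖χ η‖ ^ 2 :=
      tsum_eq_sum fun η hη => by rw [hχ0 η hη, norm_zero, sq, mul_zero]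
    rw [← hfin]
    exact Real.sqrt_le_one.1 hχ1
  have hsq : ∑' γ, ‖T.pix x g χ γ‖ ^ 2 ≤ (n * c) ^ 2 :=
    Real.tsum_le_of_sum_le (fun _ => sq_nonneg _) fun t => by
      simp only [hpix]
      refine (sum_norm_sq_sum_mul_le_of_rows_cols k hrow hcol _ t χ).trans ?_
      exact mul_le_of_le_one_right (sq_nonneg _) hχsum
  exact Real.sqrt_le_left (by positivity) |>.2 hsq

lemma exists_rnorm_le (hetale : T.Gd.IsEtale) {K : Set G} (hK : IsCompact K) :
    ∃ n : ℕ, ∀ (g : S → ℂ) (c : ℝ), 0 ≤ c → (∀ σ, ‖g σ‖ ≤ c) → (∀ σ, g σ ≠ 0 → T.q σ ∈ K) →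
      T.rnorm g ≤ n * c := by
  obtain ⟨n, hsrc, hrng⟩ := hetale.exists_card_fiber_le hK
  exact ⟨n, fun g c hc0 hc hgK => rnorm_le (by positivity) fun x χ hχ hχ1 =>
    l2norm_pix_le hsrc hrng hc0 hc hgK hχ hχ1⟩

lemma tendsto_rnorm_gauge_sub (hetale : T.Gd.IsEtale) {f : S → ℂ} (hfc : Continuous f)
    (hfs : HasCompactSupport f) {ι : Type*} {l : Filter ι} {ψ : ι → G → Circle} {ψ₀ : G → Circle}
    (hψ : TendstoUniformlyOn ψ ψ₀ l (T.q '' tsupport f)) :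
    Tendsto (fun i => T.rnorm (T.gauge (ψ i) f - T.gauge ψ₀ f)) l (𝓝 0) := by
  obtain ⟨n, hn⟩ := exists_rnorm_le hetale (hfs.image T.q_cont)
  obtain ⟨M, hM⟩ := hfc.bounded_above_of_compact_support hfs
  set B : ℝ := n * max M 0 + 1
  have hB : 0 < B := by positivity
  rw [Metric.tendsto_nhds]
  intro ε hε
  filter_upwards [Metric.tendstoUniformlyOn_iff.1 hψ (ε / B) (by positivity)] with i hi
  have hbound : ∀ σ, ‖(T.gauge (ψ i) f - T.gauge ψ₀ f) σ‖ ≤ ε / B * max M 0 := fun σ => by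
    by_cases hσ : f σ = 0
    · simp [gauge, hσ]
      positivity
    have hdist := hi _ ⟨σ, subset_tsupport f hσ, rfl⟩
    rw [dist_comm] at hdist
    change dist (ψ i (T.q σ) : ℂ) (ψ₀ (T.q σ)) < ε / B at hdist
    rw [dist_eq_norm] at hdist
    simp only [Pi.sub_apply, gauge, ← sub_mul, norm_mul]
    exact mul_le_mul hdist.le ((hM σ).trans (le_max_left _ _)) (norm_nonneg _) (by positivity)
  have hsupp : ∀ σ, (T.gauge (ψ i) f - T.gauge ψ₀ f) σ ≠ 0 → T.q σ ∈ T.q '' tsupport f :=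
    fun σ h => ⟨σ, subset_tsupport f fun hf => h (by simp [gauge, hf]), rfl⟩
  have hle := hn _ _ (by positivity) hbound hsupp
  rw [Real.dist_0_eq_abs, abs_of_nonneg (rnorm_nonneg _)]
  calc T.rnorm _ ≤ n * (ε / B * max M 0) := hle
    _ = ε / B * (n * max M 0) := by ring
    _ < ε / B * B := by gcongr; linarith
    _ = ε := div_mul_cancel₀ ε hB.ne'

end TwistData

theorem twist_stmt17_general
    {G S : Type*} [TopologicalSpace G] [TopologicalSpace S]
    (T : TwistData G S) (hetale : T.Gd.IsEtale)
    -- `Γ`-grading cocycles `c_Σ` and `c_G` with `c_Σ = c_G ∘ q`: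
    {Γ : Type*} [AddCommGroup Γ] [TopologicalSpace Γ] [DiscreteTopology Γ]
    (cG : G → Γ) (cS : S → Γ)
    (hcG_cont : Continuous cG)
    (hcG_comp : ∀ g h, T.Gd.src g = T.Gd.rng h → cG (T.Gd.comp g h) = cG g + cG h)
    (hcG_inv : ∀ g, cG (T.Gd.inv g) = - cG g)
    (hcS_q : ∀ σ, cS σ = cG (T.q σ))
 :
    -- the action of a character `ω ∈ Γ̂` on `C_c(Σ;G)`:
    let wact : AddChar Γ Circle → (S → ℂ) → (S → ℂ) :=
      fun ω f σ => ((ω (cS σ) : ℂ)) * f σ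
    -- it preserves `C_c(Σ;G)` and is a *-algebra automorphism …
    (∀ ω f, T.MemCc f → T.MemCc (wact ω f)) ∧
    (∀ ω f g, T.MemCc f → T.MemCc g →
      wact ω (T.conv f g) = T.conv (wact ω f) (wact ω g)) ∧
    (∀ ω f, T.MemCc f → wact ω (T.starF f) = T.starF (wact ω f)) ∧
    -- … defining an action of `Γ̂` …
    (∀ f, wact 1 f = f) ∧
    (∀ ω₁ ω₂ f, wact (ω₁ * ω₂) f = wact ω₁ (wact ω₂ f)) ∧
    --… each `ω` acting isometrically for the reduced norm …
    (∀ ω f, T.MemCc f → T.rnorm (wact ω f) = T.rnorm f) ∧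
    -- … and the action is strongly continuous, hence extends to `C*_r(Σ;G)`:
    (∀ f, T.MemCc f → ∀ {ι : Type} (l : Filter ι)
        (w : ι → AddChar Γ Circle) (w₀ : AddChar Γ Circle),
      (∀ t : Γ, Filter.Tendsto (fun i => w i t) l (nhds (w₀ t))) →
      Filter.Tendsto (fun i => T.rnorm (wact (w i) f - wact w₀ f)) l (nhds 0)) := by
  intro wact
  let ψ : AddChar Γ Circle → G → Circle := fun ω g => ω (cG g)
  have hwact : ∀ ω, wact ω = T.gauge (ψ ω) := fun ω => funext fun f => funext fun σ => by
    simp only [wact, ψ, TwistData.gauge, hcS_q]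
  have hψ : ∀ ω, T.Gd.IsCircleCharacter (ψ ω) := fun ω =>
    ⟨fun g h hgh => by simp only [ψ, hcG_comp g h hgh, AddChar.map_add_eq_mul],
      fun g => by simp only [ψ, hcG_inv, AddChar.map_neg_eq_inv]⟩
  have hψ_one : ψ 1 = 1 := funext fun _ => AddChar.one_apply _
  have hψ_mul : ∀ ω₁ ω₂, ψ (ω₁ * ω₂) = ψ ω₁ * ψ ω₂ := fun _ _ => funext fun _ => AddChar.mul_apply ..
  simp only [hwact, hψ_one, hψ_mul]
  refine ⟨fun ω f hf => hf.gauge (continuous_of_discreteTopology.comp hcG_cont),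
    fun ω f g _ _ => T.gauge_conv (hψ ω) f g, fun ω f _ => T.gauge_starF (hψ ω) f, T.gauge_one,
    fun ω₁ ω₂ f => T.gauge_mul _ _ f, fun ω f _ => T.rnorm_gauge (hψ ω) f, ?_⟩
  rintro f ⟨hfc, hfs, -⟩ ι l w w₀ hw
  have hvalues : (cG '' (T.q '' tsupport f)).Finite :=
    ((hfs.image T.q_cont).image hcG_cont).finite_of_discrete
  refine TwistData.tendsto_rnorm_gauge_sub hetale hfc hfs ?_
  exact ((hvalues.tendstoUniformlyOn_of_tendsto fun t _ => hw t).comp cG).mono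
    (Set.subset_preimage_image _ _)

/-- Let `Σ → G` be a twist over an étale groupoid equipped with continuous cocycles `c_Σ : Σ → Γ`, `c_G : G → Γ` into a discrete abelian group `Γ` making the grading diagram commute.  Then there is a strongly continuous action of `Γ̂` on `C*_r(Σ;G)` characterized on `C_c(Σ;G)` by `(ω·f)(γ) = ⟨ω, c_Σ(γ)⟩ f(γ)`, and each `ω` acts isometrically for the reduced norm. -/
theorem twist_stmt17
    {G S : Type*} [TopologicalSpace G] [TopologicalSpace S]
    [T2Space G] [T2Space S] [LocallyCompactSpace G] [LocallyCompactSpace S]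
    (T : TwistData G S) (hetale : T.Gd.IsEtale)
    -- `Γ`-grading cocycles `c_Σ` and `c_G` with `c_Σ = c_G ∘ q`:
    {Γ : Type*} [AddCommGroup Γ] [TopologicalSpace Γ] [DiscreteTopology Γ]
    (cG : G → Γ) (cS : S → Γ)
    (hcG_cont : Continuous cG) (hcS_cont : Continuous cS)
    (hcG_comp : ∀ g h, T.Gd.src g = T.Gd.rng h → cG (T.Gd.comp g h) = cG g + cG h)
    (hcG_inv : ∀ g, cG (T.Gd.inv g) = - cG g)
    (hcS_q : ∀ σ, cS σ = cG (T.q σ))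
 :
    -- the action of a character `ω ∈ Γ̂` on `C_c(Σ;G)`:
    let wact : AddChar Γ Circle → (S → ℂ) → (S → ℂ) :=
      fun ω f σ => ((ω (cS σ) : ℂ)) * f σ
    -- it preserves `C_c(Σ;G)` and is a *-algebra automorphism …
    (∀ ω f, T.MemCc f → T.MemCc (wact ω f)) ∧
    (∀ ω f g, T.MemCc f → T.MemCc g →
      wact ω (T.conv f g) = T.conv (wact ω f) (wact ω g)) ∧
    (∀ ω f, T.MemCc f → wact ω (T.starF f) = T.starF (wact ω f)) ∧
    -- … defining an action of `Γ̂` …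
    (∀ f, wact 1 f = f) ∧
    (∀ ω₁ ω₂ f, wact (ω₁ * ω₂) f = wact ω₁ (wact ω₂ f)) ∧
    --… each `ω` acting isometrically for the reduced norm …
    (∀ ω f, T.MemCc f → T.rnorm (wact ω f) = T.rnorm f) ∧
    -- … and the action is strongly continuous, hence extends to `C*_r(Σ;G)`:
    (∀ f, T.MemCc f → ∀ {ι : Type} (l : Filter ι)
        (w : ι → AddChar Γ Circle) (w₀ : AddChar Γ Circle),
      (∀ t : Γ, Filter.Tendsto (fun i => w i t) l (nhds (w₀ t))) →
      Filter.Tendsto (fun i => T.rnorm (wact (w i) f - wact w₀ f)) l (nhds 0)) :=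
  twist_stmt17_general T hetale cG cS hcG_cont hcG_comp hcG_inv hcS_q
end
end

section
/- Let Σ → G be a Γ-graded twist over an étale groupoid G (Γ discrete abelian), and let R = c_G⁻¹(0), 𝒫 = c_Σ⁻¹(0). Then the image of C*_r(𝒫;R) under the extension-by-zero embedding into C*_r(Σ;G) equals the fixed-point algebra C*_r(Σ;G)^Γ̂ of the induced Γ̂-action. -/
open scoped ComplexConjugate
open Filter Topology

noncomputable section

/-!
The dual group `Γ̂` separates the points of `Γ`, and it does so through characters of finite
order at any given point: for `γ ≠ 0` there is `ω` with `ω γ` a nontrivial root of unity of some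
order `n`, so averaging the action over `1, ω, …, ω^(n-1)` is a contraction fixing the fixed-point
algebra and killing the spectral subspace of degree `γ`. Composing such averages for the finitely
many nonzero degrees met by the support of some `f ∈ C_c(Σ;G)` sends `f` to its degree-zero part
`f|_𝒫` and a fixed element `a` to itself, hence `‖a - f|_𝒫‖ ≤ ‖a - f‖`. Density of `C_c(Σ;G)`
then puts every fixed element in the closure of `C_c(𝒫;R)`; the converse inclusion holds because
the fixed points form a closed set containing `C_c(𝒫;R)`.
-/

theorem exists_addChar_circle_apply_ne_one {Γ : Type*} [AddCommGroup Γ] {γ : Γ} (hγ : γ ≠ 0) :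
    ∃ ω : AddChar Γ Circle, ω γ ≠ 1 ∧ IsOfFinOrder (ω γ) := by
  obtain ⟨c, hc⟩ := CharacterModule.exists_character_apply_ne_zero_of_ne_zero hγ
  let ι : AddCircle (1 : ℚ) →+ AddCircle (1 : ℝ) :=
    QuotientAddGroup.map _ _ (Rat.castHom ℝ).toAddMonoidHom <| by
      rintro _ ⟨n, rfl⟩
      exact ⟨n, by simp⟩
  obtain ⟨q, hq⟩ := QuotientAddGroup.mk_surjective (c γ)
  have hω : (AddCircle.toCircle_addChar.compAddMonoidHom (ι.comp c)) γ =
      AddCircle.toCircle ((q : ℝ) : AddCircle (1 : ℝ)) := by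
    change AddCircle.toCircle (ι (c γ)) = _
    rw [← hq]
    rfl
  refine ⟨AddCircle.toCircle_addChar.compAddMonoidHom (ι.comp c), ?_, ?_⟩
  · rw [hω, ← AddCircle.toCircle_zero, (AddCircle.injective_toCircle one_ne_zero).ne_iff,
      Ne, AddCircle.coe_eq_zero_iff]
    rintro ⟨n, hn⟩
    have hnq : (n : ℚ) = q := by exact_mod_cast (by simpa using hn : (n : ℝ) = q)
    apply hc
    rw [← hq, AddCircle.coe_eq_zero_iff]
    exact ⟨n, by simpa using hnq⟩
  · obtain ⟨n, hn, hn0⟩ := isOfFinAddOrder_iff_nsmul_eq_zero.mp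
      (AddCircle.isOfFinAddOrder_iff_exists_rat_eq_div.mpr ⟨q, by simp⟩ :
        IsOfFinAddOrder ((q : ℝ) : AddCircle (1 : ℝ)))
    exact isOfFinOrder_iff_pow_eq_one.mpr
      ⟨n, hn, by rw [hω, ← AddCircle.toCircle_nsmul, hn0, AddCircle.toCircle_zero]⟩

theorem exists_addChar_geom_sum_eq_zero {Γ : Type*} [AddCommGroup Γ] {γ : Γ} (hγ : γ ≠ 0) :
    ∃ (ω : AddChar Γ Circle) (n : ℕ), 0 < n ∧ ∑ k ∈ Finset.range n, (ω γ : ℂ) ^ k = 0 := by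
  obtain ⟨ω, hne, hfin⟩ := exists_addChar_circle_apply_ne_one hγ
  refine ⟨ω, orderOf (ω γ), hfin.orderOf_pos, ?_⟩
  rw [geom_sum_eq (mt Circle.coe_eq_one.mp hne), ← Circle.coe_pow, pow_orderOf_eq_one,
    Circle.coe_one, sub_self, zero_div]

namespace AddChar

variable {Γ A : Type*} [AddCommGroup Γ] [NormedAddCommGroup A] [NormedSpace ℂ A]
  (β : AddChar Γ Circle → A →ₗᵢ[ℂ] A)

def IsHomogeneous (δ : Γ) (u : A) : Prop :=
  ∀ ω, β ω u = (ω δ : ℂ) • u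

theorem isHomogeneous_zero_iff {u : A} : IsHomogeneous β 0 u ↔ ∀ ω, β ω u = u := by
  simp [IsHomogeneous]

def average (ω : AddChar Γ Circle) (n : ℕ) : A →ₗ[ℂ] A :=
  (n : ℂ)⁻¹ • ∑ k ∈ Finset.range n, (β (ω ^ k)).toLinearMap

theorem norm_average_apply_le (ω : AddChar Γ Circle) {n : ℕ} (hn : 0 < n) (a : A) :
    ‖average β ω n a‖ ≤ ‖a‖ := by
  have hn' : (n : ℝ) ≠ 0 := by positivity
  calc ‖average β ω n a‖ = (n : ℝ)⁻¹ * ‖∑ k ∈ Finset.range n, β (ω ^ k) a‖ := by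
        simp [average, norm_smul]
    _ ≤ (n : ℝ)⁻¹ * ∑ k ∈ Finset.range n, ‖β (ω ^ k) a‖ := by
        gcongr
        exact norm_sum_le _ _
    _ = ‖a‖ := by simp [hn']

theorem average_apply_of_isHomogeneous (ω : AddChar Γ Circle) (n : ℕ) {δ : Γ} {u : A}
    (hu : IsHomogeneous β δ u) :
    average β ω n u = ((n : ℂ)⁻¹ * ∑ k ∈ Finset.range n, (ω δ : ℂ) ^ k) • u := by
  simp [average, hu _, AddChar.pow_apply, Finset.sum_smul, mul_smul, Finset.smul_sum]

/-- `E` is a composite of averages `average β ω n`, one for each `γ ∈ D`, with `ω γ` a nontrivial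
`n`-th root of unity. -/
theorem exists_contraction_killing_degrees (D : Finset Γ) (hD : (0 : Γ) ∉ D) :
    ∃ (E : A →ₗ[ℂ] A) (ε : Γ → ℂ), (∀ a, ‖E a‖ ≤ ‖a‖) ∧ ε 0 = 1 ∧ (∀ δ ∈ D, ε δ = 0) ∧
      ∀ δ u, IsHomogeneous β δ u → E u = ε δ • u := by
  classical
  induction D using Finset.induction_on with
  | empty => exact ⟨LinearMap.id, fun _ => 1, fun _ => le_rfl, rfl, by simp, by simp⟩
  | @insert γ D _ ih =>
    obtain ⟨E, ε, hE, hε0, hεD, hEu⟩ := ih (fun h => hD (Finset.mem_insert_of_mem h))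
    obtain ⟨ω, n, hn, hsum⟩ := exists_addChar_geom_sum_eq_zero
      (γ := γ) (by rintro rfl; exact hD (Finset.mem_insert_self 0 D))
    refine ⟨average β ω n ∘ₗ E,
      fun δ => ((n : ℂ)⁻¹ * ∑ k ∈ Finset.range n, (ω δ : ℂ) ^ k) * ε δ,
      fun a => (norm_average_apply_le β ω hn _).trans (hE a), ?_, ?_, ?_⟩
    · simp [hε0, hn.ne']
    · rintro δ hδ
      rcases Finset.mem_insert.mp hδ with rfl | hδ
      · simp [hsum]
      · simp [hεD δ hδ]
    · intro δ u hu
      rw [LinearMap.comp_apply, hEu δ u hu, map_smul,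
        average_apply_of_isHomogeneous β ω n hu, smul_smul, mul_comm (ε δ)]

theorem isClosed_setOf_forall_apply_eq_self : IsClosed {a : A | ∀ ω, β ω a = a} := by
  simp only [Set.ofPred_forall]
  exact isClosed_iInter fun ω => isClosed_eq (β ω).continuous continuous_id

theorem norm_sub_le_norm_sub_sum_of_isHomogeneous {a : A} (ha : ∀ ω, β ω a = a)
    (F : Finset Γ) (hF : 0 ∈ F) (u : Γ → A) (hu : ∀ γ ∈ F, IsHomogeneous β γ (u γ)) :
    ‖a - u 0‖ ≤ ‖a - ∑ γ ∈ F, u γ‖ := by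
  classical
  obtain ⟨E, ε, hE, hε0, hεF, hEu⟩ :=
    exists_contraction_killing_degrees β (F.erase 0) (Finset.notMem_erase 0 F)
  have hEa : E a = a := by
    rw [hEu 0 a ((isHomogeneous_zero_iff β).mpr ha), hε0, one_smul]
  have hEsum : E (∑ γ ∈ F, u γ) = u 0 := by
    rw [map_sum, Finset.sum_eq_single_of_mem 0 hF fun γ hγ hγ0 => by
      rw [hEu γ _ (hu γ hγ), hεF γ (Finset.mem_erase.mpr ⟨hγ0, hγ⟩), zero_smul],
      hEu 0 _ (hu 0 hF), hε0, one_smul]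
  simpa [hEa, hEsum] using hE (a - ∑ γ ∈ F, u γ)

end AddChar

theorem Finset.sum_indicator_preimage_singleton {X ι M : Type*} [AddCommMonoid M]
    (c : X → ι) (f : X → M) (F : Finset ι) (hF : ∀ x, f x ≠ 0 → c x ∈ F) :
    ∑ i ∈ F, (c ⁻¹' {i}).indicator f = f := by
  classical
  funext x
  rw [Finset.sum_apply]
  by_cases hx : f x = 0
  · simp [Set.indicator_apply, hx]
  · rw [Finset.sum_eq_single_of_mem (c x) (hF x hx) fun i _ hi => by
      simp [Ne.symm hi]]
    simp

namespace TwistData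

variable {G S : Type*} [TopologicalSpace G] [TopologicalSpace S] {T : TwistData G S}

theorem memCc_zero (T : TwistData G S) : T.MemCc 0 :=
  ⟨continuous_const, HasCompactSupport.zero, fun _ _ => by simp⟩

theorem MemCc.add {f g : S → ℂ} (hf : T.MemCc f) (hg : T.MemCc g) : T.MemCc (f + g) :=
  ⟨hf.1.add hg.1, hf.2.1.add hg.2.1, fun z σ => by simp [hf.2.2 z σ, hg.2.2 z σ, mul_add]⟩

theorem memCc_sum {ι : Type*} (s : Finset ι) {f : ι → S → ℂ} (hf : ∀ i ∈ s, T.MemCc (f i)) :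
    T.MemCc (∑ i ∈ s, f i) :=
  Finset.sum_induction f T.MemCc (fun _ _ => MemCc.add) T.memCc_zero hf

theorem MemCc.indicator {f : S → ℂ} (hf : T.MemCc f) {s : Set S} (hs : IsClopen s)
    (hs_act : ∀ z σ, T.act z σ ∈ s ↔ σ ∈ s) : T.MemCc (s.indicator f) := by
  classical
  refine ⟨hs.continuous_indicator hf.1,
    hf.2.1.mono (Set.support_indicator.trans_subset Set.inter_subset_right), ?_⟩
  intro z σ
  simp only [Set.indicator_apply, hs_act, hf.2.2 z σ]
  split_ifs <;> simp

theorem map_sum_of_memCc {A : Type*} [AddCommGroup A] {Φ : (S → ℂ) → A}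
    (hΦadd : ∀ f g, T.MemCc f → T.MemCc g → Φ (f + g) = Φ f + Φ g)
    {ι : Type*} (s : Finset ι) {f : ι → S → ℂ} (hf : ∀ i ∈ s, T.MemCc (f i)) :
    Φ (∑ i ∈ s, f i) = ∑ i ∈ s, Φ (f i) := by
  classical
  induction s using Finset.induction_on with
  | empty =>
    simpa using (hΦadd 0 0 T.memCc_zero T.memCc_zero).symm
  | @insert i s hi ih =>
    have hs : ∀ j ∈ s, T.MemCc (f j) := fun j hj => hf j (Finset.mem_insert_of_mem hj)
    rw [Finset.sum_insert hi, Finset.sum_insert hi,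
      hΦadd _ _ (hf i (Finset.mem_insert_self i s)) (memCc_sum s hs), ih hs]

theorem MemCc.indicator_preimage_singleton {Γ : Type*} [TopologicalSpace Γ] [DiscreteTopology Γ]
    {c : S → Γ} (hc : Continuous c) (hc_act : ∀ z σ, c (T.act z σ) = c σ) {f : S → ℂ}
    (hf : T.MemCc f) (γ : Γ) : T.MemCc ((c ⁻¹' {γ}).indicator f) :=
  hf.indicator ((isClopen_discrete {γ}).preimage hc) (by simp [hc_act])

section Graded

variable {Γ A : Type*} [AddCommGroup Γ] [NormedAddCommGroup A] [NormedSpace ℂ A]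
  {c : S → Γ} {Φ : (S → ℂ) → A} {β : AddChar Γ Circle → A →ₗᵢ[ℂ] A}

theorem isHomogeneous_of_forall_ne_zero (hΦsmul : ∀ (z : ℂ) f, T.MemCc f → Φ (z • f) = z • Φ f)
    (hβΦ : ∀ ω f, T.MemCc f → β ω (Φ f) = Φ (fun σ => (ω (c σ) : ℂ) * f σ))
    {f : S → ℂ} (hf : T.MemCc f) {γ : Γ} (hfγ : ∀ σ, f σ ≠ 0 → c σ = γ) :
    AddChar.IsHomogeneous β γ (Φ f) := by
  intro ω
  rw [hβΦ ω f hf, ← hΦsmul _ f hf]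
  congr 1
  funext σ
  by_cases hσ : f σ = 0
  · simp [hσ]
  · simp [hfγ σ hσ]

theorem dist_indicator_preimage_zero_le [TopologicalSpace Γ] [DiscreteTopology Γ]
    (hc : Continuous c) (hc_act : ∀ z σ, c (T.act z σ) = c σ)
    (hΦadd : ∀ f g, T.MemCc f → T.MemCc g → Φ (f + g) = Φ f + Φ g)
    (hΦsmul : ∀ (z : ℂ) f, T.MemCc f → Φ (z • f) = z • Φ f)
    (hβΦ : ∀ ω f, T.MemCc f → β ω (Φ f) = Φ (fun σ => (ω (c σ) : ℂ) * f σ))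
    {a : A} (ha : ∀ ω, β ω a = a) {f : S → ℂ} (hf : T.MemCc f) :
    dist a (Φ ((c ⁻¹' {0}).indicator f)) ≤ dist a (Φ f) := by
  classical
  obtain ⟨F, hF⟩ := ((hf.2.1.image hc).finite_of_discrete).exists_finset_coe
  have hmemF : ∀ σ, f σ ≠ 0 → c σ ∈ insert 0 F := fun σ hσ =>
    Finset.mem_insert_of_mem <| by
      rw [← Finset.mem_coe, hF]
      exact ⟨σ, subset_tsupport f hσ, rfl⟩
  have hpart := hf.indicator_preimage_singleton hc hc_act
  calc dist a (Φ ((c ⁻¹' {0}).indicator f))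
      ≤ ‖a - ∑ γ ∈ insert 0 F, Φ ((c ⁻¹' {γ}).indicator f)‖ :=
        (dist_eq_norm _ _).trans_le <| AddChar.norm_sub_le_norm_sub_sum_of_isHomogeneous β ha _
          (Finset.mem_insert_self 0 F) _ fun γ _ =>
            isHomogeneous_of_forall_ne_zero hΦsmul hβΦ (hpart γ) fun _ =>
              Set.mem_of_indicator_ne_zero
    _ = dist a (Φ f) := by
        rw [← map_sum_of_memCc hΦadd _ fun γ _ => hpart γ,
          Finset.sum_indicator_preimage_singleton c f _ hmemF, dist_eq_norm]

end Graded

end TwistData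

theorem twist_stmt18_general
    {G S : Type*} [TopologicalSpace G] [TopologicalSpace S]
    (T : TwistData G S)
    -- `Γ`-grading cocycles `c_Σ` and `c_G` with `c_Σ = c_G ∘ q`:
    {Γ : Type*} [AddCommGroup Γ] [TopologicalSpace Γ] [DiscreteTopology Γ]
    (cG : G → Γ) (cS : S → Γ)
    (hcS_cont : Continuous cS)
    (hcS_q : ∀ σ, cS σ = cG (T.q σ))
    {A : Type*} [NormedRing A] [NormedAlgebra ℂ A]
    -- `A` is (a copy of) the reduced C*-algebra `C*_r(Σ;G)`: a C*-algebra containing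
    -- `C_c(Σ;G)` isometrically (for the reduced norm) as a dense *-subalgebra:
    (Φ : (S → ℂ) → A)
    (hΦadd : ∀ f g, T.MemCc f → T.MemCc g → Φ (f + g) = Φ f + Φ g)
    (hΦsmul : ∀ (c : ℂ) f, T.MemCc f → Φ (c • f) = c • Φ f)
    (hΦdense : Dense {a : A | ∃ f, T.MemCc f ∧ Φ f = a})
    -- the induced action of `Γ̂` on `C*_r(Σ;G)`:
    (β : AddChar Γ Circle → A → A)
    (hβadd : ∀ ω a b, β ω (a + b) = β ω a + β ω b)
    (hβsmul : ∀ ω (c : ℂ) a, β ω (c • a) = c • β ω a)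
    (hβiso : ∀ ω a, ‖β ω a‖ = ‖a‖)
    (hβΦ : ∀ ω f, T.MemCc f → β ω (Φ f) = Φ (fun σ => ((ω (cS σ) : ℂ)) * f σ))
 :
    {a : A | ∀ ω : AddChar Γ Circle, β ω a = a} =
      closure {a : A | ∃ f, T.MemCc f ∧ (∀ σ : S, cG (T.q σ) ≠ 0 → f σ = 0) ∧ Φ f = a} := by
  let βL : AddChar Γ Circle → A →ₗᵢ[ℂ] A := fun ω =>
    { toFun := β ω, map_add' := hβadd ω, map_smul' := hβsmul ω, norm_map' := hβiso ω }
  have hβLΦ : ∀ ω f, T.MemCc f → βL ω (Φ f) = Φ (fun σ => (ω (cS σ) : ℂ) * f σ) := hβΦ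
  have hcS_act : ∀ z σ, cS (T.act z σ) = cS σ := by simp [hcS_q, T.q_act]
  have vanishing_iff : ∀ f : S → ℂ,
      (∀ σ, cG (T.q σ) ≠ 0 → f σ = 0) ↔ ∀ σ, f σ ≠ 0 → cS σ = 0 := fun f =>
    forall_congr' fun σ => by rw [hcS_q, not_imp_comm]
  apply Set.Subset.antisymm
  · intro a ha
    refine Metric.mem_closure_iff.mpr fun ε hε => ?_
    obtain ⟨_, hball, f, hf, rfl⟩ := Metric.dense_iff.mp hΦdense a ε hε
    refine ⟨_, ⟨_, hf.indicator_preimage_singleton hcS_cont hcS_act 0,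
      (vanishing_iff _).mpr fun _ => Set.mem_of_indicator_ne_zero, rfl⟩, ?_⟩
    exact (T.dist_indicator_preimage_zero_le hcS_cont hcS_act hΦadd hΦsmul hβLΦ ha hf).trans_lt
      (Metric.mem_ball'.mp hball)
  · refine (AddChar.isClosed_setOf_forall_apply_eq_self βL).closure_subset_iff.mpr ?_
    rintro _ ⟨f, hf, hf0, rfl⟩ ω
    exact (T.isHomogeneous_of_forall_ne_zero hΦsmul hβLΦ hf ((vanishing_iff f).mp hf0) ω).trans
      (by simp)

/-- Let `Σ → G` be a `Γ`-graded twist over an étale groupoid (`Γ` discrete abelian), and let `R = c_G⁻¹(0)`, `𝒫 = c_Σ⁻¹(0)`.  Then the image of `C*_r(𝒫;R)` under the extension-by-zero embedding into `C*_r(Σ;G)` equals the fixed-point algebra `C*_r(Σ;G)^Γ̂` of the induced `Γ̂`-action. -/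
theorem twist_stmt18
    {G S : Type*} [TopologicalSpace G] [TopologicalSpace S]
    [T2Space G] [T2Space S] [LocallyCompactSpace G] [LocallyCompactSpace S]
    (T : TwistData G S) (hetale : T.Gd.IsEtale)
    -- `Γ`-grading cocycles `c_Σ` and `c_G` with `c_Σ = c_G ∘ q`:
    {Γ : Type*} [AddCommGroup Γ] [TopologicalSpace Γ] [DiscreteTopology Γ]
    (cG : G → Γ) (cS : S → Γ)
    (hcG_cont : Continuous cG) (hcS_cont : Continuous cS)
    (hcG_comp : ∀ g h, T.Gd.src g = T.Gd.rng h → cG (T.Gd.comp g h) = cG g + cG h)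
    (hcG_inv : ∀ g, cG (T.Gd.inv g) = - cG g)
    (hcS_q : ∀ σ, cS σ = cG (T.q σ))
    {A : Type*} [NormedRing A] [StarRing A] [CStarRing A] [NormedAlgebra ℂ A]
    [CompleteSpace A] [StarModule ℂ A]
    -- `A` is (a copy of) the reduced C*-algebra `C*_r(Σ;G)`: a C*-algebra containing
    -- `C_c(Σ;G)` isometrically (for the reduced norm) as a dense *-subalgebra:
    (Φ : (S → ℂ) → A)
    (hΦnorm : ∀ f, T.MemCc f → ‖Φ f‖ = T.rnorm f)
    (hΦadd : ∀ f g, T.MemCc f → T.MemCc g → Φ (f + g) = Φ f + Φ g)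
    (hΦsmul : ∀ (c : ℂ) f, T.MemCc f → Φ (c • f) = c • Φ f)
    (hΦmul : ∀ f g, T.MemCc f → T.MemCc g → Φ (T.conv f g) = Φ f * Φ g)
    (hΦstar : ∀ f, T.MemCc f → Φ (T.starF f) = star (Φ f))
    (hΦdense : Dense {a : A | ∃ f, T.MemCc f ∧ Φ f = a})
    -- the induced action of `Γ̂` on `C*_r(Σ;G)`:
    (β : AddChar Γ Circle → A → A)
    (hβadd : ∀ ω a b, β ω (a + b) = β ω a + β ω b)
    (hβsmul : ∀ ω (c : ℂ) a, β ω (c • a) = c • β ω a)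
    (hβmul : ∀ ω a b, β ω (a * b) = β ω a * β ω b)
    (hβstar : ∀ ω a, β ω (star a) = star (β ω a))
    (hβiso : ∀ ω a, ‖β ω a‖ = ‖a‖)
    (hβone : ∀ a, β 1 a = a)
    (hβcomp : ∀ ω₁ ω₂ a, β (ω₁ * ω₂) a = β ω₁ (β ω₂ a))
    (hβΦ : ∀ ω f, T.MemCc f → β ω (Φ f) = Φ (fun σ => ((ω (cS σ) : ℂ)) * f σ))
 :
    {a : A | ∀ ω : AddChar Γ Circle, β ω a = a} =
      closure {a : A | ∃ f, T.MemCc f ∧ (∀ σ : S, cG (T.q σ) ≠ 0 → f σ = 0) ∧ Φ f = a} :=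
  twist_stmt18_general T cG cS hcS_cont hcS_q Φ hΦadd hΦsmul hΦdense β hβadd hβsmul hβiso hβΦ
end
end
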